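/- arXiv:2206.10017 — 4 statements merged into one kernel-verified Lean document; each statement's English description precedes it below -/
import Mathlib

section
/- Let w ∈ S_n, let v ⊆ w be a subword of size m, and set u := perm(v) ∈ S_m. Then |bpd(w;v)| ≤ |mbpd(u)|. -/
/-!
Formalization of bumpless pipe dreams (BPDs).

A bumpless pipe dream of size `n` assigns one of six tiles (blank, horizontal,
vertical, crossing, r-elbow, j-elbow) to each cell of the `n × n` grid, subject
to matching and boundary conditions.  We additionally include a `bump` tile
(an r-elbow together with a j-elbow in one cell), which is used only in
K-theoretic resolutions of BPDs.
-/

/-- The tile types: the six BPD tiles together with the bump tile used in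
K-theoretic resolutions. -/
inductive Tile : Type
  | blank | horiz | vert | cross | bump | relbow | jelbow
  deriving DecidableEq

namespace Tile

/-- Does a pipe segment meet the south edge of the tile? -/
def south : Tile → Bool
  | vert => true | cross => true | bump => true | relbow => true
  | _ => false

/-- Does a pipe segment meet the north edge of the tile? -/
def north : Tile → Bool
  | vert => true | cross => true | bump => true | jelbow => true
  | _ => false

/-- Does a pipe segment meet the west edge of the tile? -/
def west : Tile → Bool
  | horiz => true | cross => true | bump => true | jelbow => true
  | _ => false

/-- Does a pipe segment meet the east edge of the tile? -/
def east : Tile → Bool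
  | horiz => true | cross => true | bump => true | relbow => true
  | _ => false

/-- A pipe entering the tile `t` (from the south if `d = true`, from the west if
`d = false`) exits through the east edge; otherwise it exits through the north
edge. -/
def exitEast (t : Tile) (d : Bool) : Bool :=
  if d then (t == relbow || t == bump) else !(t == jelbow || t == bump)

end Tile

/-- A tile diagram of size `n`: an assignment of a tile to each cell `(i, j)`
(row `i` from the top, column `j` from the left, `0`-indexed) of the `n × n`
grid, such that adjacent tiles match along shared edges, a segment meets the
south boundary edge of every column and the east boundary edge of every row,
and no segment meets the north or west boundary of the grid.  (Cells outside
the grid are blank, as a normalization.)  A diagram may use the `bump` tile;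
honest bumpless pipe dreams (`BPD`) do not. -/
structure Diagram (n : ℕ) : Type where
  tile : ℕ → ℕ → Tile
  vmatch : ∀ i j, i + 1 < n → j < n → (tile i j).south = (tile (i + 1) j).north
  hmatch : ∀ i j, i < n → j + 1 < n → (tile i j).east = (tile i (j + 1)).west
  bottom : ∀ j, j < n → (tile (n - 1) j).south = true
  right : ∀ i, i < n → (tile i (n - 1)).east = true
  top : ∀ j, j < n → (tile 0 j).north = false
  left : ∀ i, i < n → (tile i 0).west = false
  outside : ∀ i j, ¬(i < n ∧ j < n) → tile i j = Tile.blank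

/-- A bumpless pipe dream of size `n`: a diagram using only the six BPD tiles
(no bump tiles). -/
structure BPD (n : ℕ) extends Diagram n where
  nobump : ∀ i j, tile i j ≠ Tile.bump

namespace Diagram

variable {n : ℕ}

/-- One step of a pipe: a pipe currently in cell `(σ.1, σ.2.1)`, having entered
from the south if `σ.2.2 = true` (from the west otherwise), moves to the next
cell (east, entering from the west; or north, entering from the south). -/
def Step (D : Diagram n) (σ σ' : ℕ × ℕ × Bool) : Prop :=
  σ.1 < n ∧ σ.2.1 < n ∧
    (if (D.tile σ.1 σ.2.1).exitEast σ.2.2 then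
        σ.2.1 + 1 < n ∧ σ' = (σ.1, σ.2.1 + 1, false)
      else
        0 < σ.1 ∧ σ' = (σ.1 - 1, σ.2.1, true))

/-- The pipe entering at the bottom of column `y` passes through the cell `c`. -/
def Passes (D : Diagram n) (y : ℕ) (c : ℕ × ℕ) : Prop :=
  ∃ d : Bool, Relation.ReflTransGen D.Step (n - 1, y, true) (c.1, c.2, d)

/-- The pipe entering at the bottom of column `y` exits at the right of row `x`;
that is, `y → x` is a pipe of the diagram. -/
def ExitsAt (D : Diagram n) (y x : ℕ) : Prop :=
  ∃ d : Bool, Relation.ReflTransGen D.Step (n - 1, y, true) (x, n - 1, d) ∧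
    (D.tile x (n - 1)).exitEast d = true

/-- The permutation of the diagram is `w`: for every row `x`, `w x → x` is a
pipe of the diagram. -/
def HasPerm (D : Diagram n) (w : Equiv.Perm (Fin n)) : Prop :=
  ∀ x : Fin n, D.ExitsAt (w x) x

/-- The set of crossing tiles shared by the pipes entering at the bottoms of
columns `y₁` and `y₂`. -/
def SharedCrossings (D : Diagram n) (y₁ y₂ : ℕ) : Set (ℕ × ℕ) :=
  {c | D.tile c.1 c.2 = Tile.cross ∧ D.Passes y₁ c ∧ D.Passes y₂ c}

/-- The diagram is reduced: any two distinct pipes pass through at most one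
common crossing tile. -/
def Reduced (D : Diagram n) : Prop :=
  ∀ y₁ y₂, y₁ < n → y₂ < n → y₁ ≠ y₂ → (D.SharedCrossings y₁ y₂).Subsingleton

/-- `y → x` is a removable pipe of the diagram: it is a pipe, the tile at
`(x, y)` is an r-elbow, and it is the only r-elbow tile in row `x` and also the
only r-elbow tile in column `y`. -/
def RemovablePipe (D : Diagram n) (y x : ℕ) : Prop :=
  D.ExitsAt y x ∧ D.tile x y = Tile.relbow ∧
    (∀ j, j ≠ y → D.tile x j ≠ Tile.relbow) ∧
    (∀ i, i ≠ x → D.tile i y ≠ Tile.relbow)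

/-- The diagram is minimal: it has no removable pipe. -/
def Minimal (D : Diagram n) : Prop := ∀ y x, ¬ D.RemovablePipe y x

/-- The number of j-elbow tiles of the diagram. -/
def jcount (D : Diagram n) : ℕ :=
  ((Finset.range n ×ˢ Finset.range n).filter
    (fun c => D.tile c.1 c.2 = Tile.jelbow)).card

end Diagram

namespace BPD

variable {n m : ℕ}

/-- `B ∈ BPD(w; v)` for the subword `v` of `w` with (strictly increasing) index
sequence `s : Fin m ↪o Fin n`: the permutation of `B` is `w` and the removable
pipes of `B` are precisely the pipes `w k → k` for the indices `k` of `w` not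
used by the subword. -/
def InBPDv (B : BPD n) (w : Equiv.Perm (Fin n)) (s : Fin m ↪o Fin n) : Prop :=
  B.toDiagram.HasPerm w ∧
    ∀ y x : ℕ, B.toDiagram.RemovablePipe y x ↔
      ∃ k : Fin n, k ∉ Set.range s ∧ x = (k : ℕ) ∧ y = (w k : ℕ)

end BPD

/-- `c` comes strictly before `c'` in the (weakly north-east) traversal order of
a pipe: `c` is weakly south-west of `c'` and is a different cell. -/
def Before (c c' : ℕ × ℕ) : Prop := c'.1 ≤ c.1 ∧ c.2 ≤ c'.2 ∧ c ≠ c'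

namespace Diagram

/-- The pipes entering in columns `y₁` and `y₂` pass through a common crossing
tile strictly before the cell `c`. -/
def CrossedBefore {n : ℕ} (D : Diagram n) (y₁ y₂ : ℕ) (c : ℕ × ℕ) : Prop :=
  ∃ c' ∈ D.SharedCrossings y₁ y₂, Before c' c

end Diagram

/-- `D` is the K-theoretic resolution `B_K` of the bumpless pipe dream `B`:
each crossing tile of `B` either remains a crossing or becomes a bump in `D`
(all other tiles are unchanged), any two pipes of `D` cross at most once, and at
a former crossing tile the two pipes of `D` passing through it bounce (bump)
there exactly when they have already crossed before reaching it. -/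
structure IsKRes {n : ℕ} (B : BPD n) (D : Diagram n) : Prop where
  agree : ∀ i j, B.tile i j ≠ Tile.cross → D.tile i j = B.tile i j
  res : ∀ i j, B.tile i j = Tile.cross →
    D.tile i j = Tile.cross ∨ D.tile i j = Tile.bump
  once : D.Reduced
  bump_iff : ∀ i j y₁ y₂, y₁ < n → y₂ < n → y₁ ≠ y₂ →
    D.Passes y₁ (i, j) → D.Passes y₂ (i, j) → B.tile i j = Tile.cross →
    (D.tile i j = Tile.bump ↔ D.CrossedBefore y₁ y₂ (i, j))

/-- The permutation `w` contains the pattern `p`. -/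
def PermContains {n k : ℕ} (w : Equiv.Perm (Fin n)) (p : Equiv.Perm (Fin k)) : Prop :=
  ∃ f : Fin k ↪o Fin n, ∀ a b : Fin k, p a < p b ↔ w (f a) < w (f b)

/-- The pattern `1243` (as a permutation of `Fin 4`, `0`-indexed). -/
def p1243 : Equiv.Perm (Fin 4) := Equiv.swap 2 3

/-- The pattern `2143` (as a permutation of `Fin 4`, `0`-indexed). -/
def p2143 : Equiv.Perm (Fin 4) := Equiv.swap 0 1 * Equiv.swap 2 3
/-! ### Auxiliary lemmas -/

namespace Tile

lemma eq_relbow_of_we {t : Tile} (hb : t ≠ Tile.bump) (he : t.east = true)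
    (hw : t.west = false) : t = Tile.relbow := by
  cases t <;> simp_all [east, west]

lemma eq_jelbow_of_we {t : Tile} (hb : t ≠ Tile.bump) (hw : t.west = true)
    (he : t.east = false) : t = Tile.jelbow := by
  cases t <;> simp_all [east, west]

lemma eq_relbow_of_ns {t : Tile} (hb : t ≠ Tile.bump) (hs : t.south = true)
    (hn : t.north = false) : t = Tile.relbow := by
  cases t <;> simp_all [north, south]

lemma eq_jelbow_of_ns {t : Tile} (hb : t ≠ Tile.bump) (hn : t.north = true)
    (hs : t.south = false) : t = Tile.jelbow := by
  cases t <;> simp_all [north, south]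

lemma ns_eq_of_we {t : Tile} (hb : t ≠ Tile.bump) (h : t.west = t.east) :
    t.north = t.south := by
  cases t <;> simp_all [north, south, east, west]

lemma we_eq_of_ns {t : Tile} (hb : t ≠ Tile.bump) (h : t.north = t.south) :
    t.west = t.east := by
  cases t <;> simp_all [north, south, east, west]

lemma east_of_exit {t : Tile} (hb : t ≠ Tile.bump) {d : Bool}
    (hI : (if d then t.south else t.west) = true) (h : t.exitEast d = true) :
    t.east = true := by
  cases d <;> cases t <;> simp_all [exitEast, east, west, south]

lemma north_of_noexit {t : Tile} (hb : t ≠ Tile.bump) {d : Bool}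
    (hI : (if d then t.south else t.west) = true) (h : t.exitEast d = false) :
    t.north = true := by
  cases d <;> cases t <;> simp_all [exitEast, north, west, south]

lemma eq_of_edges {t t' : Tile} (hb : t ≠ Tile.bump) (hb' : t' ≠ Tile.bump)
    (hn : t.north = t'.north) (hs : t.south = t'.south)
    (hw : t.west = t'.west) (he : t.east = t'.east) : t = t' := by
  cases t <;> cases t' <;> simp_all [north, south, east, west]

def code : Tile → Fin 7
  | blank => 0 | horiz => 1 | vert => 2 | cross => 3 | bump => 4
  | relbow => 5 | jelbow => 6

instance : Finite Tile := by
  apply Finite.of_injective code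
  intro a b h
  cases a <;> cases b <;> first | rfl | (exact absurd h (by decide))

end Tile

namespace Diagram

variable {n : ℕ}

lemma ext' {D₁ D₂ : Diagram n} (h : ∀ i j, D₁.tile i j = D₂.tile i j) :
    D₁ = D₂ := by
  obtain ⟨t₁, _, _, _, _, _, _, _⟩ := D₁
  obtain ⟨t₂, _, _, _, _, _, _, _⟩ := D₂
  have : t₁ = t₂ := funext fun i => funext fun j => h i j
  subst this; rfl

lemma step_det (D : Diagram n) {a b c : ℕ × ℕ × Bool}
    (h1 : D.Step a b) (h2 : D.Step a c) : b = c := by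
  obtain ⟨_, _, h1⟩ := h1
  obtain ⟨_, _, h2⟩ := h2
  split_ifs at h1 h2
  · exact h1.2.trans h2.2.symm
  · exact h1.2.trans h2.2.symm

lemma exit_terminal (D : Diagram n) {x : ℕ} {d : Bool}
    (h : (D.tile x (n - 1)).exitEast d = true) :
    ∀ σ, ¬ D.Step (x, n - 1, d) σ := by
  rintro σ ⟨hx, hj, hs⟩
  rw [if_pos h] at hs
  have h1 : n - 1 + 1 < n := hs.1
  omega

lemma rtg_det {α : Type*} {r : α → α → Prop}
    (hdet : ∀ a b c, r a b → r a c → b = c) {a b c : α}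
    (hab : Relation.ReflTransGen r a b) (hac : Relation.ReflTransGen r a c)
    (hb : ∀ x, ¬ r b x) (hc : ∀ x, ¬ r c x) : b = c := by
  revert hac
  induction hab using Relation.ReflTransGen.head_induction_on with
  | refl =>
    intro hac
    rcases hac.cases_head with rfl | ⟨x, hx, _⟩
    · rfl
    · exact absurd hx (hb _)
  | head h' _ ih =>
    intro hac
    rcases hac.cases_head with rfl | ⟨x, hax, hxc⟩
    · exact absurd h' (hc _)
    · exact ih (hdet _ _ _ h' hax ▸ hxc)

lemma exitsAt_unique (D : Diagram n) {y x₁ x₂ : ℕ}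
    (h1 : D.ExitsAt y x₁) (h2 : D.ExitsAt y x₂) : x₁ = x₂ := by
  obtain ⟨d₁, p₁, e₁⟩ := h1
  obtain ⟨d₂, p₂, e₂⟩ := h2
  have := rtg_det (r := D.Step) (fun a b c => D.step_det) p₁ p₂
    (D.exit_terminal e₁) (D.exit_terminal e₂)
  exact congrArg Prod.fst this

end Diagram

namespace BPD

lemma tile_ext {n : ℕ} {B₁ B₂ : BPD n} (h : ∀ i j, B₁.tile i j = B₂.tile i j) :
    B₁ = B₂ := by
  obtain ⟨D₁, h₁⟩ := B₁
  obtain ⟨D₂, h₂⟩ := B₂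
  have : D₁ = D₂ := Diagram.ext' h
  subst this; rfl

instance finite (n : ℕ) : Finite (BPD n) := by
  apply Finite.of_injective (fun (B : BPD n) => fun (i j : Fin n) => B.tile i j)
  intro B₁ B₂ h
  apply tile_ext
  intro i j
  by_cases hij : i < n ∧ j < n
  · exact congrFun (congrFun h ⟨i, hij.1⟩) ⟨j, hij.2⟩
  · rw [B₁.outside i j hij, B₂.outside i j hij]

end BPD

namespace BPD

variable {n : ℕ} (B : BPD n)

lemma lt_of_relbow {x y : ℕ} (h : B.tile x y = Tile.relbow) : x < n ∧ y < n := by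
  by_contra hc
  rw [B.outside x y hc] at h
  exact absurd h (by decide)

/-- In the row of a removable pipe, every tile other than the pivot has
`west = east`. -/
lemma rp_row {x y : ℕ} (hxy : B.tile x y = Tile.relbow)
    (hrow : ∀ j, j ≠ y → B.tile x j ≠ Tile.relbow) :
    ∀ j, j < n → j ≠ y → (B.tile x j).west = (B.tile x j).east := by
  obtain ⟨hx, hy⟩ := B.lt_of_relbow hxy
  have R1 : ∀ j, j ≤ y → (B.tile x j).west = false := by
    intro j
    induction j with
    | zero => intro _; exact B.left x hx
    | succ j ih =>
      intro hj
      have hw := ih (by omega)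
      have he : (B.tile x j).east = false := by
        by_contra h'
        exact hrow j (by omega) (Tile.eq_relbow_of_we (B.nobump x j)
          (Bool.not_eq_false _ ▸ h') hw)
      rw [← B.hmatch x j hx (by omega), he]
  have R2 : ∀ j, y ≤ j → j < n → (B.tile x j).east = true := by
    intro j hyj
    induction j, hyj using Nat.le_induction with
    | base => intro _; rw [hxy]; rfl
    | succ j hyj ih =>
      intro hj1
      have hje : (B.tile x j).east = true := ih (by omega)
      have hw : (B.tile x (j + 1)).west = true := by
        rw [← B.hmatch x j hx hj1]; exact hje
      by_contra h'
      have hjel : B.tile x (j + 1) = Tile.jelbow :=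
        Tile.eq_jelbow_of_we (B.nobump x (j + 1)) hw (Bool.not_eq_true _ ▸ h')
      have J : ∀ q, j + 1 ≤ q → q < n → (B.tile x q).east = false := by
        intro q hq
        induction q, hq using Nat.le_induction with
        | base => intro _; rw [hjel]; rfl
        | succ q hq ih2 =>
          intro hq1
          have hw2 : (B.tile x (q + 1)).west = false := by
            rw [← B.hmatch x q hx hq1]; exact ih2 (by omega)
          by_contra h''
          exact hrow (q + 1) (by omega) (Tile.eq_relbow_of_we (B.nobump x (q + 1))
            (Bool.not_eq_false _ ▸ h'') hw2)
      have := J (n - 1) (by omega) (by omega)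
      rw [B.right x hx] at this
      exact absurd this (by decide)
  intro j hj hne
  rcases hne.lt_or_gt with hlt | hgt
  · have hw := R1 j (by omega)
    have he : (B.tile x j).east = false := by
      by_contra h'
      exact hrow j (by omega) (Tile.eq_relbow_of_we (B.nobump x j)
        (Bool.not_eq_false _ ▸ h') hw)
    rw [hw, he]
  · have he := R2 j (by omega) hj
    have hw : (B.tile x j).west = true := by
      have hj1 : j - 1 + 1 = j := by omega
      have h2 := B.hmatch x (j - 1) hx (by omega)
      rw [hj1] at h2
      rw [← h2]
      exact R2 (j - 1) (by omega) (by omega)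
    rw [hw, he]

/-- In the column of a removable pipe, every tile other than the pivot has
`north = south`. -/
lemma rp_col {x y : ℕ} (hxy : B.tile x y = Tile.relbow)
    (hcol : ∀ i, i ≠ x → B.tile i y ≠ Tile.relbow) :
    ∀ i, i < n → i ≠ x → (B.tile i y).north = (B.tile i y).south := by
  obtain ⟨hx, hy⟩ := B.lt_of_relbow hxy
  have C1 : ∀ i, i ≤ x → (B.tile i y).north = false := by
    intro i
    induction i with
    | zero => intro _; exact B.top y hy
    | succ i ih =>
      intro hi
      have hn := ih (by omega)
      have hs : (B.tile i y).south = false := by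
        by_contra h'
        exact hcol i (by omega) (Tile.eq_relbow_of_ns (B.nobump i y)
          (Bool.not_eq_false _ ▸ h') hn)
      rw [← B.vmatch i y (by omega) hy, hs]
  have C2 : ∀ i, x ≤ i → i < n → (B.tile i y).south = true := by
    intro i hxi
    induction i, hxi using Nat.le_induction with
    | base => intro _; rw [hxy]; rfl
    | succ i hxi ih =>
      intro hi1
      have his : (B.tile i y).south = true := ih (by omega)
      have hn : (B.tile (i + 1) y).north = true := by
        rw [← B.vmatch i y hi1 hy]; exact his
      by_contra h'
      have hjel : B.tile (i + 1) y = Tile.jelbow :=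
        Tile.eq_jelbow_of_ns (B.nobump (i + 1) y) hn (Bool.not_eq_true _ ▸ h')
      have J : ∀ q, i + 1 ≤ q → q < n → (B.tile q y).south = false := by
        intro q hq
        induction q, hq using Nat.le_induction with
        | base => intro _; rw [hjel]; rfl
        | succ q hq ih2 =>
          intro hq1
          have hn2 : (B.tile (q + 1) y).north = false := by
            rw [← B.vmatch q y hq1 hy]; exact ih2 (by omega)
          by_contra h''
          exact hcol (q + 1) (by omega) (Tile.eq_relbow_of_ns (B.nobump (q + 1) y)
            (Bool.not_eq_false _ ▸ h'') hn2)
      have := J (n - 1) (by omega) (by omega)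
      rw [B.bottom y hy] at this
      exact absurd this (by decide)
  intro i hi hne
  rcases hne.lt_or_gt with hlt | hgt
  · have hn := C1 i (by omega)
    have hs : (B.tile i y).south = false := by
      by_contra h'
      exact hcol i (by omega) (Tile.eq_relbow_of_ns (B.nobump i y)
        (Bool.not_eq_false _ ▸ h') hn)
    rw [hn, hs]
  · have hs := C2 i (by omega) hi
    have hn : (B.tile i y).north = true := by
      have hi1 : i - 1 + 1 = i := by omega
      have h2 := B.vmatch (i - 1) y (by omega) hy
      rw [hi1] at h2
      rw [← h2]
      exact C2 (i - 1) (by omega) (by omega)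
    rw [hn, hs]

end BPD

section Restrict

variable {n m : ℕ} {w : Equiv.Perm (Fin n)} {s t : Fin m ↪o Fin n}
  {u : Equiv.Perm (Fin m)} {B : BPD n}

lemma emb_lt_iff {μ ν : ℕ} (e : Fin μ ↪o Fin ν) {a b : Fin μ} :
    (e a : ℕ) < (e b : ℕ) ↔ (a : ℕ) < (b : ℕ) := e.lt_iff_lt

lemma not_range_of {r : ℕ} (hr : r < n) (hdel : ∀ a : Fin m, (s a : ℕ) ≠ r) :
    (⟨r, hr⟩ : Fin n) ∉ Set.range s := by
  rintro ⟨a, ha⟩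
  exact hdel a (by rw [ha])

lemma tcol_ne (hst : ∀ i : Fin m, w (s i) = t (u i)) {b : Fin m} {k : Fin n}
    (hk : k ∉ Set.range s) : (t b : ℕ) ≠ (w k : ℕ) := by
  intro h
  have h1 : t b = w k := Fin.val_injective h
  have h3 : w (s (u.symm b)) = w k := by
    rw [hst (u.symm b), Equiv.apply_symm_apply, h1]
  exact hk ⟨u.symm b, w.injective h3⟩

lemma delCol_spec (hst : ∀ i : Fin m, w (s i) = t (u i)) {c : ℕ} (hc : c < n)
    (hdel : ∀ b : Fin m, (t b : ℕ) ≠ c) :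
    ∃ k : Fin n, k ∉ Set.range s ∧ (w k : ℕ) = c := by
  refine ⟨w.symm ⟨c, hc⟩, ?_, by simp⟩
  rintro ⟨a, ha⟩
  apply hdel (u a)
  have : w (s a) = ⟨c, hc⟩ := by rw [ha, Equiv.apply_symm_apply]
  rw [← hst a, this]

lemma deleted_rp (hB : B.InBPDv w s) {k : Fin n} (hk : k ∉ Set.range s) :
    B.toDiagram.RemovablePipe (w k) k := (hB.2 _ _).mpr ⟨k, hk, rfl, rfl⟩

lemma row_we' (hB : B.InBPDv w s) {k : Fin n} (hk : k ∉ Set.range s) {j : ℕ}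
    (hj : j < n) (hne : j ≠ (w k : ℕ)) :
    (B.tile k j).west = (B.tile k j).east := by
  obtain ⟨hex, hrel, hrow, hcol⟩ := deleted_rp hB hk
  exact B.rp_row hrel hrow j hj hne

lemma row_ns' (hB : B.InBPDv w s) {k : Fin n} (hk : k ∉ Set.range s) {j : ℕ}
    (hj : j < n) (hne : j ≠ (w k : ℕ)) :
    (B.tile k j).north = (B.tile k j).south :=
  Tile.ns_eq_of_we (B.nobump _ _) (row_we' hB hk hj hne)

lemma col_ns' (hB : B.InBPDv w s) {k : Fin n} (hk : k ∉ Set.range s) {i : ℕ}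
    (hi : i < n) (hne : i ≠ (k : ℕ)) :
    (B.tile i (w k)).north = (B.tile i (w k)).south := by
  obtain ⟨hex, hrel, hrow, hcol⟩ := deleted_rp hB hk
  exact B.rp_col hrel hcol i hi hne

lemma col_we' (hB : B.InBPDv w s) {k : Fin n} (hk : k ∉ Set.range s) {i : ℕ}
    (hi : i < n) (hne : i ≠ (k : ℕ)) :
    (B.tile i (w k)).west = (B.tile i (w k)).east :=
  Tile.we_eq_of_ns (B.nobump _ _) (col_ns' hB hk hi hne)

variable (hst : ∀ i : Fin m, w (s i) = t (u i)) (hB : B.InBPDv w s)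

include hst hB

/-- Chain vertically through deleted rows along a kept column. -/
lemma chainV {b : Fin m} : ∀ r r' : ℕ, r ≤ r' → r' < n →
    (∀ q, r ≤ q → q < r' → ∀ a : Fin m, (s a : ℕ) ≠ q) →
    (B.tile r (t b)).north = (B.tile r' (t b)).north := by
  suffices H : ∀ (d r r' : ℕ), r' - r = d → r ≤ r' → r' < n →
      (∀ q, r ≤ q → q < r' → ∀ a : Fin m, (s a : ℕ) ≠ q) →
      (B.tile r (t b)).north = (B.tile r' (t b)).north by
    intro r r' h1 h2 h3
    exact H (r' - r) r r' rfl h1 h2 h3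
  intro d
  induction d with
  | zero =>
    intro r r' hd hle _ _
    have : r = r' := by omega
    rw [this]
  | succ d ih =>
    intro r r' hd hle hn' hdel
    have hrr : r < r' := by omega
    have hrn : r < n := by omega
    have hk := not_range_of hrn (hdel r le_rfl hrr)
    have h1 := row_ns' hB hk (j := (t b : ℕ)) (t b).isLt (tcol_ne hst hk)
    have h2 := B.vmatch r (t b) (by omega) (t b).isLt
    rw [h1, h2]
    exact ih (r + 1) r' (by omega) (by omega) hn'
      (fun q hq hq' a => hdel q (by omega) hq' a)

/-- Chain horizontally through deleted columns along a kept row. -/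
lemma chainH {a : Fin m} : ∀ c c' : ℕ, c ≤ c' → c' < n →
    (∀ q, c ≤ q → q < c' → ∀ b : Fin m, (t b : ℕ) ≠ q) →
    (B.tile (s a) c).west = (B.tile (s a) c').west := by
  suffices H : ∀ (d c c' : ℕ), c' - c = d → c ≤ c' → c' < n →
      (∀ q, c ≤ q → q < c' → ∀ b : Fin m, (t b : ℕ) ≠ q) →
      (B.tile (s a) c).west = (B.tile (s a) c').west by
    intro c c' h1 h2 h3
    exact H (c' - c) c c' rfl h1 h2 h3
  intro d
  induction d with
  | zero =>
    intro c c' hd hle _ _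
    have : c = c' := by omega
    rw [this]
  | succ d ih =>
    intro c c' hd hle hn' hdel
    have hcc : c < c' := by omega
    have hcn : c < n := by omega
    obtain ⟨k, hk, hwk⟩ := delCol_spec hst hcn (hdel c le_rfl hcc)
    have hne : (s a : ℕ) ≠ (k : ℕ) := by
      intro h
      exact hk ⟨a, Fin.val_injective h⟩
    have h1 := col_we' hB hk (i := (s a : ℕ)) (s a).isLt hne
    rw [hwk] at h1
    have h2 := B.hmatch (s a) c (s a).isLt (by omega)
    rw [h1, h2]
    exact ih (c + 1) c' (by omega) (by omega) hn'
      (fun q hq hq' b => hdel q (by omega) hq' b)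

/-- Below all kept rows, every kept column carries a vertical segment. -/
lemma northTrue_below {b : Fin m} {r : ℕ} (hr : r < n)
    (hdel : ∀ q, r ≤ q → q < n → ∀ a : Fin m, (s a : ℕ) ≠ q) :
    (B.tile r (t b)).north = true := by
  have h1 := chainV (b := b) hst hB r (n - 1) (by omega) (by omega)
    (fun q hq hq' a => hdel q hq (by omega) a)
  have hk := not_range_of (show n - 1 < n by omega) (hdel (n - 1) (by omega) (by omega))
  have h2 := row_ns' hB hk (j := (t b : ℕ)) (t b).isLt (tcol_ne hst hk)
  rw [h1, h2]
  exact B.bottom (t b) (t b).isLt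

/-- To the right of all kept columns, every kept row carries a horizontal
segment. -/
lemma eastTrue_right {a : Fin m} {c : ℕ} (hc : c < n)
    (hdel : ∀ q, c < q → q < n → ∀ b : Fin m, (t b : ℕ) ≠ q) :
    (B.tile (s a) c).east = true := by
  rcases eq_or_lt_of_le (show c ≤ n - 1 by omega) with heq | hlt
  · rw [heq]
    exact B.right (s a) (s a).isLt
  · have h1 := B.hmatch (s a) c (s a).isLt (by omega)
    have h2 := chainH (a := a) hst hB (c + 1) (n - 1) (by omega) (by omega)
      (fun q hq hq' b => hdel q (by omega) (by omega) b)
    obtain ⟨k, hk, hwk⟩ := delCol_spec hst (show n - 1 < n by omega)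
      (hdel (n - 1) (by omega) (by omega))
    have hne : (s a : ℕ) ≠ (k : ℕ) := fun h => hk ⟨a, Fin.val_injective h⟩
    have h3 := col_we' hB hk (i := (s a : ℕ)) (s a).isLt hne
    rw [hwk] at h3
    rw [h1, h2, h3]
    exact B.right (s a) (s a).isLt

omit hst hB

/-- The tile function of the restricted diagram. -/
def resTile (B : BPD n) (s t : Fin m ↪o Fin n) (i j : ℕ) : Tile :=
  if h : i < m ∧ j < m then B.tile (s ⟨i, h.1⟩) (t ⟨j, h.2⟩) else Tile.blank

lemma resTile_eq {i j : ℕ} (hi : i < m) (hj : j < m) :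
    resTile B s t i j = B.tile (s ⟨i, hi⟩) (t ⟨j, hj⟩) := dif_pos ⟨hi, hj⟩

end Restrict

section Restrict2

variable {n m : ℕ} {w : Equiv.Perm (Fin n)} {s t : Fin m ↪o Fin n}
  {u : Equiv.Perm (Fin m)} {B : BPD n}

lemma emb_gap {μ ν : ℕ} (e : Fin μ ↪o Fin ν) {i : ℕ} (hi1 : i + 1 < μ) {q : ℕ}
    (h1 : (e ⟨i, by omega⟩ : ℕ) < q) (h2 : q < (e ⟨i + 1, hi1⟩ : ℕ)) :
    ∀ a : Fin μ, (e a : ℕ) ≠ q := by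
  intro a ha
  have l1 : (i : ℕ) < (a : ℕ) := (emb_lt_iff e (a := ⟨i, by omega⟩) (b := a)).mp (by omega)
  have l2 : (a : ℕ) < i + 1 := (emb_lt_iff e (a := a) (b := ⟨i + 1, hi1⟩)).mp (by omega)
  omega

lemma emb_above {μ ν : ℕ} (e : Fin μ ↪o Fin ν) {q : ℕ} (hm : 0 < μ)
    (h : (e ⟨μ - 1, by omega⟩ : ℕ) < q) : ∀ a : Fin μ, (e a : ℕ) ≠ q := by
  intro a ha
  have l1 : (μ - 1 : ℕ) < (a : ℕ) :=
    (emb_lt_iff e (a := ⟨μ - 1, by omega⟩) (b := a)).mp (by omega)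
  have := a.isLt
  omega

lemma emb_below {μ ν : ℕ} (e : Fin μ ↪o Fin ν) {q : ℕ} (hm : 0 < μ)
    (h : q < (e ⟨0, hm⟩ : ℕ)) : ∀ a : Fin μ, (e a : ℕ) ≠ q := by
  intro a ha
  have l1 : (a : ℕ) < 0 := (emb_lt_iff e (a := a) (b := ⟨0, hm⟩)).mp (by omega)
  omega

variable (hst : ∀ i : Fin m, w (s i) = t (u i)) (hB : B.InBPDv w s)

/-- The restriction of `B` to the rows indexed by `s` and the columns indexed
by `t`. -/
def restrict : BPD m where
  tile := resTile B s t
  vmatch := by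
    intro i j hi1 hj
    have hi : i < m := by omega
    rw [resTile_eq hi hj, resTile_eq hi1 hj]
    have hlt : (s ⟨i, hi⟩ : ℕ) < (s ⟨i + 1, hi1⟩ : ℕ) :=
      (emb_lt_iff s).mpr (Nat.lt_succ_self i)
    have h2 := B.vmatch (s ⟨i, hi⟩) (t ⟨j, hj⟩)
      (by have := (s ⟨i + 1, hi1⟩).isLt; omega) (t ⟨j, hj⟩).isLt
    rw [h2]
    exact chainV hst hB ((s ⟨i, hi⟩ : ℕ) + 1) (s ⟨i + 1, hi1⟩) (by omega)
      (s ⟨i + 1, hi1⟩).isLt (fun q hq hq' => emb_gap s hi1 (by omega) hq')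
  hmatch := by
    intro i j hi hj1
    have hj : j < m := by omega
    rw [resTile_eq hi hj, resTile_eq hi hj1]
    have hlt : (t ⟨j, hj⟩ : ℕ) < (t ⟨j + 1, hj1⟩ : ℕ) :=
      (emb_lt_iff t).mpr (Nat.lt_succ_self j)
    have h2 := B.hmatch (s ⟨i, hi⟩) (t ⟨j, hj⟩) (s ⟨i, hi⟩).isLt
      (by have := (t ⟨j + 1, hj1⟩).isLt; omega)
    rw [h2]
    exact chainH hst hB ((t ⟨j, hj⟩ : ℕ) + 1) (t ⟨j + 1, hj1⟩) (by omega)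
      (t ⟨j + 1, hj1⟩).isLt (fun q hq hq' => emb_gap t hj1 (by omega) hq')
  bottom := by
    intro j hj
    have hm : 0 < m := by omega
    rw [resTile_eq (show m - 1 < m by omega) hj]
    rcases eq_or_lt_of_le (show (s ⟨m - 1, by omega⟩ : ℕ) ≤ n - 1 by
        have := (s ⟨m - 1, by omega⟩).isLt; omega) with heq | hlt
    · rw [show ((s ⟨m - 1, by omega⟩ : Fin n) : ℕ) = n - 1 from heq]
      exact B.bottom (t ⟨j, hj⟩) (t ⟨j, hj⟩).isLt
    · have h2 := B.vmatch (s ⟨m - 1, by omega⟩) (t ⟨j, hj⟩) (by omega)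
        (t ⟨j, hj⟩).isLt
      rw [h2]
      exact northTrue_below hst hB (by omega)
        (fun q hq hq' => emb_above s hm (by omega))
  right := by
    intro i hi
    have hm : 0 < m := by omega
    rw [resTile_eq hi (show m - 1 < m by omega)]
    exact eastTrue_right hst hB (t ⟨m - 1, by omega⟩).isLt
      (fun q hq hq' => emb_above t hm (by omega))
  top := by
    intro j hj
    have hm : 0 < m := by omega
    rw [resTile_eq hm hj]
    have h1 := chainV (b := ⟨j, hj⟩) hst hB 0 (s ⟨0, hm⟩) (Nat.zero_le _)
      (s ⟨0, hm⟩).isLt (fun q hq hq' => emb_below s hm (by omega))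
    rw [← h1]
    exact B.top (t ⟨j, hj⟩) (t ⟨j, hj⟩).isLt
  left := by
    intro i hi
    have hm : 0 < m := by omega
    rw [resTile_eq hi hm]
    have h1 := chainH (a := ⟨i, hi⟩) hst hB 0 (t ⟨0, hm⟩) (Nat.zero_le _)
      (t ⟨0, hm⟩).isLt (fun q hq hq' => emb_below t hm (by omega))
    rw [← h1]
    exact B.left (s ⟨i, hi⟩) (s ⟨i, hi⟩).isLt
  outside := by
    intro i j hij
    exact dif_neg hij
  nobump := by
    intro i j
    show resTile B s t i j ≠ Tile.bump
    unfold resTile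
    split
    · exact B.nobump _ _
    · exact fun h => absurd h (by decide)

end Restrict2

namespace Tile

lemma exit_false_of_east {t : Tile} (hb : t ≠ Tile.bump) (he : t.east = true) :
    t.exitEast false = true := by
  cases t <;> simp_all [exitEast, east]

lemma noexit_of_north {t : Tile} (hb : t ≠ Tile.bump) (hn : t.north = true) :
    t.exitEast true = false := by
  cases t <;> simp_all [exitEast, north]

end Tile

/-- Reindexing of rows (value `n` outside the range). -/
def sv {m n : ℕ} (s : Fin m ↪o Fin n) (i : ℕ) : ℕ :=
  if h : i < m then (s ⟨i, h⟩ : ℕ) else n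

lemma sv_eq {m n : ℕ} (s : Fin m ↪o Fin n) {i : ℕ} (h : i < m) :
    sv s i = (s ⟨i, h⟩ : ℕ) := dif_pos h

section Restrict3

variable {n m : ℕ} {w : Equiv.Perm (Fin n)} {s t : Fin m ↪o Fin n}
  {u : Equiv.Perm (Fin m)} {B : BPD n}

variable (hst : ∀ i : Fin m, w (s i) = t (u i)) (hB : B.InBPDv w s)

include hst hB

/-- Transport of a pipe eastwards through deleted columns. -/
lemma sim_east {a : Fin m} : ∀ (dd c c' : ℕ), c' - c = dd → c ≤ c' → c' < n →
    (∀ q, c ≤ q → q < c' → ∀ b : Fin m, (t b : ℕ) ≠ q) →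
    (B.tile (s a) c).west = true →
    Relation.ReflTransGen B.toDiagram.Step ((s a : ℕ), c, false)
        ((s a : ℕ), c', false) ∧
      (B.tile (s a) c').west = true := by
  intro dd
  induction dd with
  | zero =>
    intro c c' hd _ _ _ hw
    have : c = c' := by omega
    subst this
    exact ⟨Relation.ReflTransGen.refl, hw⟩
  | succ dd ih =>
    intro c c' hd hle hn' hdel hw
    have hcc : c < c' := by omega
    obtain ⟨k, hk, hwk⟩ := delCol_spec hst (show c < n by omega) (hdel c le_rfl hcc)
    have hne : (s a : ℕ) ≠ (k : ℕ) := fun h => hk ⟨a, Fin.val_injective h⟩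
    have h1 := col_we' hB hk (i := (s a : ℕ)) (s a).isLt hne
    rw [hwk] at h1
    have he : (B.tile (s a) c).east = true := by rw [← h1]; exact hw
    have hstep : B.toDiagram.Step ((s a : ℕ), c, false) ((s a : ℕ), c + 1, false) := by
      refine ⟨(s a).isLt, show c < n by omega, ?_⟩
      rw [if_pos (Tile.exit_false_of_east (B.nobump _ _) he)]
      exact ⟨by show c + 1 < n; omega, rfl⟩
    have hw' : (B.tile (s a) (c + 1)).west = true := by
      rw [← B.hmatch (s a) c (s a).isLt (by omega)]
      exact he
    obtain ⟨p, hw''⟩ := ih (c + 1) c' (by omega) (by omega) hn'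
      (fun q hq hq' b => hdel q (by omega) hq' b) hw'
    exact ⟨p.head hstep, hw''⟩

/-- Transport of a pipe northwards through deleted rows. -/
lemma sim_north {b : Fin m} : ∀ (dd r r' : ℕ), r - r' = dd → r' ≤ r → r < n →
    (∀ q, r' < q → q ≤ r → ∀ a : Fin m, (s a : ℕ) ≠ q) →
    (B.tile r (t b)).south = true →
    Relation.ReflTransGen B.toDiagram.Step (r, (t b : ℕ), true)
        (r', (t b : ℕ), true) ∧
      (B.tile r' (t b)).south = true := by
  intro dd
  induction dd with
  | zero =>
    intro r r' hd _ _ _ hs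
    have : r = r' := by omega
    subst this
    exact ⟨Relation.ReflTransGen.refl, hs⟩
  | succ dd ih =>
    intro r r' hd hle hn' hdel hs
    have hrr : r' < r := by omega
    have hk := not_range_of (show r < n by omega) (hdel r (by omega) le_rfl)
    have h1 := row_ns' hB hk (j := (t b : ℕ)) (t b).isLt (tcol_ne hst hk)
    have hn : (B.tile r (t b)).north = true := by rw [h1]; exact hs
    have hstep : B.toDiagram.Step (r, (t b : ℕ), true) (r - 1, (t b : ℕ), true) := by
      refine ⟨by omega, (t b).isLt, ?_⟩
      rw [if_neg]
      · exact ⟨by omega, rfl⟩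
      · rw [Tile.noexit_of_north (B.nobump _ _) hn]
        simp
    have hs' : (B.tile (r - 1) (t b)).south = true := by
      have h2 := B.vmatch (r - 1) (t b) (by omega) (t b).isLt
      have hr1 : r - 1 + 1 = r := by omega
      rw [hr1] at h2
      rw [h2]
      exact hn
    obtain ⟨p, hs''⟩ := ih (r - 1) r' (by omega) (by omega) (by omega)
      (fun q hq hq' a => hdel q hq (by omega) a) hs'
    exact ⟨p.head hstep, hs''⟩

end Restrict3

section Restrict4

variable {n m : ℕ} {w : Equiv.Perm (Fin n)} {s t : Fin m ↪o Fin n}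
  {u : Equiv.Perm (Fin m)} {B : BPD n}

variable (hst : ∀ i : Fin m, w (s i) = t (u i)) (hB : B.InBPDv w s)

include hst hB

/-- Master simulation lemma: a pipe of the restricted diagram lifts to a pipe
of the original diagram. -/
lemma master {j₀ : ℕ} (hj₀ : j₀ < m) :
    ∀ σ : ℕ × ℕ × Bool,
      Relation.ReflTransGen (restrict hst hB).toDiagram.Step (m - 1, j₀, true) σ →
      ∃ (hi : σ.1 < m) (hj : σ.2.1 < m),
        Relation.ReflTransGen B.toDiagram.Step (n - 1, (t ⟨j₀, hj₀⟩ : ℕ), true)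
          ((s ⟨σ.1, hi⟩ : ℕ), (t ⟨σ.2.1, hj⟩ : ℕ), σ.2.2) ∧
        (if σ.2.2 then (B.tile (s ⟨σ.1, hi⟩) (t ⟨σ.2.1, hj⟩)).south
          else (B.tile (s ⟨σ.1, hi⟩) (t ⟨σ.2.1, hj⟩)).west) = true := by
  intro σ hp
  induction hp with
  | refl =>
    have hm : 0 < m := by omega
    have hm1 : m - 1 < m := by omega
    have hsl := (s ⟨m - 1, hm1⟩).isLt
    obtain ⟨p, hs⟩ := sim_north (b := ⟨j₀, hj₀⟩) hst hB
      ((n - 1) - (s ⟨m - 1, hm1⟩ : ℕ)) (n - 1) (s ⟨m - 1, hm1⟩ : ℕ) rfl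
      (by omega) (by omega) (fun q hq _ => emb_above s hm hq)
      (B.bottom _ (t ⟨j₀, hj₀⟩).isLt)
    exact ⟨hm1, hj₀, p, hs⟩
  | @tail b c hab hbc ih =>
    obtain ⟨i, j, d⟩ := b
    obtain ⟨hi, hj, hpath, hInv⟩ := ih
    obtain ⟨h1, h2, hbr⟩ := hbc
    have hT : (restrict hst hB).tile i j = B.tile (s ⟨i, hi⟩) (t ⟨j, hj⟩) :=
      resTile_eq hi hj
    by_cases hex : ((restrict hst hB).tile i j).exitEast d = true
    · rw [if_pos hex] at hbr
      obtain ⟨hj1, rfl⟩ := hbr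
      have hj1' : j + 1 < m := hj1
      have hBex : (B.tile (s ⟨i, hi⟩) (t ⟨j, hj⟩)).exitEast d = true := by
        rw [← hT]; exact hex
      have he := Tile.east_of_exit (B.nobump _ _) hInv hBex
      have hstepB : B.toDiagram.Step ((s ⟨i, hi⟩ : ℕ), (t ⟨j, hj⟩ : ℕ), d)
          ((s ⟨i, hi⟩ : ℕ), (t ⟨j, hj⟩ : ℕ) + 1, false) := by
        refine ⟨(s ⟨i, hi⟩).isLt, (t ⟨j, hj⟩).isLt, ?_⟩
        rw [if_pos hBex]
        exact ⟨by show (t ⟨j, hj⟩ : ℕ) + 1 < n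
                  have := (t ⟨j + 1, hj1'⟩).isLt
                  have := (emb_lt_iff t (a := ⟨j, hj⟩) (b := ⟨j + 1, hj1'⟩)).mpr
                    (Nat.lt_succ_self j)
                  omega, rfl⟩
      have hw1 : (B.tile (s ⟨i, hi⟩) ((t ⟨j, hj⟩ : ℕ) + 1)).west = true := by
        rw [← B.hmatch (s ⟨i, hi⟩) (t ⟨j, hj⟩) (s ⟨i, hi⟩).isLt
          (by have := (t ⟨j + 1, hj1'⟩).isLt
              have := (emb_lt_iff t (a := ⟨j, hj⟩) (b := ⟨j + 1, hj1'⟩)).mpr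
                (Nat.lt_succ_self j)
              omega)]
        exact he
      have htlt : (t ⟨j, hj⟩ : ℕ) < (t ⟨j + 1, hj1'⟩ : ℕ) :=
        (emb_lt_iff t).mpr (Nat.lt_succ_self j)
      obtain ⟨p2, hw2⟩ := sim_east (a := ⟨i, hi⟩) hst hB _
        ((t ⟨j, hj⟩ : ℕ) + 1) (t ⟨j + 1, hj1'⟩) rfl (by omega)
        (t ⟨j + 1, hj1'⟩).isLt
        (fun q hq hq' bb => emb_gap t hj1' (by omega) hq' bb) hw1
      exact ⟨hi, hj1', (hpath.tail hstepB).trans p2, hw2⟩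
    · have hexF : ((restrict hst hB).tile i j).exitEast d = false := by
        revert hex
        cases ((restrict hst hB).tile i j).exitEast d <;> simp
      rw [if_neg (by rw [hexF]; simp)] at hbr
      obtain ⟨hi0, rfl⟩ := hbr
      obtain ⟨i', rfl⟩ : ∃ i', i = i' + 1 := ⟨i - 1, by omega⟩
      have hi' : i' < m := by omega
      have hBexF : (B.tile (s ⟨i' + 1, hi⟩) (t ⟨j, hj⟩)).exitEast d = false := by
        rw [← hT]; exact hexF
      have hn := Tile.north_of_noexit (B.nobump _ _) hInv hBexF
      have hslt : (s ⟨i', hi'⟩ : ℕ) < (s ⟨i' + 1, hi⟩ : ℕ) :=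
        (emb_lt_iff s).mpr (Nat.lt_succ_self i')
      have hstepB : B.toDiagram.Step ((s ⟨i' + 1, hi⟩ : ℕ), (t ⟨j, hj⟩ : ℕ), d)
          ((s ⟨i' + 1, hi⟩ : ℕ) - 1, (t ⟨j, hj⟩ : ℕ), true) := by
        refine ⟨(s ⟨i' + 1, hi⟩).isLt, (t ⟨j, hj⟩).isLt, ?_⟩
        rw [if_neg (by rw [hBexF]; simp)]
        exact ⟨by show 0 < (s ⟨i' + 1, hi⟩ : ℕ); omega, rfl⟩
      have hsouth : (B.tile ((s ⟨i' + 1, hi⟩ : ℕ) - 1) (t ⟨j, hj⟩)).south = true := by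
        have h2 := B.vmatch ((s ⟨i' + 1, hi⟩ : ℕ) - 1) (t ⟨j, hj⟩)
          (by have := (s ⟨i' + 1, hi⟩).isLt; omega) (t ⟨j, hj⟩).isLt
        have hr1 : (s ⟨i' + 1, hi⟩ : ℕ) - 1 + 1 = (s ⟨i' + 1, hi⟩ : ℕ) := by omega
        rw [hr1] at h2
        rw [h2]
        exact hn
      obtain ⟨p2, hs2⟩ := sim_north (b := ⟨j, hj⟩) hst hB _
        ((s ⟨i' + 1, hi⟩ : ℕ) - 1) (s ⟨i', hi'⟩) rfl (by omega)
        (by have := (s ⟨i' + 1, hi⟩).isLt; omega)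
        (fun q hq hq' aa => emb_gap s (show i' + 1 < m from hi) hq (by omega) aa)
        hsouth
      exact ⟨hi', hj, (hpath.tail hstepB).trans p2, hs2⟩

end Restrict4

/-- Every pipe of a BPD exits to the east. -/
lemma BPD.pipe_exits {μ : ℕ} (C : BPD μ) {j₀ : ℕ} (hj₀ : j₀ < μ) :
    ∃ x, x < μ ∧ C.toDiagram.ExitsAt j₀ x := by
  suffices H : ∀ N i j (d : Bool), i < μ → j < μ →
      (if d then (C.tile i j).south else (C.tile i j).west) = true →
      i * μ + (μ - j) ≤ N →
      ∃ x, x < μ ∧ ∃ d', Relation.ReflTransGen C.toDiagram.Step (i, j, d)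
        (x, μ - 1, d') ∧ (C.tile x (μ - 1)).exitEast d' = true by
    obtain ⟨x, hx, d', hp, he⟩ := H ((μ - 1) * μ + μ) (μ - 1) j₀ true (by omega)
      hj₀ (C.bottom j₀ hj₀) (by omega)
    exact ⟨x, hx, d', hp, he⟩
  intro N
  induction N with
  | zero => intro i j d hi hj _ hr; omega
  | succ N ih =>
    intro i j d hi hj hInv hrank
    by_cases hex : (C.tile i j).exitEast d = true
    · by_cases hj1 : j + 1 < μ
      · have he := Tile.east_of_exit (C.nobump _ _) hInv hex
        have hstep : C.toDiagram.Step (i, j, d) (i, j + 1, false) :=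
          ⟨hi, hj, by rw [if_pos hex]; exact ⟨hj1, rfl⟩⟩
        have hw : (C.tile i (j + 1)).west = true := by
          rw [← C.hmatch i j hi hj1]; exact he
        obtain ⟨x, hx, d', hp, hE⟩ := ih i (j + 1) false hi hj1 hw (by omega)
        exact ⟨x, hx, d', hp.head hstep, hE⟩
      · have hjeq : j = μ - 1 := by omega
        subst hjeq
        exact ⟨i, hi, d, Relation.ReflTransGen.refl, hex⟩
    · have hexF : (C.tile i j).exitEast d = false := by
        revert hex; cases (C.tile i j).exitEast d <;> simp
      have hn := Tile.north_of_noexit (C.nobump _ _) hInv hexF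
      by_cases hi0 : 0 < i
      · have hstep : C.toDiagram.Step (i, j, d) (i - 1, j, true) :=
          ⟨hi, hj, by rw [if_neg (by rw [hexF]; simp)]; exact ⟨hi0, rfl⟩⟩
        have hs : (C.tile (i - 1) j).south = true := by
          have h2 := C.vmatch (i - 1) j (by omega) hj
          have hr1 : i - 1 + 1 = i := by omega
          rw [hr1] at h2; rw [h2]; exact hn
        have hrank' : (i - 1) * μ + (μ - j) ≤ N := by
          have hmul : (i - 1) * μ + μ = i * μ := by
            have h3 : i - 1 + 1 = i := by omega
            calc (i - 1) * μ + μ = (i - 1 + 1) * μ := by ring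
            _ = i * μ := by rw [h3]
          omega
        obtain ⟨x, hx, d', hp, hE⟩ := ih (i - 1) j true (by omega) hj hs hrank'
        exact ⟨x, hx, d', hp.head hstep, hE⟩
      · exfalso
        have hi0' : i = 0 := by omega
        subst hi0'
        rw [C.top j hj] at hn
        exact absurd hn (by decide)

section Restrict5

variable {n m : ℕ} {w : Equiv.Perm (Fin n)} {s t : Fin m ↪o Fin n}
  {u : Equiv.Perm (Fin m)} {B : BPD n}

variable (hst : ∀ i : Fin m, w (s i) = t (u i)) (hB : B.InBPDv w s)

include hst hB

/-- A pipe exiting the restricted diagram lifts to an exiting pipe of `B`. -/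
lemma exits_exit {j₀ x : ℕ} (hj₀ : j₀ < m) {d : Bool}
    (hp : Relation.ReflTransGen (restrict hst hB).toDiagram.Step
      (m - 1, j₀, true) (x, m - 1, d))
    (hex : ((restrict hst hB).tile x (m - 1)).exitEast d = true) :
    ∃ (hx : x < m),
      B.toDiagram.ExitsAt (t ⟨j₀, hj₀⟩ : ℕ) (s ⟨x, hx⟩ : ℕ) := by
  obtain ⟨hx, hj, hpath, hInv⟩ := master hst hB hj₀ _ hp
  have hm : 0 < m := by omega
  have hBex : (B.tile (s ⟨x, hx⟩) (t ⟨m - 1, hj⟩)).exitEast d = true := by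
    rw [← resTile_eq hx hj]; exact hex
  have he := Tile.east_of_exit (B.nobump _ _) hInv hBex
  rcases eq_or_lt_of_le (show ((t ⟨m - 1, hj⟩ : Fin n) : ℕ) ≤ n - 1 from by
      have := (t ⟨m - 1, hj⟩).isLt; omega) with heq | hlt
  · refine ⟨hx, d, ?_, ?_⟩
    · rw [heq] at hpath; exact hpath
    · rw [← heq]; exact hBex
  · have hstepB : B.toDiagram.Step
        ((s ⟨x, hx⟩ : ℕ), ((t ⟨m - 1, hj⟩ : Fin n) : ℕ), d)
        ((s ⟨x, hx⟩ : ℕ), ((t ⟨m - 1, hj⟩ : Fin n) : ℕ) + 1, false) := by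
      refine ⟨(s ⟨x, hx⟩).isLt, (t ⟨m - 1, hj⟩).isLt, ?_⟩
      rw [if_pos hBex]
      exact ⟨by show ((t ⟨m - 1, hj⟩ : Fin n) : ℕ) + 1 < n; omega, rfl⟩
    have hw1 : (B.tile (s ⟨x, hx⟩) (((t ⟨m - 1, hj⟩ : Fin n) : ℕ) + 1)).west = true := by
      rw [← B.hmatch (s ⟨x, hx⟩) (t ⟨m - 1, hj⟩) (s ⟨x, hx⟩).isLt (by omega)]
      exact he
    obtain ⟨p2, hw2⟩ := sim_east (a := ⟨x, hx⟩) hst hB _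
      (((t ⟨m - 1, hj⟩ : Fin n) : ℕ) + 1) (n - 1) rfl (by omega) (by omega)
      (fun q hq hq' bb => emb_above t hm (by omega) bb) hw1
    obtain ⟨k, hk, hwk⟩ := delCol_spec hst (show n - 1 < n by omega)
      (emb_above t hm (by omega))
    have hne : (s ⟨x, hx⟩ : ℕ) ≠ (k : ℕ) := fun h => hk ⟨_, Fin.val_injective h⟩
    have hwe := col_we' hB hk (i := (s ⟨x, hx⟩ : ℕ)) (s ⟨x, hx⟩).isLt hne
    rw [hwk] at hwe
    have heend : (B.tile (s ⟨x, hx⟩) (n - 1)).east = true := by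
      rw [← hwe]; exact hw2
    exact ⟨hx, false, (hpath.tail hstepB).trans p2,
      Tile.exit_false_of_east (B.nobump _ _) heend⟩

/-- A passing pipe of the restricted diagram lifts to `B`. -/
lemma passes_lift {y : ℕ} (hy : y < m) {c : ℕ × ℕ}
    (hp : (restrict hst hB).toDiagram.Passes y c) :
    ∃ (h1 : c.1 < m) (h2 : c.2 < m),
      B.toDiagram.Passes (t ⟨y, hy⟩ : ℕ) ((s ⟨c.1, h1⟩ : ℕ), (t ⟨c.2, h2⟩ : ℕ)) := by
  obtain ⟨d, hp⟩ := hp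
  obtain ⟨h1, h2, hpath, _⟩ := master hst hB hy _ hp
  exact ⟨h1, h2, d, hpath⟩

lemma restrict_hasPerm : (restrict hst hB).toDiagram.HasPerm u := by
  intro x
  obtain ⟨e, he, hex⟩ := (restrict hst hB).pipe_exits (u x).isLt
  obtain ⟨d, hp, hExit⟩ := hex
  obtain ⟨he', hexB⟩ := exits_exit hst hB (u x).isLt hp hExit
  have hkey : (t ⟨((u x : Fin m) : ℕ), (u x).isLt⟩ : Fin n) = w (s x) := by
    rw [hst x]
  have hwexit := hB.1 (s x)
  rw [show ((t ⟨((u x : Fin m) : ℕ), (u x).isLt⟩ : Fin n) : ℕ)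
    = ((w (s x) : Fin n) : ℕ) from congrArg _ hkey] at hexB
  have hse : (s ⟨e, he'⟩ : ℕ) = ((s x : Fin n) : ℕ) :=
    B.toDiagram.exitsAt_unique hexB hwexit
  have hee : e = (x : ℕ) :=
    congrArg Fin.val (s.injective (Fin.val_injective hse))
  have hres : (restrict hst hB).toDiagram.ExitsAt (u x) e := ⟨d, hp, hExit⟩
  rwa [hee] at hres

lemma restrict_reduced (hred : B.toDiagram.Reduced) :
    (restrict hst hB).toDiagram.Reduced := by
  intro y₁ y₂ hy₁ hy₂ hne c hc c' hc'
  obtain ⟨c1, c2⟩ := c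
  obtain ⟨c1', c2'⟩ := c'
  obtain ⟨hcr, hp1, hp2⟩ := hc
  obtain ⟨hcr', hp1', hp2'⟩ := hc'
  have hb : c1 < m ∧ c2 < m := by
    by_contra hh
    rw [show (restrict hst hB).tile c1 c2 = Tile.blank from
      (restrict hst hB).outside c1 c2 hh] at hcr
    exact absurd hcr (by decide)
  have hb' : c1' < m ∧ c2' < m := by
    by_contra hh
    rw [show (restrict hst hB).tile c1' c2' = Tile.blank from
      (restrict hst hB).outside c1' c2' hh] at hcr'
    exact absurd hcr' (by decide)
  obtain ⟨h1, h2⟩ := hb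
  obtain ⟨h1', h2'⟩ := hb'
  obtain ⟨q1, q2, hP1⟩ := passes_lift hst hB hy₁ (c := (c1, c2)) hp1
  obtain ⟨r1, r2, hP2⟩ := passes_lift hst hB hy₂ (c := (c1, c2)) hp2
  obtain ⟨q1', q2', hP1'⟩ := passes_lift hst hB hy₁ (c := (c1', c2')) hp1'
  obtain ⟨r1', r2', hP2'⟩ := passes_lift hst hB hy₂ (c := (c1', c2')) hp2'
  have hcross : B.tile (s ⟨c1, q1⟩) (t ⟨c2, q2⟩) = Tile.cross := by
    rw [← resTile_eq q1 q2]; exact hcr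
  have hcross' : B.tile (s ⟨c1', q1'⟩) (t ⟨c2', q2'⟩) = Tile.cross := by
    rw [← resTile_eq q1' q2']; exact hcr'
  have htne : ((t ⟨y₁, hy₁⟩ : Fin n) : ℕ) ≠ ((t ⟨y₂, hy₂⟩ : Fin n) : ℕ) := by
    intro h
    exact hne (congrArg Fin.val (t.injective (Fin.val_injective h)))
  have hmem1 : ((s ⟨c1, q1⟩ : ℕ), (t ⟨c2, q2⟩ : ℕ)) ∈
      B.toDiagram.SharedCrossings (t ⟨y₁, hy₁⟩) (t ⟨y₂, hy₂⟩) := ⟨hcross, hP1, hP2⟩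
  have hmem2 : ((s ⟨c1', q1'⟩ : ℕ), (t ⟨c2', q2'⟩ : ℕ)) ∈
      B.toDiagram.SharedCrossings (t ⟨y₁, hy₁⟩) (t ⟨y₂, hy₂⟩) := ⟨hcross', hP1', hP2'⟩
  have heq := hred _ _ (t ⟨y₁, hy₁⟩).isLt (t ⟨y₂, hy₂⟩).isLt htne hmem1 hmem2
  have e1 : (s ⟨c1, q1⟩ : ℕ) = (s ⟨c1', q1'⟩ : ℕ) := congrArg Prod.fst heq
  have e2 : (t ⟨c2, q2⟩ : ℕ) = (t ⟨c2', q2'⟩ : ℕ) := congrArg Prod.snd heq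
  have : c1 = c1' := congrArg Fin.val (s.injective (Fin.val_injective e1))
  have : c2 = c2' := congrArg Fin.val (t.injective (Fin.val_injective e2))
  simp_all

lemma restrict_minimal : (restrict hst hB).toDiagram.Minimal := by
  intro y x hrp
  obtain ⟨hex, hrel, hrow, hcol⟩ := hrp
  obtain ⟨hx, hy⟩ := (restrict hst hB).lt_of_relbow hrel
  have hBrel : B.tile (s ⟨x, hx⟩) (t ⟨y, hy⟩) = Tile.relbow := by
    rw [← resTile_eq hx hy]; exact hrel
  have hBrp : B.toDiagram.RemovablePipe ((t ⟨y, hy⟩ : Fin n) : ℕ)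
      ((s ⟨x, hx⟩ : Fin n) : ℕ) := by
    refine ⟨?_, hBrel, ?_, ?_⟩
    · obtain ⟨d, hp, hE⟩ := hex
      obtain ⟨hx2, hexB⟩ := exits_exit hst hB hy hp hE
      exact hexB
    · intro j hjne hjrel
      have hjlt : j < n := (B.lt_of_relbow hjrel).2
      by_cases hkept : ∃ b : Fin m, (t b : ℕ) = j
      · obtain ⟨b, hb⟩ := hkept
        have hres : (restrict hst hB).tile x (b : ℕ) = Tile.relbow := by
          show resTile B s t x (b : ℕ) = Tile.relbow
          rw [resTile_eq hx b.isLt,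
            show ((t ⟨(b : ℕ), b.isLt⟩ : Fin n) : ℕ) = j from hb]
          exact hjrel
        have hby : (b : ℕ) = y := by
          by_contra hne2
          exact hrow _ hne2 hres
        apply hjne
        rw [← hb]
        exact congrArg (fun z => ((t z : Fin n) : ℕ)) (Fin.val_injective hby)
      · push_neg at hkept
        obtain ⟨k, hk, hwk⟩ := delCol_spec hst hjlt hkept
        have hne2 : (s ⟨x, hx⟩ : ℕ) ≠ (k : ℕ) := fun h => hk ⟨_, Fin.val_injective h⟩
        have hns := col_ns' hB hk (i := (s ⟨x, hx⟩ : ℕ)) (s ⟨x, hx⟩).isLt hne2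
        rw [hwk, hjrel] at hns
        exact absurd hns (by decide)
    · intro i hine hirel
      have hilt : i < n := (B.lt_of_relbow hirel).1
      by_cases hkept : ∃ a : Fin m, (s a : ℕ) = i
      · obtain ⟨a, ha⟩ := hkept
        have hres : (restrict hst hB).tile (a : ℕ) y = Tile.relbow := by
          show resTile B s t (a : ℕ) y = Tile.relbow
          rw [resTile_eq a.isLt hy,
            show ((s ⟨(a : ℕ), a.isLt⟩ : Fin n) : ℕ) = i from ha]
          exact hirel
        have hax : (a : ℕ) = x := by
          by_contra hne2
          exact hcol _ hne2 hres
        apply hine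
        rw [← ha]
        exact congrArg (fun z => ((s z : Fin n) : ℕ)) (Fin.val_injective hax)
      · push_neg at hkept
        have hk := not_range_of hilt hkept
        have hns := row_ns' hB hk (j := ((t ⟨y, hy⟩ : Fin n) : ℕ))
          (t ⟨y, hy⟩).isLt (tcol_ne hst hk)
        rw [hirel] at hns
        exact absurd hns (by decide)
  obtain ⟨k, hk, hxk, hyk⟩ := (hB.2 _ _).mp hBrp
  exact hk ⟨⟨x, hx⟩, Fin.val_injective hxk⟩

end Restrict5

section Restrict6

variable {n m : ℕ} {w : Equiv.Perm (Fin n)} {s t : Fin m ↪o Fin n}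
  {u : Equiv.Perm (Fin m)} {B : BPD n}

variable (hst : ∀ i : Fin m, w (s i) = t (u i)) (hB : B.InBPDv w s)

include hst hB

lemma colN_formula {k : Fin n} (hk : k ∉ Set.range s) {i : ℕ} (hi : i < n) :
    (B.tile i (w k)).north = decide ((k : ℕ) < i) := by
  have part1 : ∀ i', i' ≤ (k : ℕ) → (B.tile i' (w k)).north = false := by
    intro i'
    induction i' with
    | zero => intro _; exact B.top (w k) (w k).isLt
    | succ i' ih =>
      intro hle
      have hkn := k.isLt
      have h2 := B.vmatch i' (w k) (by omega) (w k).isLt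
      rw [← h2, ← col_ns' hB hk (i := i') (by omega) (by omega)]
      exact ih (by omega)
  have part2 : ∀ i', (k : ℕ) < i' → i' < n → (B.tile i' (w k)).north = true := by
    intro i' hki'
    induction i', hki' using Nat.le_induction with
    | base =>
      intro hlt
      have h2 := B.vmatch (k : ℕ) (w k) hlt (w k).isLt
      rw [← h2, (deleted_rp hB hk).2.1]
      rfl
    | succ i' hki' ih =>
      intro hlt
      have h2 := B.vmatch i' (w k) hlt (w k).isLt
      rw [← h2, ← col_ns' hB hk (i := i') (by omega) (by omega)]
      exact ih (by omega)
  rcases le_or_gt i (k : ℕ) with hle | hlt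
  · rw [part1 i hle]
    simp
    omega
  · rw [part2 i hlt hi]
    simp [hlt]

lemma colS_formula {k : Fin n} (hk : k ∉ Set.range s) {i : ℕ} (hi : i < n) :
    (B.tile i (w k)).south = decide ((k : ℕ) ≤ i) := by
  rcases eq_or_lt_of_le (show i ≤ n - 1 by omega) with heq | hlt
  · rw [heq, B.bottom (w k) (w k).isLt]
    have hk1 : (k : ℕ) ≤ n - 1 := by have := k.isLt; omega
    simp [hk1]
  · rw [B.vmatch i (w k) (by omega) (w k).isLt,
      colN_formula hst hB hk (show i + 1 < n by omega)]
    simp only [decide_eq_decide]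
    omega
  
lemma rowW_formula {k : Fin n} (hk : k ∉ Set.range s) {j : ℕ} (hj : j < n) :
    (B.tile k j).west = decide ((w k : ℕ) < j) := by
  induction j with
  | zero =>
    rw [B.left k k.isLt]
    simp
  | succ j ih =>
    have h2 := B.hmatch k j k.isLt (by omega)
    by_cases hjwk : j = (w k : ℕ)
    · subst hjwk
      rw [← h2, (deleted_rp hB hk).2.1]
      simp [Tile.east]
    · rw [← h2, ← row_we' hB hk (by omega) hjwk, ih (by omega)]
      simp only [decide_eq_decide]
      omega

lemma rowE_formula {k : Fin n} (hk : k ∉ Set.range s) {j : ℕ} (hj : j < n) :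
    (B.tile k j).east = decide ((w k : ℕ) ≤ j) := by
  rcases eq_or_lt_of_le (show j ≤ n - 1 by omega) with heq | hlt
  · rw [heq, B.right k k.isLt]
    have hk1 : (w k : ℕ) ≤ n - 1 := by have := (w k).isLt; omega
    simp [hk1]
  · rw [B.hmatch k j k.isLt (by omega),
      rowW_formula hst hB hk (show j + 1 < n by omega)]
    simp only [decide_eq_decide]
    omega

end Restrict6

section Restrict7

variable {n m : ℕ} {w : Equiv.Perm (Fin n)} {s t : Fin m ↪o Fin n}
  {u : Equiv.Perm (Fin m)} {B₁ B₂ : BPD n}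

variable (hst : ∀ i : Fin m, w (s i) = t (u i))
  (hB₁ : B₁.InBPDv w s) (hB₂ : B₂.InBPDv w s)
  (htile : ∀ (a b : Fin m), B₁.tile (s a) (t b) = B₂.tile (s a) (t b))

include hst hB₁ hB₂ htile

lemma keptcolV : ∀ (dd r : ℕ), n - r = dd → r < n → ∀ b : Fin m,
    (B₁.tile r (t b)).north = (B₂.tile r (t b)).north ∧
    (B₁.tile r (t b)).south = (B₂.tile r (t b)).south := by
  intro dd
  induction dd with
  | zero => intro r hd hr; omega
  | succ dd ih =>
    intro r hd hr b
    have hS : (B₁.tile r (t b)).south = (B₂.tile r (t b)).south := by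
      rcases eq_or_lt_of_le (show r ≤ n - 1 by omega) with heq | hlt
      · rw [heq, B₁.bottom (t b) (t b).isLt, B₂.bottom (t b) (t b).isLt]
      · rw [B₁.vmatch r (t b) (by omega) (t b).isLt,
          B₂.vmatch r (t b) (by omega) (t b).isLt]
        exact (ih (r + 1) (by omega) (by omega) b).1
    refine ⟨?_, hS⟩
    by_cases hkept : ∃ a : Fin m, (s a : ℕ) = r
    · obtain ⟨a, ha⟩ := hkept
      rw [← ha]
      exact congrArg Tile.north (htile a b)
    · push_neg at hkept
      have hk := not_range_of hr hkept
      rw [row_ns' hB₁ hk (t b).isLt (tcol_ne hst hk),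
        row_ns' hB₂ hk (t b).isLt (tcol_ne hst hk)]
      exact hS

lemma keptrowH : ∀ (dd c : ℕ), n - c = dd → c < n → ∀ a : Fin m,
    (B₁.tile (s a) c).west = (B₂.tile (s a) c).west ∧
    (B₁.tile (s a) c).east = (B₂.tile (s a) c).east := by
  intro dd
  induction dd with
  | zero => intro c hd hc; omega
  | succ dd ih =>
    intro c hd hc a
    have hE : (B₁.tile (s a) c).east = (B₂.tile (s a) c).east := by
      rcases eq_or_lt_of_le (show c ≤ n - 1 by omega) with heq | hlt
      · rw [heq, B₁.right (s a) (s a).isLt, B₂.right (s a) (s a).isLt]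
      · rw [B₁.hmatch (s a) c (s a).isLt (by omega),
          B₂.hmatch (s a) c (s a).isLt (by omega)]
        exact (ih (c + 1) (by omega) (by omega) a).1
    refine ⟨?_, hE⟩
    by_cases hkept : ∃ b : Fin m, (t b : ℕ) = c
    · obtain ⟨b, hb⟩ := hkept
      rw [← hb]
      exact congrArg Tile.west (htile a b)
    · push_neg at hkept
      obtain ⟨k, hk, hwk⟩ := delCol_spec hst hc hkept
      have hne : (s a : ℕ) ≠ (k : ℕ) := fun h => hk ⟨_, Fin.val_injective h⟩
      have h1 := col_we' hB₁ hk (i := (s a : ℕ)) (s a).isLt hne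
      have h2 := col_we' hB₂ hk (i := (s a : ℕ)) (s a).isLt hne
      rw [hwk] at h1 h2
      rw [h1, h2]
      exact hE

lemma tiles_eq : ∀ i j, B₁.tile i j = B₂.tile i j := by
  intro i j
  by_cases hin : i < n ∧ j < n
  swap
  · rw [B₁.outside i j hin, B₂.outside i j hin]
  obtain ⟨hi, hj⟩ := hin
  have hNS : (B₁.tile i j).north = (B₂.tile i j).north ∧
      (B₁.tile i j).south = (B₂.tile i j).south := by
    by_cases hck : ∃ b : Fin m, (t b : ℕ) = j
    · obtain ⟨b, hb⟩ := hck
      rw [← hb]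
      exact ⟨(keptcolV hst hB₁ hB₂ htile (n - i) i rfl hi b).1,
        (keptcolV hst hB₁ hB₂ htile (n - i) i rfl hi b).2⟩
    · push_neg at hck
      obtain ⟨k', hk', hwk'⟩ := delCol_spec hst hj hck
      constructor
      · rw [← hwk', colN_formula hst hB₁ hk' hi, colN_formula hst hB₂ hk' hi]
      · rw [← hwk', colS_formula hst hB₁ hk' hi, colS_formula hst hB₂ hk' hi]
  by_cases hrk : ∃ a : Fin m, (s a : ℕ) = i
  · by_cases hck : ∃ b : Fin m, (t b : ℕ) = j
    · obtain ⟨a, ha⟩ := hrk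
      obtain ⟨b, hb⟩ := hck
      rw [← ha, ← hb]
      exact htile a b
    · obtain ⟨a, ha⟩ := hrk
      refine Tile.eq_of_edges (B₁.nobump i j) (B₂.nobump i j) hNS.1 hNS.2 ?_ ?_
      · rw [← ha]
        exact (keptrowH hst hB₁ hB₂ htile (n - j) j rfl hj a).1
      · rw [← ha]
        exact (keptrowH hst hB₁ hB₂ htile (n - j) j rfl hj a).2
  · push_neg at hrk
    have hk := not_range_of hi hrk
    by_cases hjw : j = ((w (⟨i, hi⟩ : Fin n) : Fin n) : ℕ)
    · rw [hjw, (deleted_rp hB₁ hk).2.1, (deleted_rp hB₂ hk).2.1]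
    · refine Tile.eq_of_edges (B₁.nobump i j) (B₂.nobump i j) hNS.1 hNS.2 ?_ ?_
      · rw [rowW_formula hst hB₁ hk hj, rowW_formula hst hB₂ hk hj]
      · rw [rowE_formula hst hB₁ hk hj, rowE_formula hst hB₂ hk hj]

omit htile

lemma restrict_injective (hres : restrict hst hB₁ = restrict hst hB₂) :
    B₁ = B₂ := by
  have htile : ∀ (a b : Fin m), B₁.tile (s a) (t b) = B₂.tile (s a) (t b) := by
    intro a b
    have h1 : resTile B₁ s t (a : ℕ) (b : ℕ) = resTile B₂ s t (a : ℕ) (b : ℕ) :=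
      congrArg (fun C : BPD m => C.tile (a : ℕ) (b : ℕ)) hres
    rw [resTile_eq a.isLt b.isLt, resTile_eq a.isLt b.isLt] at h1
    exact h1
  exact BPD.tile_ext (tiles_eq hst hB₁ hB₂ htile)

end Restrict7

/-- Let `w ∈ S_n`, let `v ⊆ w` be a subword of size `m` with
index sequence `s` and entry sequence `t`, and set `u := perm(v) ∈ S_m`.  Then
`|bpd(w; v)| ≤ |mbpd(u)|`. -/
theorem card_bpdv_le_card_mbpd {n m : ℕ} (w : Equiv.Perm (Fin n))
    (s t : Fin m ↪o Fin n) (u : Equiv.Perm (Fin m))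
    (hst : ∀ i : Fin m, w (s i) = t (u i)) :
    Nat.card {B : BPD n // B.InBPDv w s ∧ B.toDiagram.Reduced} ≤
      Nat.card {B' : BPD m // B'.toDiagram.HasPerm u ∧
        B'.toDiagram.Reduced ∧ B'.toDiagram.Minimal} := by
  classical
  have hfin : Finite {B' : BPD m // B'.toDiagram.HasPerm u ∧
      B'.toDiagram.Reduced ∧ B'.toDiagram.Minimal} := Subtype.finite
  refine Nat.card_le_card_of_injective
    (fun X : {B : BPD n // B.InBPDv w s ∧ B.toDiagram.Reduced} =>
      ⟨restrict hst X.2.1, restrict_hasPerm hst X.2.1,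
        restrict_reduced hst X.2.1 X.2.2, restrict_minimal hst X.2.1⟩) ?_
  intro X Y hXY
  apply Subtype.ext
  exact restrict_injective hst X.2.1 Y.2.1 (congrArg Subtype.val hXY)
end

section
/- For every w ∈ S_n, there is the upper bound |bpd(w)| ≤ Σ_v |mbpd(perm(v))|, where the sum runs over all subwords v of w (all choices of index sets, including v = w itself). -/
/-- The pattern `perm(v)` of the subword `v` of `w` with index set `S`:
the permutation `u` of `Fin S.card` with `u i = j` exactly when `w sᵢ = tⱼ`,
where `s₁ < ⋯ < s_m` enumerates `S` and `t₁ < ⋯ < t_m` enumerates the entries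
`w '' S`. -/
noncomputable def subPattern {n : ℕ} (w : Equiv.Perm (Fin n)) (S : Finset (Fin n)) :
    Equiv.Perm (Fin S.card) :=
  (S.orderIsoOfFin rfl).toEquiv.trans
    ((Equiv.Set.image (⇑w) (↑S) w.injective).trans
      ((Equiv.setCongr (Finset.coe_image).symm).trans
        ((S.image w).orderIsoOfFin
          (Finset.card_image_of_injective S w.injective)).symm.toEquiv))
section Infra

instance : Fintype Tile :=
  ⟨{Tile.blank, Tile.horiz, Tile.vert, Tile.cross, Tile.bump, Tile.relbow, Tile.jelbow},
   by intro x; cases x <;> simp⟩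

theorem Diagram.ext'_s4 {n : ℕ} {D1 D2 : Diagram n} (h : D1.tile = D2.tile) : D1 = D2 := by
  cases D1; cases D2; simp_all

theorem BPD.ext'_s4 {n : ℕ} {B1 B2 : BPD n} (h : B1.tile = B2.tile) : B1 = B2 := by
  cases B1; cases B2; simp_all
  exact Diagram.ext'_s4 h

instance BPD.finite_s4 (n : ℕ) : Finite (BPD n) := by
  apply Finite.of_injective (fun B : BPD n => (fun i j : Fin n => B.tile i j : Fin n → Fin n → Tile))
  intro B1 B2 h
  apply BPD.ext'_s4
  funext i j
  by_cases hij : i < n ∧ j < n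
  · exact congrFun (congrFun h ⟨i, hij.1⟩) ⟨j, hij.2⟩
  · rw [B1.outside i j hij, B2.outside i j hij]

end Infra
namespace Diagram

variable {n : ℕ} {D : Diagram n}

/-- State validity invariant. -/
def Ok (D : Diagram n) (σ : ℕ × ℕ × Bool) : Prop :=
  σ.1 < n ∧ σ.2.1 < n ∧
    (cond σ.2.2 (D.tile σ.1 σ.2.1).south (D.tile σ.1 σ.2.1).west) = true

theorem step_east {i j : ℕ} {d : Bool} (h1 : i < n) (h2 : j < n)
    (he : (D.tile i j).exitEast d = true) (h3 : j + 1 < n) :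
    D.Step (i, j, d) (i, j + 1, false) := by
  refine ⟨h1, h2, ?_⟩
  simp only [he]
  simp [h3]

theorem step_north {i j : ℕ} {d : Bool} (h1 : i < n) (h2 : j < n)
    (he : (D.tile i j).exitEast d = false) (h3 : 0 < i) :
    D.Step (i, j, d) (i - 1, j, true) := by
  refine ⟨h1, h2, ?_⟩
  simp only [he]
  simp [h3]

theorem step_elim {i j : ℕ} {d : Bool} {τ : ℕ × ℕ × Bool} (h : D.Step (i, j, d) τ) :
    i < n ∧ j < n ∧
      (((D.tile i j).exitEast d = true ∧ j + 1 < n ∧ τ = (i, j + 1, false)) ∨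
       ((D.tile i j).exitEast d = false ∧ 0 < i ∧ τ = (i - 1, j, true))) := by
  obtain ⟨h1, h2, h3⟩ := h
  refine ⟨h1, h2, ?_⟩
  by_cases he : (D.tile i j).exitEast d = true
  · left
    refine ⟨he, ?_⟩
    simpa [he] using h3
  · right
    rw [Bool.not_eq_true] at he
    refine ⟨he, ?_⟩
    simpa [he] using h3

theorem step_det_s4 {σ τ τ' : ℕ × ℕ × Bool} (h : D.Step σ τ) (h' : D.Step σ τ') : τ = τ' := by
  obtain ⟨i, j, d⟩ := σ
  obtain ⟨-, -, h⟩ := step_elim h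
  obtain ⟨-, -, h'⟩ := step_elim h'
  rcases h with ⟨he, -, rfl⟩ | ⟨he, -, rfl⟩ <;> rcases h' with ⟨he', -, rfl⟩ | ⟨he', -, rfl⟩ <;>
    simp_all

theorem step_ok {σ τ : ℕ × ℕ × Bool} (h : D.Step σ τ) (hσ : D.Ok σ) : D.Ok τ := by
  obtain ⟨i, j, d⟩ := σ
  obtain ⟨h1, h2, h3⟩ := step_elim h
  obtain ⟨-, -, hseg⟩ := hσ
  rcases h3 with ⟨he, hj, rfl⟩ | ⟨he, hi, rfl⟩
  · refine ⟨h1, hj, ?_⟩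
    have hwest : (D.tile i (j + 1)).west = true := by
      rw [← D.hmatch i j h1 hj]
      cases d <;> revert hseg he <;> cases hD : D.tile i j <;>
        simp [Tile.exitEast, Tile.south, Tile.west, Tile.east]
    simpa using hwest
  · refine ⟨by omega, h2, ?_⟩
    have hsouth : (D.tile (i - 1) j).south = true := by
      have hv := D.vmatch (i - 1) j (by omega) h2
      rw [show i - 1 + 1 = i by omega] at hv
      rw [hv]
      cases d <;> revert hseg he <;> cases hD : D.tile i j <;>
        simp [Tile.exitEast, Tile.south, Tile.west, Tile.north]
    simpa using hsouth

theorem rtg_ok {σ τ : ℕ × ℕ × Bool} (h : Relation.ReflTransGen D.Step σ τ) (hσ : D.Ok σ) :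
    D.Ok τ := by
  induction h with
  | refl => exact hσ
  | tail _ hstep ih => exact step_ok hstep ih

/-- From any valid state there is a step, or the state is an exit state. -/
theorem step_or_exit {σ : ℕ × ℕ × Bool} (hσ : D.Ok σ) :
    (∃ τ, D.Step σ τ) ∨ (σ.2.1 = n - 1 ∧ (D.tile σ.1 σ.2.1).exitEast σ.2.2 = true) := by
  obtain ⟨i, j, d⟩ := σ
  obtain ⟨h1, h2, hseg⟩ := hσ
  replace h1 : i < n := h1
  replace h2 : j < n := h2
  replace hseg : (cond d (D.tile i j).south (D.tile i j).west) = true := hseg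
  by_cases he : (D.tile i j).exitEast d = true
  · by_cases hj : j + 1 < n
    · exact Or.inl ⟨_, step_east h1 h2 he hj⟩
    · exact Or.inr ⟨(by omega : j = n - 1), he⟩
  · rw [Bool.not_eq_true] at he
    left
    refine ⟨_, step_north h1 h2 he ?_⟩
    by_contra hi
    have hi0 : i = 0 := by omega
    subst hi0
    have htop := D.top j h2
    revert hseg he htop
    cases d <;> cases hD : D.tile 0 j <;>
      simp [Tile.exitEast, Tile.south, Tile.west, Tile.north]

theorem exit_no_step {i : ℕ} {d : Bool} {τ : ℕ × ℕ × Bool}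
    (he : (D.tile i (n - 1)).exitEast d = true) (hn : 0 < n) :
    ¬ D.Step (i, n - 1, d) τ := by
  intro h
  obtain ⟨-, -, h3⟩ := step_elim h
  rcases h3 with ⟨-, hj, -⟩ | ⟨he', -, -⟩
  · omega
  · rw [he] at he'; exact Bool.noConfusion he'

/-- Every valid state eventually reaches an exit state. -/
theorem reaches_exit {σ : ℕ × ℕ × Bool} (hσ : D.Ok σ) :
    ∃ x d, Relation.ReflTransGen D.Step σ (x, n - 1, d) ∧
      (D.tile x (n - 1)).exitEast d = true := by
  obtain ⟨i, j, d⟩ := σ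
  suffices H : ∀ M i j d, i + (n - j) = M → D.Ok ((i, j, d) : ℕ × ℕ × Bool) →
      ∃ x dd, Relation.ReflTransGen D.Step (i, j, d) (x, n - 1, dd) ∧
        (D.tile x (n - 1)).exitEast dd = true by
    exact H _ i j d rfl hσ
  intro M
  induction M using Nat.strong_induction_on with
  | _ M ih =>
    intro i j d hM hok
    rcases step_or_exit hok with ⟨τ, hstep⟩ | ⟨hj, he⟩
    · obtain ⟨h1, h2, h3⟩ := step_elim hstep
      rcases h3 with ⟨-, hj1, rfl⟩ | ⟨-, hi0, rfl⟩
      · obtain ⟨x, dd, hr, hee⟩ :=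
          ih (i + (n - (j + 1))) (by omega) i (j + 1) false rfl (Diagram.step_ok hstep hok)
        exact ⟨x, dd, Relation.ReflTransGen.head hstep hr, hee⟩
      · obtain ⟨x, dd, hr, hee⟩ :=
          ih ((i - 1) + (n - j)) (by omega) (i - 1) j true rfl (Diagram.step_ok hstep hok)
        exact ⟨x, dd, Relation.ReflTransGen.head hstep hr, hee⟩
    · have hj' : j = n - 1 := hj
      subst hj'
      exact ⟨i, d, Relation.ReflTransGen.refl, he⟩

/-- For a deterministic relation, two reachable states are comparable. -/
theorem rtg_comparable {σ a b : ℕ × ℕ × Bool} (ha : Relation.ReflTransGen D.Step σ a)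
    (hb : Relation.ReflTransGen D.Step σ b) :
    Relation.ReflTransGen D.Step a b ∨ Relation.ReflTransGen D.Step b a := by
  induction ha using Relation.ReflTransGen.head_induction_on with
  | refl => exact Or.inl hb
  | head hstep _ ih =>
    rcases Relation.ReflTransGen.cases_head hb with rfl | ⟨c, hc, hcb⟩
    · exact Or.inr (Relation.ReflTransGen.head hstep (by assumption))
    · rw [step_det_s4 hstep hc] at *
      exact ih hcb

theorem exitsAt_pos {y x : ℕ} (h : D.ExitsAt y x) : 0 < n := by
  obtain ⟨d, hr, he⟩ := h
  by_contra hn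
  have h0 : n = 0 := by omega
  subst h0
  rcases Relation.ReflTransGen.cases_head hr with heq | ⟨c, hc, -⟩
  · have hd : true = d := congrArg (fun p => p.2.2) heq
    have hb : D.tile x (0 - 1) = Tile.blank := D.outside _ _ (by omega)
    rw [hb, ← hd] at he
    simp [Tile.exitEast] at he
  · obtain ⟨-, h2, -⟩ := step_elim hc
    omega

theorem exitsAt_unique_s4 {y x1 x2 : ℕ} (h1 : D.ExitsAt y x1) (h2 : D.ExitsAt y x2) : x1 = x2 := by
  have hn : 0 < n := exitsAt_pos h1
  obtain ⟨d1, hr1, he1⟩ := h1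
  obtain ⟨d2, hr2, he2⟩ := h2
  rcases rtg_comparable hr1 hr2 with h | h <;>
    rcases Relation.ReflTransGen.cases_head h with heq | ⟨c, hc, -⟩
  · exact congrArg (fun p => p.1) heq
  · exact absurd hc (exit_no_step he1 hn)
  · exact (congrArg (fun p => p.1) heq).symm
  · exact absurd hc (exit_no_step he2 hn)

theorem exitsAt_lt {y x : ℕ} (h : D.ExitsAt y x) : y < n ∧ x < n := by
  have hn : 0 < n := exitsAt_pos h
  obtain ⟨d, hr, he⟩ := h
  rcases Relation.ReflTransGen.cases_head hr with heq | ⟨c, hc, hcb⟩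
  · have hy : y = n - 1 := congrArg (fun p => p.2.1) heq
    have hx : n - 1 = x := congrArg (fun p => p.1) heq
    omega
  · obtain ⟨-, hy, -⟩ := step_elim hc
    have hok : D.Ok ((n - 1, y, true) : ℕ × ℕ × Bool) := ⟨by omega, hy, by simpa using D.bottom y hy⟩
    have := rtg_ok hr hok
    exact ⟨hy, this.1⟩

theorem exitsAt_exists {y : ℕ} (hy : y < n) (hn : 0 < n) : ∃ x, D.ExitsAt y x := by
  have hok : D.Ok ((n - 1, y, true) : ℕ × ℕ × Bool) := ⟨by omega, hy, by simpa using D.bottom y hy⟩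
  obtain ⟨x, d, hr, he⟩ := reaches_exit hok
  exact ⟨x, d, hr, he⟩

theorem hasPerm_exitsAt {w : Equiv.Perm (Fin n)} (hw : D.HasPerm w) {y x : ℕ}
    (h : D.ExitsAt y x) : ∃ X : Fin n, (X : ℕ) = x ∧ (w X : ℕ) = y := by
  obtain ⟨hy, hx⟩ := exitsAt_lt h
  set X : Fin n := ⟨x, hx⟩
  set Y : Fin n := ⟨y, hy⟩
  have h2 : D.ExitsAt (w (w.symm Y) : ℕ) ((w.symm Y : Fin n) : ℕ) := hw (w.symm Y)
  rw [Equiv.apply_symm_apply] at h2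
  have hs : ((w.symm Y : Fin n) : ℕ) = x := exitsAt_unique_s4 h2 h
  refine ⟨X, rfl, ?_⟩
  have : w.symm Y = X := Fin.ext hs
  rw [← this, Equiv.apply_symm_apply]

end Diagram
namespace BPD

variable {n : ℕ} {B : BPD n}

/-- Leftmost end of a horizontal segment is an r-elbow. -/
theorem west_relbow : ∀ j i, (B.tile i j).west = true → ∃ j0, j0 < j ∧ B.tile i j0 = Tile.relbow := by
  intro j
  induction j with
  | zero =>
    intro i hw
    by_cases hi : i < n
    · by_cases hj : (0 : ℕ) < n
      · rw [B.left i hi] at hw; exact Bool.noConfusion hw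
      · rw [B.outside i 0 (by omega)] at hw; exact Bool.noConfusion hw
    · rw [B.outside i 0 (by omega)] at hw; exact Bool.noConfusion hw
  | succ j ih =>
    intro i hw
    by_cases hi : i < n
    · by_cases hj : j + 1 < n
      · have he : (B.tile i j).east = true := by rw [B.hmatch i j hi hj]; exact hw
        have hnb := B.nobump i j
        rcases hD : B.tile i j with _ | _ | _ | _ | _ | _ | _ <;> rw [hD] at he hnb <;>
          first
          | exact absurd rfl hnb
          | exact Bool.noConfusion he
          | exact ⟨j, Nat.lt_succ_self j, hD⟩
          | · obtain ⟨j0, hj0, hrel⟩ := ih i (by rw [hD]; rfl)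
              exact ⟨j0, by omega, hrel⟩
      · rw [B.outside i (j+1) (by omega)] at hw; exact Bool.noConfusion hw
    · rw [B.outside i (j+1) (by omega)] at hw; exact Bool.noConfusion hw

/-- Top end of a vertical segment is an r-elbow. -/
theorem north_relbow : ∀ i j, (B.tile i j).north = true → ∃ i0, i0 < i ∧ B.tile i0 j = Tile.relbow := by
  intro i
  induction i with
  | zero =>
    intro j hw
    by_cases hj : j < n
    · by_cases hi : (0 : ℕ) < n
      · rw [B.top j hj] at hw; exact Bool.noConfusion hw
      · rw [B.outside 0 j (by omega)] at hw; exact Bool.noConfusion hw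
    · rw [B.outside 0 j (by omega)] at hw; exact Bool.noConfusion hw
  | succ i ih =>
    intro j hw
    by_cases hj : j < n
    · by_cases hi : i + 1 < n
      · have he : (B.tile i j).south = true := by rw [B.vmatch i j hi hj]; exact hw
        have hnb := B.nobump i j
        rcases hD : B.tile i j with _ | _ | _ | _ | _ | _ | _ <;> rw [hD] at he hnb <;>
          first
          | exact absurd rfl hnb
          | exact Bool.noConfusion he
          | exact ⟨i, Nat.lt_succ_self i, hD⟩
          | · obtain ⟨i0, hi0, hrel⟩ := ih j (by rw [hD]; rfl)
              exact ⟨i0, by omega, hrel⟩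
      · rw [B.outside (i+1) j (by omega)] at hw; exact Bool.noConfusion hw
    · rw [B.outside (i+1) j (by omega)] at hw; exact Bool.noConfusion hw

set_option linter.unusedSectionVars false

section Hook

variable {x y : ℕ} (hx : x < n) (hy : y < n) (hrel : B.tile x y = Tile.relbow)
  (hrow : ∀ j, j ≠ y → B.tile x j ≠ Tile.relbow)
  (hcol : ∀ i, i ≠ x → B.tile i y ≠ Tile.relbow)

include hx hy hrel hrow hcol

theorem rowRight : ∀ j, y ≤ j → j < n → (B.tile x j).east = true := by
  suffices H : ∀ K j, n - 1 - j = K → y ≤ j → j < n → (B.tile x j).east = true by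
    intro j h1 h2; exact H _ j rfl h1 h2
  intro K
  induction K with
  | zero =>
    intro j hK h1 h2
    have hj : j = n - 1 := by omega
    subst hj
    exact B.right x hx
  | succ K ih =>
    intro j hK h1 h2
    have hj1 : j + 1 < n := by omega
    have he1 : (B.tile x (j + 1)).east = true := ih (j + 1) (by omega) (by omega) hj1
    have hnb := B.nobump x (j + 1)
    have hnr : B.tile x (j + 1) ≠ Tile.relbow := hrow (j + 1) (by omega)
    have hw : (B.tile x (j + 1)).west = true := by
      rcases hD : B.tile x (j + 1) with _ | _ | _ | _ | _ | _ | _ <;> rw [hD] at he1 hnb hnr <;>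
        first
        | exact absurd rfl hnb
        | exact absurd rfl hnr
        | exact Bool.noConfusion he1
        | rfl
    rw [B.hmatch x j hx hj1]
    exact hw

theorem rowClassLeft : ∀ j, j < y → B.tile x j = Tile.blank ∨ B.tile x j = Tile.vert := by
  intro j hj
  have hjn : j < n := by omega
  have hwf : (B.tile x j).west = false := by
    by_contra hw
    rw [Bool.not_eq_false] at hw
    obtain ⟨j0, hj0, hr0⟩ := west_relbow j x hw
    exact hrow j0 (by omega) hr0
  have hef : (B.tile x j).east = false := by
    by_contra he
    rw [Bool.not_eq_false] at he
    have hw1 : (B.tile x (j + 1)).west = true := by rw [← B.hmatch x j hx (by omega)]; exact he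
    obtain ⟨j0, hj0, hr0⟩ := west_relbow (j + 1) x hw1
    exact hrow j0 (by omega) hr0
  have hnb := B.nobump x j
  rcases hD : B.tile x j with _ | _ | _ | _ | _ | _ | _ <;> rw [hD] at hwf hef hnb <;>
    first
    | exact Or.inl rfl
    | exact Or.inr rfl
    | exact absurd rfl hnb
    | exact Bool.noConfusion hwf
    | exact Bool.noConfusion hef

theorem rowClassRight : ∀ j, y < j → j < n → B.tile x j = Tile.horiz ∨ B.tile x j = Tile.cross := by
  intro j hj hjn
  have he : (B.tile x j).east = true := rowRight hx hy hrel hrow hcol j (by omega) hjn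
  have hw : (B.tile x j).west = true := by
    have h2 := B.hmatch x (j - 1) hx (by omega : j - 1 + 1 < n)
    rw [show j - 1 + 1 = j by omega] at h2
    rw [← h2]
    exact rowRight hx hy hrel hrow hcol (j - 1) (by omega) (by omega)
  have hnb := B.nobump x j
  have hnr : B.tile x j ≠ Tile.relbow := hrow j (by omega)
  rcases hD : B.tile x j with _ | _ | _ | _ | _ | _ | _ <;> rw [hD] at he hw hnb hnr <;>
    first
    | exact Or.inl rfl
    | exact Or.inr rfl
    | exact absurd rfl hnb
    | exact absurd rfl hnr
    | exact Bool.noConfusion hw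
    | exact Bool.noConfusion he

theorem rowNS : ∀ j, j ≠ y → (B.tile x j).north = (B.tile x j).south := by
  intro j hj
  by_cases hjn : j < n
  · rcases Nat.lt_or_ge j y with h | h
    · rcases rowClassLeft hx hy hrel hrow hcol j h with hD | hD <;> rw [hD] <;> rfl
    · rcases rowClassRight hx hy hrel hrow hcol j (by omega) hjn with hD | hD <;> rw [hD] <;> rfl
  · rw [B.outside x j (by omega)]; rfl

theorem colDown : ∀ i, x ≤ i → i < n → (B.tile i y).south = true := by
  suffices H : ∀ K i, n - 1 - i = K → x ≤ i → i < n → (B.tile i y).south = true by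
    intro i h1 h2; exact H _ i rfl h1 h2
  intro K
  induction K with
  | zero =>
    intro i hK h1 h2
    have hi : i = n - 1 := by omega
    subst hi
    exact B.bottom y hy
  | succ K ih =>
    intro i hK h1 h2
    have hi1 : i + 1 < n := by omega
    have he1 : (B.tile (i + 1) y).south = true := ih (i + 1) (by omega) (by omega) hi1
    have hnb := B.nobump (i + 1) y
    have hnr : B.tile (i + 1) y ≠ Tile.relbow := hcol (i + 1) (by omega)
    have hw : (B.tile (i + 1) y).north = true := by
      rcases hD : B.tile (i + 1) y with _ | _ | _ | _ | _ | _ | _ <;> rw [hD] at he1 hnb hnr <;>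
        first
        | exact absurd rfl hnb
        | exact absurd rfl hnr
        | exact Bool.noConfusion he1
        | rfl
    rw [B.vmatch i y hi1 hy]
    exact hw

theorem colClassAbove : ∀ i, i < x → B.tile i y = Tile.blank ∨ B.tile i y = Tile.horiz := by
  intro i hi
  have hnf : (B.tile i y).north = false := by
    by_contra hw
    rw [Bool.not_eq_false] at hw
    obtain ⟨i0, hi0, hr0⟩ := north_relbow i y hw
    exact hcol i0 (by omega) hr0
  have hsf : (B.tile i y).south = false := by
    by_contra he
    rw [Bool.not_eq_false] at he
    have hw1 : (B.tile (i + 1) y).north = true := by rw [← B.vmatch i y (by omega) hy]; exact he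
    obtain ⟨i0, hi0, hr0⟩ := north_relbow (i + 1) y hw1
    exact hcol i0 (by omega) hr0
  have hnb := B.nobump i y
  rcases hD : B.tile i y with _ | _ | _ | _ | _ | _ | _ <;> rw [hD] at hnf hsf hnb <;>
    first
    | exact Or.inl rfl
    | exact Or.inr rfl
    | exact absurd rfl hnb
    | exact Bool.noConfusion hnf
    | exact Bool.noConfusion hsf

theorem colClassBelow : ∀ i, x < i → i < n → B.tile i y = Tile.vert ∨ B.tile i y = Tile.cross := by
  intro i hi hin
  have hs : (B.tile i y).south = true := colDown hx hy hrel hrow hcol i (by omega) hin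
  have hn : (B.tile i y).north = true := by
    have h2 := B.vmatch (i - 1) y (by omega : i - 1 + 1 < n) hy
    rw [show i - 1 + 1 = i by omega] at h2
    rw [← h2]
    exact colDown hx hy hrel hrow hcol (i - 1) (by omega) (by omega)
  have hnb := B.nobump i y
  have hnr : B.tile i y ≠ Tile.relbow := hcol i (by omega)
  rcases hD : B.tile i y with _ | _ | _ | _ | _ | _ | _ <;> rw [hD] at hs hn hnb hnr <;>
    first
    | exact Or.inl rfl
    | exact Or.inr rfl
    | exact absurd rfl hnb
    | exact absurd rfl hnr
    | exact Bool.noConfusion hs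
    | exact Bool.noConfusion hn

theorem colWE : ∀ i, i ≠ x → (B.tile i y).west = (B.tile i y).east := by
  intro i hi
  by_cases hin : i < n
  · rcases Nat.lt_or_ge i x with h | h
    · rcases colClassAbove hx hy hrel hrow hcol i h with hD | hD <;> rw [hD] <;> rfl
    · rcases colClassBelow hx hy hrel hrow hcol i (by omega) hin with hD | hD <;> rw [hD] <;> rfl
  · rw [B.outside i y (by omega)]; rfl

end Hook

end BPD
/-- Index shift skipping `a`. -/
def di (a k : ℕ) : ℕ := if k < a then k else k + 1

theorem di_strictMono (a : ℕ) : StrictMono (di a) := by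
  intro i j h
  unfold di
  split <;> split <;> omega

theorem di_inj {a i j : ℕ} (h : di a i = di a j) : i = j := by
  unfold di at h
  split at h <;> split at h <;> omega

theorem di_ne {a k : ℕ} : di a k ≠ a := by unfold di; split <;> omega

theorem di_lt {m a k : ℕ} (ha : a ≤ m) (hk : k < m) : di a k < m + 1 := by
  unfold di; split <;> omega

theorem di_ge {m a k : ℕ} (hk : m ≤ k) (ha : a ≤ m) : m + 1 ≤ di a k := by
  unfold di; split <;> omega

theorem di_surj {m a b : ℕ} (ha : a ≤ m) (hb : b < m + 1) (hba : b ≠ a) :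
    ∃ k, k < m ∧ di a k = b := by
  rcases Nat.lt_or_ge b a with h | h
  · exact ⟨b, by omega, if_pos h⟩
  · refine ⟨b - 1, by omega, ?_⟩
    unfold di
    rw [if_neg (by omega)]
    omega

namespace BPD

variable {m : ℕ} (B : BPD (m + 1)) {x y : ℕ}

section Del

variable (hx : x < m + 1) (hy : y < m + 1) (hrel : B.tile x y = Tile.relbow)
  (hrow : ∀ j, j ≠ y → B.tile x j ≠ Tile.relbow)
  (hcol : ∀ i, i ≠ x → B.tile i y ≠ Tile.relbow)

/-- Tiles of the deleted BPD. -/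
def delTile (B : BPD (m + 1)) (x y : ℕ) (i j : ℕ) : Tile := B.tile (di x i) (di y j)

theorem delTile_eq (B : BPD (m + 1)) (x y i j : ℕ) :
    delTile B x y i j = B.tile (di x i) (di y j) := rfl

/-- The BPD obtained by deleting row `x` and column `y`. -/
def del : BPD m where
  tile := delTile B x y
  vmatch i j hi hj := by
    simp only [delTile_eq]
    have hyj : di y j ≠ y := di_ne
    have hjn : di y j < m + 1 := di_lt (by omega) (by omega)
    rcases Nat.lt_trichotomy (i + 1) x with h | h | h
    · rw [show di x i = i from if_pos (by omega), show di x (i + 1) = i + 1 from if_pos h]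
      exact B.vmatch i (di y j) (by omega) hjn
    · rw [show di x i = i from if_pos (by omega), show di x (i + 1) = i + 2 from if_neg (by omega)]
      have e1 := B.vmatch i (di y j) (by omega) hjn
      have e2 : (B.tile (i + 1) (di y j)).north = (B.tile (i + 1) (di y j)).south := by
        rw [h]; exact rowNS (by omega) hy hrel hrow hcol (di y j) hyj
      have e3 := B.vmatch (i + 1) (di y j) (by omega) hjn
      rw [e1, e2, e3]
    · rw [show di x i = i + 1 from if_neg (by omega), show di x (i + 1) = i + 2 from if_neg (by omega)]
      exact B.vmatch (i + 1) (di y j) (by omega) hjn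
  hmatch i j hi hj := by
    simp only [delTile_eq]
    have hxi : di x i ≠ x := di_ne
    have hin : di x i < m + 1 := di_lt (by omega) (by omega)
    rcases Nat.lt_trichotomy (j + 1) y with h | h | h
    · rw [show di y j = j from if_pos (by omega), show di y (j + 1) = j + 1 from if_pos h]
      exact B.hmatch (di x i) j hin (by omega)
    · rw [show di y j = j from if_pos (by omega), show di y (j + 1) = j + 2 from if_neg (by omega)]
      have e1 := B.hmatch (di x i) j hin (by omega)
      have e2 : (B.tile (di x i) (j + 1)).west = (B.tile (di x i) (j + 1)).east := by
        rw [h]; exact colWE hx (by omega) hrel hrow hcol (di x i) hxi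
      have e3 := B.hmatch (di x i) (j + 1) hin (by omega)
      rw [e1, e2, e3]
    · rw [show di y j = j + 1 from if_neg (by omega), show di y (j + 1) = j + 2 from if_neg (by omega)]
      exact B.hmatch (di x i) (j + 1) hin (by omega)
  bottom j hj := by
    simp only [delTile_eq]
    have hyj : di y j ≠ y := di_ne
    have hjn : di y j < m + 1 := di_lt (by omega) (by omega)
    rcases Nat.lt_or_ge (m - 1) x with h | h
    · -- x = m
      have hxm : x = m := by omega
      rw [show di x (m - 1) = m - 1 from if_pos (by omega)]
      have e1 := B.vmatch (m - 1) (di y j) (by omega) hjn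
      have e2 : (B.tile m (di y j)).north = (B.tile m (di y j)).south := by
        have h2 := rowNS (by omega : x < m + 1) hy hrel hrow hcol (di y j) hyj
        rwa [hxm] at h2
      have e3 : (B.tile m (di y j)).south = true := by simpa using B.bottom (di y j) hjn
      rw [show m - 1 + 1 = m by omega] at e1
      rw [e1, e2, e3]
    · rw [show di x (m - 1) = m from by unfold di; split <;> omega]
      exact B.bottom (di y j) hjn
  right i hi := by
    simp only [delTile_eq]
    have hxi : di x i ≠ x := di_ne
    have hin : di x i < m + 1 := di_lt (by omega) (by omega)
    rcases Nat.lt_or_ge (m - 1) y with h | h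
    · have hym : y = m := by omega
      rw [show di y (m - 1) = m - 1 from if_pos (by omega)]
      have e1 := B.hmatch (di x i) (m - 1) hin (by omega)
      have e2 : (B.tile (di x i) m).west = (B.tile (di x i) m).east := by
        have h2 := colWE hx (by omega : y < m + 1) hrel hrow hcol (di x i) hxi
        rwa [hym] at h2
      have e3 : (B.tile (di x i) m).east = true := by simpa using B.right (di x i) hin
      rw [show m - 1 + 1 = m by omega] at e1
      rw [← e3, ← e2, ← e1]
    · rw [show di y (m - 1) = m from by unfold di; split <;> omega]
      exact B.right (di x i) hin
  top j hj := by
    simp only [delTile_eq]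
    have hyj : di y j ≠ y := di_ne
    have hjn : di y j < m + 1 := di_lt (by omega) (by omega)
    rcases Nat.eq_zero_or_pos x with h | h
    · rw [show di x 0 = 1 from by unfold di; split <;> omega]
      have e1 := B.vmatch 0 (di y j) (by omega) hjn
      have e2 : (B.tile 0 (di y j)).north = (B.tile 0 (di y j)).south := by
        rw [← h]; exact rowNS (by omega) hy hrel hrow hcol (di y j) hyj
      have e3 := B.top (di y j) hjn
      rw [← e1, ← e2, e3]
    · rw [show di x 0 = 0 from if_pos h]
      exact B.top (di y j) hjn
  left i hi := by
    simp only [delTile_eq]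
    have hxi : di x i ≠ x := di_ne
    have hin : di x i < m + 1 := di_lt (by omega) (by omega)
    rcases Nat.eq_zero_or_pos y with h | h
    · rw [show di y 0 = 1 from by unfold di; split <;> omega]
      have e1 := B.hmatch (di x i) 0 hin (by omega)
      have e2 : (B.tile (di x i) 0).west = (B.tile (di x i) 0).east := by
        rw [← h]; exact colWE hx (by omega) hrel hrow hcol (di x i) hxi
      have e3 := B.left (di x i) hin
      rw [← e1, ← e2, e3]
    · rw [show di y 0 = 0 from if_pos h]
      exact B.left (di x i) hin
  outside i j hij := by
    simp only [delTile_eq]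
    apply B.outside
    intro ⟨h1, h2⟩
    apply hij
    constructor
    · by_contra h
      have := di_ge (a := x) (by omega : m ≤ i) (by omega)
      omega
    · by_contra h
      have := di_ge (a := y) (by omega : m ≤ j) (by omega)
      omega
  nobump i j := B.nobump _ _

end Del

end BPD
namespace BPD

variable {m : ℕ} {B : BPD (m + 1)} {x y : ℕ}
  (hx : x < m + 1) (hy : y < m + 1) (hrel : B.tile x y = Tile.relbow)
  (hrow : ∀ j, j ≠ y → B.tile x j ≠ Tile.relbow)
  (hcol : ∀ i, i ≠ x → B.tile i y ≠ Tile.relbow)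

include hx hy hrel hrow hcol

/-- Crossing the deleted column: tiles in column `y` let pipes through eastwards. -/
theorem col_exitEast {i : ℕ} (hi : i ≠ x) (hin : i < m + 1) :
    (B.tile i y).exitEast false = true := by
  rcases Nat.lt_or_ge i x with h | h
  · rcases colClassAbove hx hy hrel hrow hcol i h with hD | hD <;> rw [hD] <;> rfl
  · rcases colClassBelow hx hy hrel hrow hcol i (by omega) hin with hD | hD <;> rw [hD] <;> rfl

/-- Crossing the deleted row: tiles in row `x` let pipes through northwards. -/
theorem row_exitNorth {j : ℕ} (hj : j ≠ y) (hjn : j < m + 1) :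
    (B.tile x j).exitEast true = false := by
  rcases Nat.lt_or_ge j y with h | h
  · rcases rowClassLeft hx hy hrel hrow hcol j h with hD | hD <;> rw [hD] <;> rfl
  · rcases rowClassRight hx hy hrel hrow hcol j (by omega) hjn with hD | hD <;> rw [hD] <;> rfl

theorem del_step {τ τ' : ℕ × ℕ × Bool}
    (h : (del B hx hy hrel hrow hcol).toDiagram.Step τ τ') :
    Relation.ReflTransGen B.toDiagram.Step
      (di x τ.1, di y τ.2.1, τ.2.2) (di x τ'.1, di y τ'.2.1, τ'.2.2) := by
  obtain ⟨i, j, d⟩ := τ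
  obtain ⟨hi, hj, hcase⟩ := Diagram.step_elim h
  have htile : (del B hx hy hrel hrow hcol).toDiagram.tile i j = B.tile (di x i) (di y j) := rfl
  have hI : di x i < m + 1 := di_lt (by omega) hi
  have hJ : di y j < m + 1 := di_lt (by omega) hj
  rcases hcase with ⟨he, hj1, rfl⟩ | ⟨he, hi0, rfl⟩
  · rw [htile] at he
    rcases Nat.lt_trichotomy (j + 1) y with hc | hc | hc
    · have d1 : di y j = j := if_pos (by omega)
      have d2 : di y (j + 1) = j + 1 := if_pos hc
      rw [d1, d2]
      rw [d1] at he
      exact Relation.ReflTransGen.single (Diagram.step_east hI (by omega) he (by omega))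
    · have d1 : di y j = j := if_pos (by omega)
      have d2 : di y (j + 1) = j + 2 := if_neg (by omega)
      rw [d1, d2]
      rw [d1] at he
      have s1 : B.toDiagram.Step (di x i, j, d) (di x i, j + 1, false) :=
        Diagram.step_east hI (by omega) he (by omega)
      have s2 : B.toDiagram.Step (di x i, j + 1, false) (di x i, j + 2, false) := by
        have := Diagram.step_east (D := B.toDiagram) hI (by omega : j + 1 < m + 1)
          (by rw [hc]; exact col_exitEast hx hy hrel hrow hcol di_ne hI) (by omega)
        exact this
      exact Relation.ReflTransGen.head s1 (Relation.ReflTransGen.single s2)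
    · have d1 : di y j = j + 1 := if_neg (by omega)
      have d2 : di y (j + 1) = j + 2 := if_neg (by omega)
      rw [d1, d2]
      rw [d1] at he
      exact Relation.ReflTransGen.single (Diagram.step_east hI (by omega) he (by omega))
  · rw [htile] at he
    rcases Nat.lt_trichotomy i x with hc | hc | hc
    · have d1 : di x i = i := if_pos hc
      have d2 : di x (i - 1) = i - 1 := if_pos (by omega)
      rw [d1, d2]
      rw [d1] at he
      exact Relation.ReflTransGen.single (Diagram.step_north (by omega) hJ he hi0)
    · have d1 : di x i = i + 1 := if_neg (by omega)
      have d2 : di x (i - 1) = i - 1 := if_pos (by omega)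
      rw [d1, d2]
      rw [d1] at he
      have s1 : B.toDiagram.Step (i + 1, di y j, d) (i, di y j, true) := by
        have := Diagram.step_north (D := B.toDiagram) (by omega : i + 1 < m + 1) hJ he (by omega)
        simpa using this
      have s2 : B.toDiagram.Step (i, di y j, true) (i - 1, di y j, true) := by
        have := Diagram.step_north (D := B.toDiagram) (by omega : i < m + 1) hJ
          (by rw [hc]; exact row_exitNorth hx hy hrel hrow hcol di_ne hJ) (by omega)
        exact this
      exact Relation.ReflTransGen.head s1 (Relation.ReflTransGen.single s2)
    · have d1 : di x i = i + 1 := if_neg (by omega)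
      have d2 : di x (i - 1) = i := by unfold di; split <;> omega
      rw [d1, d2]
      rw [d1] at he
      have s1 := Diagram.step_north (D := B.toDiagram) (by omega : i + 1 < m + 1) hJ he (by omega)
      exact Relation.ReflTransGen.single (by simpa using s1)

theorem del_rtg {τ τ' : ℕ × ℕ × Bool}
    (h : Relation.ReflTransGen (del B hx hy hrel hrow hcol).toDiagram.Step τ τ') :
    Relation.ReflTransGen B.toDiagram.Step
      (di x τ.1, di y τ.2.1, τ.2.2) (di x τ'.1, di y τ'.2.1, τ'.2.2) := by
  induction h with
  | refl => exact Relation.ReflTransGen.refl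
  | tail _ hstep ih => exact ih.trans (del_step hx hy hrel hrow hcol hstep)

/-- Start connector: the bottom of column `di y j0` in `B` reaches the image of the
bottom of column `j0` in the deleted BPD. -/
theorem del_start {j0 : ℕ} (hj0 : j0 < m) :
    Relation.ReflTransGen B.toDiagram.Step (m, di y j0, true)
      (di x (m - 1), di y j0, true) := by
  have hJ : di y j0 < m + 1 := di_lt (by omega) hj0
  rcases Nat.lt_or_ge x m with h | h
  · rw [show di x (m - 1) = m from by unfold di; split <;> omega]
  · have hxm : x = m := by omega
    rw [show di x (m - 1) = m - 1 from if_pos (by omega)]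
    refine Relation.ReflTransGen.single (Diagram.step_north (by omega) hJ ?_ (by omega))
    rw [hxm] at hrel hrow hcol
    exact row_exitNorth (by omega) hy hrel hrow hcol di_ne hJ

theorem del_passes {j0 : ℕ} (hj0 : j0 < m) {c : ℕ × ℕ}
    (h : (del B hx hy hrel hrow hcol).toDiagram.Passes j0 c) :
    B.toDiagram.Passes (di y j0) (di x c.1, di y c.2) := by
  obtain ⟨d, hr⟩ := h
  refine ⟨d, ?_⟩
  have h1 := del_start hx hy hrel hrow hcol (B := B) hj0
  have h2 := del_rtg hx hy hrel hrow hcol hr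
  exact (show Relation.ReflTransGen B.toDiagram.Step (m + 1 - 1, di y j0, true) _ from h1).trans h2

theorem del_exitsAt {j0 e : ℕ} (h : (del B hx hy hrel hrow hcol).toDiagram.ExitsAt j0 e) :
    B.toDiagram.ExitsAt (di y j0) (di x e) := by
  have hlt := Diagram.exitsAt_lt h
  obtain ⟨hj0, he'⟩ := hlt
  obtain ⟨d, hr, hex⟩ := h
  have h1 := del_start hx hy hrel hrow hcol (B := B) hj0
  have h2 := del_rtg hx hy hrel hrow hcol hr
  have hE : di x e < m + 1 := di_lt (by omega) he'
  have htile : (del B hx hy hrel hrow hcol).toDiagram.tile e (m - 1)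
      = B.tile (di x e) (di y (m - 1)) := rfl
  rw [htile] at hex
  have hbase : Relation.ReflTransGen B.toDiagram.Step (m + 1 - 1, di y j0, true)
      (di x e, di y (m - 1), d) := (show Relation.ReflTransGen B.toDiagram.Step
        (m + 1 - 1, di y j0, true) _ from h1).trans h2
  rcases Nat.lt_or_ge y m with hym | hym
  · rw [show di y (m - 1) = m from by unfold di; split <;> omega] at hbase hex
    exact ⟨d, hbase, hex⟩
  · have hyy : y = m := by omega
    rw [show di y (m - 1) = m - 1 from if_pos (by omega)] at hbase hex
    refine ⟨false, hbase.tail ?_, ?_⟩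
    · have := Diagram.step_east (D := B.toDiagram) hE (by omega : m - 1 < m + 1) hex
        (by omega : m - 1 + 1 < m + 1)
      rw [show m - 1 + 1 = m from by omega] at this
      exact this
    · have : B.tile (di x e) m = B.tile (di x e) y := by rw [hyy]
      rw [show m + 1 - 1 = m from rfl, this]
      exact col_exitEast hx hy hrel hrow hcol di_ne hE

end BPD
theorem coe_succAbove {m : ℕ} (p : Fin (m + 1)) (i : Fin m) :
    ((p.succAbove i : Fin (m + 1)) : ℕ) = di (p : ℕ) (i : ℕ) := by
  unfold di
  rcases Nat.lt_or_ge (i : ℕ) (p : ℕ) with h | h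
  · rw [if_pos h, Fin.succAbove, if_pos (by rwa [Fin.lt_def])]
    simp
  · rw [if_neg (by omega), Fin.succAbove, if_neg (by rw [Fin.lt_def]; simp; omega)]
    simp

/-- The permutation of `Fin m` obtained from `w` by deleting the point `X ↦ w X`. -/
noncomputable def removePoint {m : ℕ} (w : Equiv.Perm (Fin (m + 1))) (X : Fin (m + 1)) :
    Equiv.Perm (Fin m) :=
  Equiv.removeNone ((finSuccEquiv' X).symm.trans (w.trans (finSuccEquiv' (w X))))

theorem removePoint_spec {m : ℕ} (w : Equiv.Perm (Fin (m + 1))) (X : Fin (m + 1)) (k : Fin m) :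
    (w X).succAbove (removePoint w X k) = w (X.succAbove k) := by
  set e := (finSuccEquiv' X).symm.trans (w.trans (finSuccEquiv' (w X))) with he
  have h1 : e (some k) = finSuccEquiv' (w X) (w (X.succAbove k)) := by
    simp [he, Equiv.trans_apply, finSuccEquiv'_symm_some]
  have hne : w (X.succAbove k) ≠ w X := fun h => Fin.succAbove_ne X k (w.injective h)
  obtain ⟨z, hz⟩ := Fin.exists_succAbove_eq hne
  rw [← hz, finSuccEquiv'_succAbove] at h1
  have h2 : some (e.removeNone k) = e (some k) := Equiv.removeNone_some e ⟨z, h1⟩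
  rw [h1] at h2
  have h3 : e.removeNone k = z := Option.some_injective _ h2
  rw [show removePoint w X = e.removeNone from rfl, h3, hz]
namespace BPD

section Perm

variable {m : ℕ} {B : BPD (m + 1)} {w : Equiv.Perm (Fin (m + 1))} {X : Fin (m + 1)}
  (hw : B.toDiagram.HasPerm w)
  (hrel : B.tile ↑X ↑(w X) = Tile.relbow)
  (hrow : ∀ j, j ≠ ↑(w X) → B.tile ↑X j ≠ Tile.relbow)
  (hcol : ∀ i, i ≠ ↑X → B.tile i ↑(w X) ≠ Tile.relbow)

set_option linter.unusedSectionVars false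

include hw hrel hrow hcol

theorem del_hasPerm :
    (del B X.isLt (w X).isLt hrel hrow hcol).toDiagram.HasPerm (removePoint w X) := by
  intro k
  have hm : 0 < m := k.pos
  set y' : ℕ := ((removePoint w X k : Fin m) : ℕ) with hy'
  obtain ⟨e, hex⟩ := Diagram.exitsAt_exists (D := (del B X.isLt (w X).isLt hrel hrow hcol).toDiagram)
    (removePoint w X k).isLt hm
  have h2 := del_exitsAt X.isLt (w X).isLt hrel hrow hcol hex
  have hsp : di ↑(w X) y' = ((w (X.succAbove k) : Fin (m + 1)) : ℕ) := by
    rw [← coe_succAbove, removePoint_spec]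
  rw [hsp] at h2
  have h3 := hw (X.succAbove k)
  have h4 : di ↑X e = ((X.succAbove k : Fin (m + 1)) : ℕ) := Diagram.exitsAt_unique_s4 h2 h3
  rw [coe_succAbove] at h4
  have h5 : e = (k : ℕ) := di_inj h4
  rw [← h5]
  exact hex

theorem del_reduced (hred : B.toDiagram.Reduced) :
    (del B X.isLt (w X).isLt hrel hrow hcol).toDiagram.Reduced := by
  intro y1 y2 h1 h2 hne c hc c' hc'
  obtain ⟨hcr, hp1, hp2⟩ := hc
  obtain ⟨hcr', hp1', hp2'⟩ := hc'
  have hb : ∀ a b : ℕ, (del B X.isLt (w X).isLt hrel hrow hcol).toDiagram.tile a b = Tile.cross →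
      a < m ∧ b < m := by
    intro a b hab
    by_contra hcon
    have : ¬ (di (↑X) a < m + 1 ∧ di (↑(w X)) b < m + 1) := by
      intro ⟨u1, u2⟩
      apply hcon
      constructor
      · by_contra hh; have := di_ge (a := (X : ℕ)) (by omega : m ≤ a) (by omega); omega
      · by_contra hh; have := di_ge (a := ((w X : Fin (m + 1)) : ℕ)) (by omega : m ≤ b) (by omega)
        omega
    have hbl : (del B X.isLt (w X).isLt hrel hrow hcol).toDiagram.tile a b = Tile.blank :=
      B.outside _ _ this
    rw [hbl] at hab
    exact Tile.noConfusion hab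
  obtain ⟨hc1, hc2⟩ := hb c.1 c.2 hcr
  obtain ⟨hc1', hc2'⟩ := hb c'.1 c'.2 hcr'
  have m1 : (di ↑X c.1, di ↑(w X) c.2) ∈
      B.toDiagram.SharedCrossings (di ↑(w X) y1) (di ↑(w X) y2) := by
    refine ⟨hcr, ?_, ?_⟩
    · exact del_passes X.isLt (w X).isLt hrel hrow hcol h1 hp1
    · exact del_passes X.isLt (w X).isLt hrel hrow hcol h2 hp2
  have m2 : (di ↑X c'.1, di ↑(w X) c'.2) ∈
      B.toDiagram.SharedCrossings (di ↑(w X) y1) (di ↑(w X) y2) := by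
    refine ⟨hcr', ?_, ?_⟩
    · exact del_passes X.isLt (w X).isLt hrel hrow hcol h1 hp1'
    · exact del_passes X.isLt (w X).isLt hrel hrow hcol h2 hp2'
  have := hred (di ↑(w X) y1) (di ↑(w X) y2) (di_lt (by omega) h1) (di_lt (by omega) h2)
    (fun h => hne (di_inj h)) m1 m2
  have e1 : di ↑X c.1 = di ↑X c'.1 := congrArg Prod.fst this
  have e2 : di ↑(w X) c.2 = di ↑(w X) c'.2 := congrArg Prod.snd this
  exact Prod.ext (di_inj e1) (di_inj e2)

theorem rem_of_del_rem {y'' x'' : ℕ}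
    (h : (del B X.isLt (w X).isLt hrel hrow hcol).toDiagram.RemovablePipe y'' x'') :
    B.toDiagram.RemovablePipe (di ↑(w X) y'') (di ↑X x'') := by
  obtain ⟨hex, hrel'', hrow'', hcol''⟩ := h
  obtain ⟨hy'', hx''⟩ := Diagram.exitsAt_lt hex
  refine ⟨del_exitsAt X.isLt (w X).isLt hrel hrow hcol hex, hrel'', ?_, ?_⟩
  · intro j hj
    by_cases hjn : j < m + 1
    · by_cases hjy : j = ↑(w X)
      · subst hjy
        exact hcol (di ↑X x'') di_ne
      · obtain ⟨k, hk, hdk⟩ := di_surj (m := m) (by omega) hjn hjy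
        rw [← hdk]
        have hky : k ≠ y'' := fun hk2 => hj (by rw [← hdk, hk2])
        exact hrow'' k hky
    · rw [B.outside _ _ (by omega)]
      exact Tile.noConfusion
  · intro i hi
    by_cases hin : i < m + 1
    · by_cases hix : i = ↑X
      · subst hix
        exact hrow (di ↑(w X) y'') di_ne
      · obtain ⟨k, hk, hdk⟩ := di_surj (m := m) (by omega) hin hix
        rw [← hdk]
        refine hcol'' k fun hh => ?_
        apply hi
        rw [← hdk, hh]
    · rw [B.outside _ _ (by omega)]
      exact Tile.noConfusion

theorem del_rem_of_rem {k' : Fin m}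
    (h : B.toDiagram.RemovablePipe ↑(w (X.succAbove k')) ↑(X.succAbove k')) :
    (del B X.isLt (w X).isLt hrel hrow hcol).toDiagram.RemovablePipe
      ↑(removePoint w X k') ↑k' := by
  obtain ⟨-, hrel', hrow', hcol'⟩ := h
  refine ⟨del_hasPerm hw hrel hrow hcol k', ?_, ?_, ?_⟩
  · show B.tile (di ↑X ↑k') (di ↑(w X) ↑(removePoint w X k')) = Tile.relbow
    rw [← coe_succAbove, ← coe_succAbove, removePoint_spec]
    exact hrel'
  · intro j hj
    show B.tile (di ↑X ↑k') (di ↑(w X) j) ≠ Tile.relbow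
    rw [← coe_succAbove]
    refine hrow' (di ↑(w X) j) fun hh => hj ?_
    rw [← removePoint_spec, coe_succAbove] at hh
    exact di_inj hh
  · intro i hi
    show B.tile (di ↑X i) (di ↑(w X) ↑(removePoint w X k')) ≠ Tile.relbow
    rw [← coe_succAbove, removePoint_spec]
    refine hcol' (di ↑X i) fun hh => hi ?_
    rw [coe_succAbove] at hh
    exact di_inj hh

end Perm

end BPD
section TileEq

theorem tile_eq_of_south {t1 t2 : Tile} (c1 : t1 = Tile.blank ∨ t1 = Tile.vert)
    (c2 : t2 = Tile.blank ∨ t2 = Tile.vert) (h : t1.south = t2.south) : t1 = t2 := by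
  rcases c1 with rfl | rfl <;> rcases c2 with rfl | rfl <;> simp_all [Tile.south]

theorem tile_eq_of_north {t1 t2 : Tile} (c1 : t1 = Tile.horiz ∨ t1 = Tile.cross)
    (c2 : t2 = Tile.horiz ∨ t2 = Tile.cross) (h : t1.north = t2.north) : t1 = t2 := by
  rcases c1 with rfl | rfl <;> rcases c2 with rfl | rfl <;> simp_all [Tile.north]

theorem tile_eq_of_east {t1 t2 : Tile} (c1 : t1 = Tile.blank ∨ t1 = Tile.horiz)
    (c2 : t2 = Tile.blank ∨ t2 = Tile.horiz) (h : t1.east = t2.east) : t1 = t2 := by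
  rcases c1 with rfl | rfl <;> rcases c2 with rfl | rfl <;> simp_all [Tile.east]

theorem tile_eq_of_west {t1 t2 : Tile} (c1 : t1 = Tile.vert ∨ t1 = Tile.cross)
    (c2 : t2 = Tile.vert ∨ t2 = Tile.cross) (h : t1.west = t2.west) : t1 = t2 := by
  rcases c1 with rfl | rfl <;> rcases c2 with rfl | rfl <;> simp_all [Tile.west]

end TileEq

namespace BPD

theorem del_injective {m : ℕ} {B1 B2 : BPD (m + 1)} {x y : ℕ}
    (hx : x < m + 1) (hy : y < m + 1)
    (hrel1 : B1.tile x y = Tile.relbow)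
    (hrow1 : ∀ j, j ≠ y → B1.tile x j ≠ Tile.relbow)
    (hcol1 : ∀ i, i ≠ x → B1.tile i y ≠ Tile.relbow)
    (hrel2 : B2.tile x y = Tile.relbow)
    (hrow2 : ∀ j, j ≠ y → B2.tile x j ≠ Tile.relbow)
    (hcol2 : ∀ i, i ≠ x → B2.tile i y ≠ Tile.relbow)
    (h : del B1 hx hy hrel1 hrow1 hcol1 = del B2 hx hy hrel2 hrow2 hcol2) :
    B1 = B2 := by
  have htile : ∀ a b : ℕ, B1.tile (di x a) (di y b) = B2.tile (di x a) (di y b) := by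
    intro a b
    have := congrArg (fun Z : BPD m => Z.tile a b) h
    exact this
  -- off-hook equality
  have hoff : ∀ i j : ℕ, i ≠ x → j ≠ y → B1.tile i j = B2.tile i j := by
    intro i j hi hj
    by_cases hin : i < m + 1
    · by_cases hjn : j < m + 1
      · obtain ⟨a, -, ha⟩ := di_surj (m := m) (by omega) hin hi
        obtain ⟨b, -, hb⟩ := di_surj (m := m) (by omega) hjn hj
        rw [← ha, ← hb]
        exact htile a b
      · rw [B1.outside _ _ (by omega), B2.outside _ _ (by omega)]
    · rw [B1.outside _ _ (by omega), B2.outside _ _ (by omega)]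
  apply BPD.ext'_s4
  funext i j
  by_cases hin : i < m + 1
  · by_cases hjn : j < m + 1
    · by_cases hi : i = x
      · subst hi
        by_cases hj : j = y
        · subst hj; rw [hrel1, hrel2]
        · rcases Nat.lt_or_ge j y with hlt | hge
          · -- left of the elbow: blank or vert, determined by south
            refine tile_eq_of_south (rowClassLeft hx hy hrel1 hrow1 hcol1 j hlt)
              (rowClassLeft hx hy hrel2 hrow2 hcol2 j hlt) ?_
            rcases Nat.lt_or_ge (i + 1) (m + 1) with hi1 | hi1
            · rw [B1.vmatch i j hi1 hjn, B2.vmatch i j hi1 hjn,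
                hoff (i + 1) j (by omega) hj]
            · have him : i = m := by omega
              have b1 : (B1.tile m j).south = true := by simpa using B1.bottom j hjn
              have b2 : (B2.tile m j).south = true := by simpa using B2.bottom j hjn
              rw [him, b1, b2]
          · -- right of the elbow: horiz or cross, determined by north
            refine tile_eq_of_north (rowClassRight hx hy hrel1 hrow1 hcol1 j (by omega) hjn)
              (rowClassRight hx hy hrel2 hrow2 hcol2 j (by omega) hjn) ?_
            rcases Nat.eq_zero_or_pos i with hi0 | hi0
            · rw [hi0, B1.top j hjn, B2.top j hjn]
            · have e1 := B1.vmatch (i - 1) j (by omega) hjn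
              have e2 := B2.vmatch (i - 1) j (by omega) hjn
              rw [show i - 1 + 1 = i from by omega] at e1 e2
              rw [← e1, ← e2, hoff (i - 1) j (by omega) hj]
      · by_cases hj : j = y
        · subst hj
          rcases Nat.lt_or_ge i x with hlt | hge
          · -- above the elbow: blank or horiz, determined by east
            refine tile_eq_of_east (colClassAbove hx hy hrel1 hrow1 hcol1 i hlt)
              (colClassAbove hx hy hrel2 hrow2 hcol2 i hlt) ?_
            rcases Nat.lt_or_ge (j + 1) (m + 1) with hj1 | hj1
            · rw [B1.hmatch i j hin hj1, B2.hmatch i j hin hj1,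
                hoff i (j + 1) hi (by omega)]
            · have hjm : j = m := by omega
              have b1 : (B1.tile i m).east = true := by simpa using B1.right i hin
              have b2 : (B2.tile i m).east = true := by simpa using B2.right i hin
              rw [hjm, b1, b2]
          · -- below the elbow: vert or cross, determined by west
            refine tile_eq_of_west (colClassBelow hx hy hrel1 hrow1 hcol1 i (by omega) hin)
              (colClassBelow hx hy hrel2 hrow2 hcol2 i (by omega) hin) ?_
            rcases Nat.eq_zero_or_pos j with hj0 | hj0
            · rw [hj0, B1.left i hin, B2.left i hin]
            · have e1 := B1.hmatch i (j - 1) hin (by omega)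
              have e2 := B2.hmatch i (j - 1) hin (by omega)
              rw [show j - 1 + 1 = j from by omega] at e1 e2
              rw [← e1, ← e2, hoff i (j - 1) hi (by omega)]
        · exact hoff i j hi hj
    · rw [B1.outside _ _ (by omega), B2.outside _ _ (by omega)]
  · rw [B1.outside _ _ (by omega), B2.outside _ _ (by omega)]

end BPD
section SubPattern

theorem subPattern_coe {n : ℕ} (w : Equiv.Perm (Fin n)) (S : Finset (Fin n)) (i : Fin S.card) :
    ((S.image ⇑w).orderEmbOfFin (Finset.card_image_of_injective S w.injective)
        ((subPattern w S) i) : Fin n) = w (S.orderEmbOfFin rfl i) := by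
  have h1 : subPattern w S i = ((S.image ⇑w).orderIsoOfFin
      (Finset.card_image_of_injective S w.injective)).symm
      ⟨w (S.orderEmbOfFin rfl i), by
        rw [Finset.mem_image]
        exact ⟨_, Finset.orderEmbOfFin_mem S rfl i, rfl⟩⟩ := rfl
  rw [h1, ← Finset.coe_orderIsoOfFin_apply, OrderIso.apply_symm_apply]

theorem subPattern_lt_iff {n : ℕ} (w : Equiv.Perm (Fin n)) (S : Finset (Fin n)) (i j : Fin S.card) :
    (subPattern w S) i < (subPattern w S) j ↔
      w (S.orderEmbOfFin rfl i) < w (S.orderEmbOfFin rfl j) := by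
  rw [← subPattern_coe, ← subPattern_coe]
  exact (OrderEmbedding.lt_iff_lt _).symm

theorem perm_eq_of_lt_iff {M : ℕ} {u v : Equiv.Perm (Fin M)}
    (h : ∀ i j, u i < u j ↔ v i < v j) : u = v := by
  have hmono : StrictMono (fun a => u (v.symm a)) := by
    intro a b hab
    have : v (v.symm a) < v (v.symm b) := by
      rw [Equiv.apply_symm_apply, Equiv.apply_symm_apply]; exact hab
    exact (h _ _).mpr this
  have hid : (fun a => u (v.symm a)) = (id : Fin M → Fin M) := by
    apply (hmono.range_inj strictMono_id).mp
    rw [Set.range_id]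
    apply Set.eq_univ_of_forall
    intro a
    exact ⟨v (u.symm a), by simp⟩
  apply Equiv.ext
  intro b
  have := congrFun hid (v b)
  simpa using this

theorem eq_subPattern {n : ℕ} (w : Equiv.Perm (Fin n)) (S : Finset (Fin n))
    (u : Equiv.Perm (Fin S.card)) (g : Fin S.card → Fin n) (hg : StrictMono g)
    (hgS : ∀ i, g i ∈ S) (hcompat : ∀ i j, u i < u j ↔ w (g i) < w (g j)) :
    u = subPattern w S := by
  have hgeq : g = S.orderEmbOfFin rfl := Finset.orderEmbOfFin_unique rfl hgS hg
  apply perm_eq_of_lt_iff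
  intro i j
  rw [hcompat i j, subPattern_lt_iff, hgeq]

end SubPattern
section Assembly

/-- Reduced BPDs with permutation `w`. -/
abbrev bpdType (n : ℕ) (w : Equiv.Perm (Fin n)) :=
  {B : BPD n // B.toDiagram.HasPerm w ∧ B.toDiagram.Reduced}

/-- Minimal reduced BPDs with permutation `subPattern w S`. -/
abbrev mbpdType {n : ℕ} (w : Equiv.Perm (Fin n)) (S : Finset (Fin n)) :=
  {B : BPD S.card // B.toDiagram.HasPerm (subPattern w S) ∧ B.toDiagram.Reduced ∧
    B.toDiagram.Minimal}

theorem mbpd_inj_of_eq {n M : ℕ} (w : Equiv.Perm (Fin n)) (S : Finset (Fin n))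
    (u : Equiv.Perm (Fin M)) (h : S.card = M)
    (g : Fin M → Fin n) (hg : StrictMono g) (hgS : ∀ i, g i ∈ S)
    (hcompat : ∀ i j, u i < u j ↔ w (g i) < w (g j)) :
    ∃ T : {B : BPD M // B.toDiagram.HasPerm u ∧ B.toDiagram.Reduced ∧ B.toDiagram.Minimal} →
        mbpdType w S, Function.Injective T := by
  subst h
  have hu : u = subPattern w S := eq_subPattern w S u g hg hgS hcompat
  subst hu
  exact ⟨id, fun a b hab => hab⟩

noncomputable def transFun {n M : ℕ} (w : Equiv.Perm (Fin n)) (S : Finset (Fin n))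
    (u : Equiv.Perm (Fin M)) (h : S.card = M)
    (g : Fin M → Fin n) (hg : StrictMono g) (hgS : ∀ i, g i ∈ S)
    (hcompat : ∀ i j, u i < u j ↔ w (g i) < w (g j)) :
    {B : BPD M // B.toDiagram.HasPerm u ∧ B.toDiagram.Reduced ∧ B.toDiagram.Minimal} →
      mbpdType w S :=
  (mbpd_inj_of_eq w S u h g hg hgS hcompat).choose

theorem transFun_inj {n M : ℕ} (w : Equiv.Perm (Fin n)) (S : Finset (Fin n))
    (u : Equiv.Perm (Fin M)) (h : S.card = M)
    (g : Fin M → Fin n) (hg : StrictMono g) (hgS : ∀ i, g i ∈ S)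
    (hcompat : ∀ i j, u i < u j ↔ w (g i) < w (g j)) :
    Function.Injective (transFun w S u h g hg hgS hcompat) :=
  (mbpd_inj_of_eq w S u h g hg hgS hcompat).choose_spec

theorem removePoint_lt_iff {m : ℕ} (w : Equiv.Perm (Fin (m + 1))) (X : Fin (m + 1))
    (a b : Fin m) :
    removePoint w X a < removePoint w X b ↔ w (X.succAbove a) < w (X.succAbove b) := by
  rw [← removePoint_spec w X a, ← removePoint_spec w X b]
  exact ((Fin.strictMono_succAbove (w X)).lt_iff_lt).symm

/-- Lift a subword datum of the deleted permutation to one of `w`. -/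
noncomputable def liftMap {m : ℕ} (w : Equiv.Perm (Fin (m + 1))) (X : Fin (m + 1)) :
    (Σ S' : Finset (Fin m), mbpdType (removePoint w X) S') →
      Σ S : Finset (Fin (m + 1)), mbpdType w S :=
  fun P => ⟨P.1.image X.succAbove,
    transFun w (P.1.image X.succAbove) (subPattern (removePoint w X) P.1)
      (Finset.card_image_of_injective _ (Fin.succAbove_right_injective))
      (fun i => X.succAbove (P.1.orderEmbOfFin rfl i))
      ((Fin.strictMono_succAbove X).comp (P.1.orderEmbOfFin rfl).strictMono)
      (fun i => Finset.mem_image_of_mem _ (Finset.orderEmbOfFin_mem P.1 rfl i))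
      (fun i j => by rw [subPattern_lt_iff, removePoint_lt_iff]) P.2⟩

theorem liftMap_fst {m : ℕ} (w : Equiv.Perm (Fin (m + 1))) (X : Fin (m + 1))
    (P : Σ S' : Finset (Fin m), mbpdType (removePoint w X) S') :
    (liftMap w X P).1 = P.1.image X.succAbove := rfl

theorem liftMap_inj {m : ℕ} (w : Equiv.Perm (Fin (m + 1))) (X : Fin (m + 1)) :
    Function.Injective (liftMap w X) := by
  rintro ⟨S1, C1⟩ ⟨S2, C2⟩ h
  have h1 : S1.image X.succAbove = S2.image X.succAbove := congrArg Sigma.fst h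
  have hS : S1 = S2 := by
    ext k
    constructor
    · intro hk
      have : X.succAbove k ∈ S2.image X.succAbove := h1 ▸ Finset.mem_image_of_mem _ hk
      obtain ⟨k', hk', he⟩ := Finset.mem_image.mp this
      rwa [← Fin.succAbove_right_injective he]
    · intro hk
      have : X.succAbove k ∈ S1.image X.succAbove := h1.symm ▸ Finset.mem_image_of_mem _ hk
      obtain ⟨k', hk', he⟩ := Finset.mem_image.mp this
      rwa [← Fin.succAbove_right_injective he]
  subst hS
  have h2 : transFun w (S1.image X.succAbove) (subPattern (removePoint w X) S1)
      (Finset.card_image_of_injective _ (Fin.succAbove_right_injective))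
      (fun i => X.succAbove (S1.orderEmbOfFin rfl i))
      ((Fin.strictMono_succAbove X).comp (S1.orderEmbOfFin rfl).strictMono)
      (fun i => Finset.mem_image_of_mem _ (Finset.orderEmbOfFin_mem S1 rfl i))
      (fun i j => by rw [subPattern_lt_iff, removePoint_lt_iff]) C1 =
    transFun w (S1.image X.succAbove) (subPattern (removePoint w X) S1)
      (Finset.card_image_of_injective _ (Fin.succAbove_right_injective))
      (fun i => X.succAbove (S1.orderEmbOfFin rfl i))
      ((Fin.strictMono_succAbove X).comp (S1.orderEmbOfFin rfl).strictMono)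
      (fun i => Finset.mem_image_of_mem _ (Finset.orderEmbOfFin_mem S1 rfl i))
      (fun i j => by rw [subPattern_lt_iff, removePoint_lt_iff]) C2 := by
    have := (Sigma.mk.inj_iff.mp h).2
    exact eq_of_heq this
  have := transFun_inj w (S1.image X.succAbove) (subPattern (removePoint w X) S1)
      (Finset.card_image_of_injective _ (Fin.succAbove_right_injective))
      (fun i => X.succAbove (S1.orderEmbOfFin rfl i))
      ((Fin.strictMono_succAbove X).comp (S1.orderEmbOfFin rfl).strictMono)
      (fun i => Finset.mem_image_of_mem _ (Finset.orderEmbOfFin_mem S1 rfl i))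
      (fun i j => by rw [subPattern_lt_iff, removePoint_lt_iff]) h2
  rw [this]

end Assembly
section Rset

/-- The set of (row indices of) removable pipes. -/
noncomputable def Rset {n : ℕ} (w : Equiv.Perm (Fin n)) (B : BPD n) : Finset (Fin n) :=
  @Finset.filter _ (fun k => B.toDiagram.RemovablePipe ↑(w k) ↑k)
    (fun _ => Classical.dec _) Finset.univ

theorem mem_Rset {n : ℕ} {w : Equiv.Perm (Fin n)} {B : BPD n} {k : Fin n} :
    k ∈ Rset w B ↔ B.toDiagram.RemovablePipe ↑(w k) ↑k := by
  simp only [Rset, Finset.mem_filter, Finset.mem_univ, true_and]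

theorem rem_mem_Rset {n : ℕ} {w : Equiv.Perm (Fin n)} {B : BPD n}
    (hp : B.toDiagram.HasPerm w) {y x : ℕ} (h : B.toDiagram.RemovablePipe y x) :
    ∃ X : Fin n, (X : ℕ) = x ∧ ((w X : Fin n) : ℕ) = y ∧ X ∈ Rset w B := by
  obtain ⟨X, hX, hwX⟩ := Diagram.hasPerm_exitsAt hp h.1
  refine ⟨X, hX, hwX, mem_Rset.mpr ?_⟩
  rw [hX, hwX]
  exact h

theorem minimal_of_Rset_empty {n : ℕ} {w : Equiv.Perm (Fin n)} {B : BPD n}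
    (hp : B.toDiagram.HasPerm w) (h : Rset w B = ∅) : B.toDiagram.Minimal := by
  intro y x hrem
  obtain ⟨X, -, -, hmem⟩ := rem_mem_Rset hp hrem
  rw [h] at hmem
  exact absurd hmem (Finset.notMem_empty X)

theorem min'_congr {α : Type*} [LinearOrder α] {R R' : Finset α} (h : R = R')
    (hne : R.Nonempty) (hne' : R'.Nonempty) : R.min' hne = R'.min' hne' := by
  subst h; rfl

end Rset

section StepF

variable {m : ℕ} (w : Equiv.Perm (Fin (m + 1)))
  (F' : ∀ w' : Equiv.Perm (Fin m), bpdType m w' → Σ S' : Finset (Fin m), mbpdType w' S')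

noncomputable def stepF (X : Fin (m + 1)) (B : BPD (m + 1)) (hp : B.toDiagram.HasPerm w)
    (hr : B.toDiagram.Reduced) (hrem : B.toDiagram.RemovablePipe ↑(w X) ↑X) :
    Σ S : Finset (Fin (m + 1)), mbpdType w S :=
  liftMap w X (F' (removePoint w X)
    ⟨BPD.del B X.isLt (w X).isLt hrem.2.1 hrem.2.2.1 hrem.2.2.2,
     BPD.del_hasPerm hp hrem.2.1 hrem.2.2.1 hrem.2.2.2,
     BPD.del_reduced hp hrem.2.1 hrem.2.2.1 hrem.2.2.2 hr⟩)

theorem stepF_congr {X X' : Fin (m + 1)} (hX : X = X') (B : BPD (m + 1))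
    (hp : B.toDiagram.HasPerm w) (hr : B.toDiagram.Reduced)
    (hrem : B.toDiagram.RemovablePipe ↑(w X) ↑X)
    (hrem' : B.toDiagram.RemovablePipe ↑(w X') ↑X') :
    stepF w F' X B hp hr hrem = stepF w F' X' B hp hr hrem' := by
  subst hX; rfl

theorem stepF_inj (X : Fin (m + 1)) {B1 B2 : BPD (m + 1)}
    (hp1 : B1.toDiagram.HasPerm w) (hr1 : B1.toDiagram.Reduced)
    (hrem1 : B1.toDiagram.RemovablePipe ↑(w X) ↑X)
    (hp2 : B2.toDiagram.HasPerm w) (hr2 : B2.toDiagram.Reduced)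
    (hrem2 : B2.toDiagram.RemovablePipe ↑(w X) ↑X)
    (hF'inj : Function.Injective (F' (removePoint w X)))
    (h : stepF w F' X B1 hp1 hr1 hrem1 = stepF w F' X B2 hp2 hr2 hrem2) : B1 = B2 := by
  have h1 := liftMap_inj w X h
  have h2 := hF'inj h1
  have h3 := congrArg Subtype.val h2
  exact BPD.del_injective X.isLt (w X).isLt hrem1.2.1 hrem1.2.2.1 hrem1.2.2.2
    hrem2.2.1 hrem2.2.2.1 hrem2.2.2.2 h3

theorem stepF_fst (X : Fin (m + 1)) (B : BPD (m + 1)) (hp : B.toDiagram.HasPerm w)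
    (hr : B.toDiagram.Reduced) (hrem : B.toDiagram.RemovablePipe ↑(w X) ↑X)
    (hinv : ∀ b', ((F' (removePoint w X)) b').1 = Finset.univ \ Rset (removePoint w X) b'.1) :
    (stepF w F' X B hp hr hrem).1 = Finset.univ \ Rset w B := by
  rw [stepF, liftMap_fst, hinv]
  ext Z
  rw [Finset.mem_image]
  by_cases hZ : Z = X
  · subst hZ
    constructor
    · rintro ⟨k, -, hk⟩
      exact absurd hk (Fin.succAbove_ne Z k)
    · intro hmem
      rw [Finset.mem_sdiff] at hmem
      exact absurd (mem_Rset.mpr hrem) hmem.2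
  · obtain ⟨k, hk⟩ := Fin.exists_succAbove_eq (show Z ≠ X from hZ)
    constructor
    · rintro ⟨k', hk', hkZ⟩
      rw [Finset.mem_sdiff] at hk' ⊢
      refine ⟨Finset.mem_univ Z, fun hmem => hk'.2 ?_⟩
      rw [mem_Rset] at hmem ⊢
      have hkk : k' = k := Fin.succAbove_right_injective (by rw [hk, hkZ])
      subst hkk
      rw [← hkZ] at hmem
      have := BPD.del_rem_of_rem hp hrem.2.1 hrem.2.2.1 hrem.2.2.2 (k' := k') hmem
      exact this
    · intro hmem
      rw [Finset.mem_sdiff, mem_Rset] at hmem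
      refine ⟨k, ?_, hk⟩
      rw [Finset.mem_sdiff]
      refine ⟨Finset.mem_univ k, fun hkmem => hmem.2 ?_⟩
      rw [mem_Rset] at hkmem
      have h2 := BPD.rem_of_del_rem hp hrem.2.1 hrem.2.2.1 hrem.2.2.2 hkmem
      have e1 : di (↑(w X)) ↑(removePoint w X k) = ((w (X.succAbove k) : Fin (m + 1)) : ℕ) := by
        rw [← coe_succAbove, removePoint_spec]
      have e2 : di (↑X) (k : ℕ) = ((X.succAbove k : Fin (m + 1)) : ℕ) := (coe_succAbove X k).symm
      rw [e1, e2, hk] at h2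
      exact h2
  
end StepF
section Main

theorem minimal_zero (B : BPD 0) : B.toDiagram.Minimal :=
  fun _ _ hrem => absurd (Diagram.exitsAt_pos hrem.1) (lt_irrefl 0)

noncomputable def univF {n : ℕ} (w : Equiv.Perm (Fin n)) :
    {B : BPD n // B.toDiagram.HasPerm w ∧ B.toDiagram.Reduced ∧ B.toDiagram.Minimal} →
      Σ S : Finset (Fin n), mbpdType w S :=
  fun b => ⟨Finset.univ, transFun w Finset.univ w (Finset.card_fin n) id strictMono_id
    (fun i => Finset.mem_univ i) (fun _ _ => Iff.rfl) b⟩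

theorem univF_fst {n : ℕ} (w : Equiv.Perm (Fin n)) (b) : (univF w b).1 = Finset.univ := rfl

theorem univF_inj {n : ℕ} (w : Equiv.Perm (Fin n)) {b1 b2} (h : univF w b1 = univF w b2) :
    b1 = b2 := by
  have h2 := eq_of_heq (Sigma.mk.inj_iff.mp h).2
  exact transFun_inj w Finset.univ w (Finset.card_fin n) id strictMono_id
    (fun i => Finset.mem_univ i) (fun _ _ => Iff.rfl) h2

theorem exists_inj : ∀ (n : ℕ) (w : Equiv.Perm (Fin n)),
    ∃ F : bpdType n w → Σ S : Finset (Fin n), mbpdType w S,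
      Function.Injective F ∧ ∀ b, (F b).1 = Finset.univ \ Rset w b.1 := by
  intro n
  induction n with
  | zero =>
    intro w
    refine ⟨fun b => univF w ⟨b.1, b.2.1, b.2.2, minimal_zero b.1⟩, ?_, ?_⟩
    · intro b1 b2 h
      have h3 := univF_inj w h
      have hv := congrArg Subtype.val h3
      exact Subtype.ext hv
    · intro b
      rw [univF_fst]
      have hR : Rset w b.1 = ∅ := Finset.eq_empty_of_forall_notMem (fun k => k.elim0)
      rw [hR, Finset.sdiff_empty]
  | succ m hIH =>
    intro w
    choose F' hF'inj hF'inv using hIH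
    classical
    refine ⟨fun b =>
      if h : Rset w b.1 = ∅ then
        univF w ⟨b.1, b.2.1, b.2.2, minimal_of_Rset_empty b.2.1 h⟩
      else
        stepF w F' ((Rset w b.1).min' (Finset.nonempty_iff_ne_empty.mpr h)) b.1 b.2.1 b.2.2
          (mem_Rset.mp ((Rset w b.1).min'_mem (Finset.nonempty_iff_ne_empty.mpr h))), ?_, ?_⟩
    · intro b1 b2 h12
      dsimp only at h12
      by_cases h1 : Rset w b1.1 = ∅ <;> by_cases h2 : Rset w b2.1 = ∅
      · rw [dif_pos h1, dif_pos h2] at h12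
        have hv := congrArg Subtype.val (univF_inj w h12)
        exact Subtype.ext hv
      · exfalso
        rw [dif_pos h1, dif_neg h2] at h12
        have e := congrArg Sigma.fst h12
        rw [univF_fst, stepF_fst w F' _ _ _ _ _ (hF'inv _)] at e
        have hX := (Rset w b2.1).min'_mem (Finset.nonempty_iff_ne_empty.mpr h2)
        have hm : (Rset w b2.1).min' (Finset.nonempty_iff_ne_empty.mpr h2) ∈
            Finset.univ \ Rset w b2.1 := by rw [← e]; exact Finset.mem_univ _
        rw [Finset.mem_sdiff] at hm
        exact hm.2 hX
      · exfalso
        rw [dif_neg h1, dif_pos h2] at h12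
        have e := congrArg Sigma.fst h12
        rw [stepF_fst w F' _ _ _ _ _ (hF'inv _), univF_fst] at e
        have hX := (Rset w b1.1).min'_mem (Finset.nonempty_iff_ne_empty.mpr h1)
        have hm : (Rset w b1.1).min' (Finset.nonempty_iff_ne_empty.mpr h1) ∈
            Finset.univ \ Rset w b1.1 := by rw [e]; exact Finset.mem_univ _
        rw [Finset.mem_sdiff] at hm
        exact hm.2 hX
      · rw [dif_neg h1, dif_neg h2] at h12
        have e := congrArg Sigma.fst h12
        rw [stepF_fst w F' _ _ _ _ _ (hF'inv _), stepF_fst w F' _ _ _ _ _ (hF'inv _)] at e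
        have hR : Rset w b1.1 = Rset w b2.1 := by
          ext k
          have hk := Finset.ext_iff.mp e k
          rw [Finset.mem_sdiff, Finset.mem_sdiff] at hk
          constructor
          · intro hmem
            by_contra hno
            have := hk.mpr ⟨Finset.mem_univ k, hno⟩
            exact this.2 hmem
          · intro hmem
            by_contra hno
            have := hk.mp ⟨Finset.mem_univ k, hno⟩
            exact this.2 hmem
        have hXeq : (Rset w b1.1).min' (Finset.nonempty_iff_ne_empty.mpr h1) =
            (Rset w b2.1).min' (Finset.nonempty_iff_ne_empty.mpr h2) := min'_congr hR _ _
        have hrem1' : b2.1.toDiagram.RemovablePipe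
            ↑(w ((Rset w b1.1).min' (Finset.nonempty_iff_ne_empty.mpr h1)))
            ↑((Rset w b1.1).min' (Finset.nonempty_iff_ne_empty.mpr h1)) := by
          rw [hXeq]
          exact mem_Rset.mp ((Rset w b2.1).min'_mem (Finset.nonempty_iff_ne_empty.mpr h2))
        have hc := stepF_congr w F' hXeq b2.1 b2.2.1 b2.2.2 hrem1'
          (mem_Rset.mp ((Rset w b2.1).min'_mem (Finset.nonempty_iff_ne_empty.mpr h2)))
        have h12' := h12.trans hc.symm
        have hB := stepF_inj w F' _ b1.2.1 b1.2.2 _ b2.2.1 b2.2.2 hrem1' (hF'inj _) h12'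
        exact Subtype.ext hB
    · intro b
      dsimp only
      by_cases h : Rset w b.1 = ∅
      · rw [dif_pos h, univF_fst, h, Finset.sdiff_empty]
      · rw [dif_neg h]
        exact stepF_fst w F' _ _ _ _ _ (hF'inv _)

end Main
/-- Corollary `schub_ub`.  For every `w ∈ S_n` there is the
upper bound `|bpd(w)| ≤ Σ_v |mbpd(perm(v))|`, where the sum runs over all
subwords `v` of `w`, i.e. over all index sets `S ⊆ {1, …, n}` (including
`v = w` itself). -/
theorem card_bpd_le_sum_card_mbpd {n : ℕ} (w : Equiv.Perm (Fin n)) :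
    Nat.card {B : BPD n // B.toDiagram.HasPerm w ∧ B.toDiagram.Reduced} ≤
      ∑ S : Finset (Fin n),
        Nat.card {B : BPD S.card // B.toDiagram.HasPerm (subPattern w S) ∧
          B.toDiagram.Reduced ∧ B.toDiagram.Minimal} := by
  classical
  obtain ⟨F, hinj, -⟩ := exists_inj n w
  letI : ∀ S : Finset (Fin n), Fintype (mbpdType w S) := fun S => Fintype.ofFinite _
  have h1 : Nat.card (bpdType n w) ≤ Nat.card (Σ S : Finset (Fin n), mbpdType w S) :=
    Nat.card_le_card_of_injective F hinj
  calc Nat.card (bpdType n w)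
      ≤ Nat.card (Σ S : Finset (Fin n), mbpdType w S) := h1
    _ = Fintype.card (Σ S : Finset (Fin n), mbpdType w S) := Nat.card_eq_fintype_card
    _ = ∑ S : Finset (Fin n), Fintype.card (mbpdType w S) := Fintype.card_sigma
    _ = ∑ S : Finset (Fin n), Nat.card (mbpdType w S) :=
        Finset.sum_congr rfl fun S _ => (Nat.card_eq_fintype_card).symm
end

section
/- Let w ∈ S_n, let v ⊆ w be a subword of size m, and set u := perm(v) ∈ S_m. Then for every B ∈ BPD(w;v), the diagram φ_v^w(B) has exactly the same number of j-elbow tiles as B, i.e., j(φ_v^w(B)) = j(B); in particular, for every reduced B ∈ bpd(w;v) one has wt^β(B) = wt^β(φ_v^w(B)). -/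
/-- The `β`-weight of a (reduced) diagram: `wt^β(B) = (1 + β)^{j(B)} ∈ ℤ[β]`,
where `j(B)` is the number of j-elbow tiles of `B` and `β` is the polynomial
variable. -/
noncomputable def wtβ {n : ℕ} (D : Diagram n) : Polynomial ℤ :=
  (1 + Polynomial.X) ^ D.jcount

/-! In the row of a removable pipe `y → x` the elbow at `(x, y)` is the only r-elbow, so the tiles
west of it carry no west segment and the tiles east of it carry an east segment: the row has no
j-elbow, and every other tile of it lets vertical segments straight through. The elbow columns
`w x` of the deleted rows `x` are exactly the deleted columns, so the kept tiles fit together into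
a BPD of size `m`, and every j-elbow of `B` is kept. Columns are handled as rows of the transposed
diagram. -/

namespace Tile

def transpose : Tile → Tile
  | blank => blank | horiz => vert | vert => horiz | cross => cross
  | bump => bump | relbow => relbow | jelbow => jelbow

@[simp] theorem transpose_transpose (t : Tile) : t.transpose.transpose = t := by cases t <;> rfl

@[simp] theorem north_transpose (t : Tile) : t.transpose.north = t.west := by cases t <;> rfl

@[simp] theorem south_transpose (t : Tile) : t.transpose.south = t.east := by cases t <;> rfl

@[simp] theorem west_transpose (t : Tile) : t.transpose.west = t.north := by cases t <;> rfl

@[simp] theorem east_transpose (t : Tile) : t.transpose.east = t.south := by cases t <;> rfl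

@[simp] theorem transpose_eq_iff {t t' : Tile} : t.transpose = t' ↔ t = t'.transpose :=
  ⟨fun h => by rw [← h, transpose_transpose], fun h => by rw [h, transpose_transpose]⟩

@[simp] theorem transpose_bump : bump.transpose = bump := rfl

@[simp] theorem transpose_relbow : relbow.transpose = relbow := rfl

@[simp] theorem transpose_jelbow : jelbow.transpose = jelbow := rfl

theorem east_eq_false_of_west_eq_false {t : Tile} (hw : t.west = false) (hr : t ≠ relbow) :
    t.east = false := by
  cases t <;> simp_all [west, east]

theorem west_eq_true_of_east_eq_true {t : Tile} (he : t.east = true) (hr : t ≠ relbow) :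
    t.west = true := by
  cases t <;> simp_all [west, east]

theorem north_eq_south_of_west_eq_east {t : Tile} (h : t.west = t.east) (hb : t ≠ bump) :
    t.north = t.south := by
  cases t <;> simp_all [west, east, north, south]

theorem ne_jelbow_of_west_eq_false {t : Tile} (h : t.west = false) : t ≠ jelbow := by
  rintro rfl; simp [west] at h

theorem ne_jelbow_of_east_eq_true {t : Tile} (h : t.east = true) : t ≠ jelbow := by
  rintro rfl; simp [east] at h

end Tile

namespace Diagram

variable {n : ℕ}

def transpose (D : Diagram n) : Diagram n where
  tile i j := (D.tile j i).transpose
  vmatch i j hi hj := by simpa using D.hmatch j i hj hi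
  hmatch i j hi hj := by simpa using D.vmatch j i hj hi
  bottom j hj := by simpa using D.right j hj
  right i hi := by simpa using D.bottom i hi
  top j hj := by simpa using D.left j hj
  left i hi := by simpa using D.top i hi
  outside i j h := by rw [D.outside j i (by tauto)]; rfl

@[simp] theorem transpose_tile (D : Diagram n) (i j : ℕ) :
    D.transpose.tile i j = (D.tile j i).transpose := rfl

end Diagram

namespace BPD

variable {n : ℕ}

def transpose (B : BPD n) : BPD n :=
  { B.toDiagram.transpose with nobump := fun i j => by simpa using B.nobump j i }

@[simp] theorem toDiagram_transpose (B : BPD n) :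
    B.transpose.toDiagram = B.toDiagram.transpose := rfl

variable (B : BPD n) {x y : ℕ}

theorem west_eq_false_of_le (hx : x < n) (hy : y < n)
    (hrow : ∀ j, j ≠ y → B.tile x j ≠ Tile.relbow) {j : ℕ} (hj : j ≤ y) :
    (B.tile x j).west = false := by
  induction j with
  | zero => exact B.left x hx
  | succ j ih =>
    rw [← B.hmatch x j hx (by omega)]
    exact Tile.east_eq_false_of_west_eq_false (ih (by omega)) (hrow j (by omega))

theorem east_eq_true_of_ge (hx : x < n)
    (hrow : ∀ j, j ≠ y → B.tile x j ≠ Tile.relbow) {j : ℕ} (hyj : y ≤ j) (hj : j < n) :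
    (B.tile x j).east = true := by
  refine Nat.decreasingInduction (motive := fun j _ => y ≤ j → (B.tile x j).east = true)
    (fun j hj ih hyj => ?_) (fun _ => B.right x hx) (show j ≤ n - 1 by omega) hyj
  rw [B.hmatch x j hx (by omega)]
  exact Tile.west_eq_true_of_east_eq_true (ih (by omega)) (hrow (j + 1) (by omega))

theorem north_eq_south_of_row (hx : x < n) (hy : y < n)
    (hrow : ∀ j, j ≠ y → B.tile x j ≠ Tile.relbow) {j : ℕ} (hj : j < n) (hjy : j ≠ y) :
    (B.tile x j).north = (B.tile x j).south := by
  refine Tile.north_eq_south_of_west_eq_east ?_ (B.nobump x j)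
  rcases hjy.lt_or_gt with hjy | hjy
  · rw [B.west_eq_false_of_le hx hy hrow hjy.le, B.hmatch x j hx (by omega),
      B.west_eq_false_of_le hx hy hrow hjy]
  · obtain ⟨k, rfl⟩ : ∃ k, j = k + 1 := ⟨j - 1, by omega⟩
    rw [B.east_eq_true_of_ge hx hrow hjy.le hj, ← B.hmatch x k hx hj,
      B.east_eq_true_of_ge hx hrow (by omega) (by omega)]

theorem ne_jelbow_of_row (hx : x < n) (hy : y < n)
    (hrow : ∀ j, j ≠ y → B.tile x j ≠ Tile.relbow) (j : ℕ) :
    B.tile x j ≠ Tile.jelbow := by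
  by_cases hj : j < n
  · rcases le_total j y with hjy | hjy
    · exact Tile.ne_jelbow_of_west_eq_false (B.west_eq_false_of_le hx hy hrow hjy)
    · exact Tile.ne_jelbow_of_east_eq_true (B.east_eq_true_of_ge hx hrow hjy hj)
  · rw [B.outside x j (by omega)]
    decide

theorem west_eq_east_of_col (hx : x < n) (hy : y < n)
    (hcol : ∀ i, i ≠ x → B.tile i y ≠ Tile.relbow) {i : ℕ} (hi : i < n) (hix : i ≠ x) :
    (B.tile i y).west = (B.tile i y).east := by
  simpa using B.transpose.north_eq_south_of_row hy hx (by simpa using hcol) hi hix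

theorem ne_jelbow_of_col (hx : x < n) (hy : y < n)
    (hcol : ∀ i, i ≠ x → B.tile i y ≠ Tile.relbow) (i : ℕ) :
    B.tile i y ≠ Tile.jelbow := by
  simpa using B.transpose.ne_jelbow_of_row hy hx (by simpa using hcol) i

end BPD

theorem OrderEmbedding.val_lt_val_iff {m n : ℕ} (s : Fin m ↪o Fin n) {a b : Fin m} :
    (s a : ℕ) < s b ↔ (a : ℕ) < b := by
  rw [← Fin.lt_def, ← Fin.lt_def, s.lt_iff_lt]

namespace Diagram

variable {n m : ℕ} (D : Diagram n)

theorem north_eq_north_of_rows {c a b : ℕ} (hc : c < n) (hab : a ≤ b) (hb : b < n)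
    (h : ∀ r, a ≤ r → r < b → (D.tile r c).north = (D.tile r c).south) :
    (D.tile a c).north = (D.tile b c).north := by
  induction b, hab using Nat.le_induction with
  | base => rfl
  | succ b hab ih =>
    rw [ih (by omega) fun r h1 h2 => h r h1 (by omega), h b hab (by omega),
      D.vmatch b c hb hc]

theorem south_eq_south_of_rows {c a b : ℕ} (hc : c < n) (hab : a ≤ b) (hb : b < n)
    (h : ∀ r, a < r → r ≤ b → (D.tile r c).north = (D.tile r c).south) :
    (D.tile a c).south = (D.tile b c).south := by
  rcases hab.eq_or_lt with rfl | hab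
  · rfl
  rw [D.vmatch a c (by omega) hc,
    D.north_eq_north_of_rows hc hab hb fun r h1 h2 => h r h1 h2.le, h b hab le_rfl]

def TransparentRows (s t : Fin m ↪o Fin n) : Prop :=
  ∀ r : Fin n, r ∉ Set.range s → ∀ j : Fin m,
    (D.tile r (t j)).north = (D.tile r (t j)).south

variable {D} {s t : Fin m ↪o Fin n}

theorem TransparentRows.north_eq_south (hV : D.TransparentRows s t) (j : Fin m) {r : ℕ}
    (hr : r < n) (hs : ∀ k, (s k : ℕ) ≠ r) :
    (D.tile r (t j)).north = (D.tile r (t j)).south :=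
  hV ⟨r, hr⟩ (by rintro ⟨k, hk⟩; exact hs k (by rw [hk])) j

theorem TransparentRows.south_eq_north_succ (hV : D.TransparentRows s t) (j : Fin m) {a : ℕ}
    (ha : a + 1 < m) :
    (D.tile (s ⟨a, by omega⟩) (t j)).south = (D.tile (s ⟨a + 1, ha⟩) (t j)).north := by
  have hlt : (s ⟨a, by omega⟩ : ℕ) < s ⟨a + 1, ha⟩ := s.val_lt_val_iff.mpr (by simp)
  rw [D.vmatch _ _ (by omega) (t j).isLt]
  refine D.north_eq_north_of_rows (t j).isLt hlt (s _).isLt fun r h1 h2 =>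
    hV.north_eq_south j (by omega) fun k hk => ?_
  have hak := (s.val_lt_val_iff (a := ⟨a, by omega⟩) (b := k)).mp (by omega)
  have hka := (s.val_lt_val_iff (a := k) (b := ⟨a + 1, ha⟩)).mp (by omega)
  dsimp only at hak hka
  omega

theorem TransparentRows.north_eq_false_first (hV : D.TransparentRows s t) (hm : 0 < m)
    (j : Fin m) :
    (D.tile (s ⟨0, hm⟩) (t j)).north = false := by
  rw [← D.north_eq_north_of_rows (t j).isLt (Nat.zero_le _) (s _).isLt fun r _ h =>
    hV.north_eq_south j (by omega) fun k hk => ?_]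
  · exact D.top _ (t j).isLt
  have := (s.val_lt_val_iff (a := k) (b := ⟨0, hm⟩)).mp (by omega)
  dsimp only at this
  omega

theorem TransparentRows.south_eq_true_last (hV : D.TransparentRows s t) (hm : 0 < m)
    (j : Fin m) :
    (D.tile (s ⟨m - 1, by omega⟩) (t j)).south = true := by
  have hlast := (s ⟨m - 1, by omega⟩).isLt
  rw [D.south_eq_south_of_rows (t j).isLt (Nat.le_sub_one_of_lt hlast)
    (Nat.sub_one_lt_of_lt hlast) fun r h _ => hV.north_eq_south j (by omega) fun k hk => ?_]
  · exact D.bottom _ (t j).isLt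
  have := (s.val_lt_val_iff (a := ⟨m - 1, by omega⟩) (b := k)).mp (by omega)
  dsimp only at this
  omega

def submatrix (D : Diagram n) (s t : Fin m ↪o Fin n) (hV : D.TransparentRows s t)
    (hH : D.transpose.TransparentRows t s) : Diagram m where
  tile a b := if h : a < m ∧ b < m then D.tile (s ⟨a, h.1⟩) (t ⟨b, h.2⟩) else .blank
  vmatch a b ha hb := by
    simpa [ha, hb, (by omega : a < m)] using hV.south_eq_north_succ ⟨b, hb⟩ ha
  hmatch a b ha hb := by
    simpa [ha, hb, (by omega : b < m)] using hH.south_eq_north_succ ⟨a, ha⟩ hb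
  bottom b hb := by
    simpa [hb, (by omega : m - 1 < m)] using hV.south_eq_true_last (by omega) ⟨b, hb⟩
  right a ha := by
    simpa [ha, (by omega : m - 1 < m)] using hH.south_eq_true_last (by omega) ⟨a, ha⟩
  top b hb := by
    simpa [hb, (by omega : 0 < m)] using hV.north_eq_false_first (by omega) ⟨b, hb⟩
  left a ha := by
    simpa [ha, (by omega : 0 < m)] using hH.north_eq_false_first (by omega) ⟨a, ha⟩
  outside a b h := dif_neg h

@[simp] theorem submatrix_tile (D : Diagram n) (s t : Fin m ↪o Fin n)
    (hV : D.TransparentRows s t) (hH : D.transpose.TransparentRows t s) (i j : Fin m) :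
    (D.submatrix s t hV hH).tile i j = D.tile (s i) (t j) := by
  simp [submatrix]

theorem jcount_eq_card (D : Diagram n) :
    D.jcount = (Finset.univ.filter fun p : Fin n × Fin n => D.tile p.1 p.2 = .jelbow).card := by
  refine (Finset.card_nbij (fun p => ((p.1 : ℕ), (p.2 : ℕ))) ?_ ?_ ?_).symm
  · intro p hp
    simpa using hp
  · intro p _ q _ h
    simp only [Prod.mk.injEq] at h
    exact Prod.ext (Fin.ext h.1) (Fin.ext h.2)
  · rintro ⟨a, b⟩ h
    simp only [Finset.coe_filter, Finset.mem_product, Finset.mem_range] at h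
    exact ⟨(⟨a, h.1.1⟩, ⟨b, h.1.2⟩), by simpa using h.2, rfl⟩

theorem jcount_submatrix (D : Diagram n) (s t : Fin m ↪o Fin n) (hV : D.TransparentRows s t)
    (hH : D.transpose.TransparentRows t s)
    (hJ : ∀ a b : Fin n, D.tile a b = .jelbow → a ∈ Set.range s ∧ b ∈ Set.range t) :
    (D.submatrix s t hV hH).jcount = D.jcount := by
  rw [jcount_eq_card, jcount_eq_card]
  refine Finset.card_nbij (Prod.map s t) ?_ (s.injective.prodMap t.injective).injOn ?_
  · intro p hp
    simpa using hp
  · rintro ⟨a, b⟩ h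
    simp only [Finset.coe_filter, Finset.mem_univ, true_and] at h
    obtain ⟨⟨i, rfl⟩, ⟨j, rfl⟩⟩ := hJ a b h
    exact ⟨(i, j), by simpa using h, rfl⟩

end Diagram

namespace BPD

variable {n m : ℕ}

def submatrix (B : BPD n) (s t : Fin m ↪o Fin n) (hV : B.TransparentRows s t)
    (hH : B.transpose.TransparentRows t s) : BPD m :=
  { B.toDiagram.submatrix s t hV hH with
    nobump := fun a b => by
      simp only [Diagram.submatrix]
      split
      · exact B.nobump _ _
      · decide }

end BPD

theorem mem_range_iff_symm_mem_range {n m : ℕ} {w : Equiv.Perm (Fin n)} {s t : Fin m ↪o Fin n}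
    {u : Equiv.Perm (Fin m)} (hst : ∀ i, w (s i) = t (u i)) (c : Fin n) :
    c ∈ Set.range t ↔ w.symm c ∈ Set.range s := by
  constructor
  · rintro ⟨j, rfl⟩
    exact ⟨u.symm j, by rw [Equiv.eq_symm_apply, hst, Equiv.apply_symm_apply]⟩
  · rintro ⟨i, hi⟩
    exact ⟨u i, by rw [← hst, hi, Equiv.apply_symm_apply]⟩

namespace BPD.InBPDv

variable {n m : ℕ} {B : BPD n} {w : Equiv.Perm (Fin n)} {s t : Fin m ↪o Fin n}
  {u : Equiv.Perm (Fin m)}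

theorem removablePipe (hB : B.InBPDv w s) {r : Fin n} (hr : r ∉ Set.range s) :
    B.RemovablePipe (w r) r :=
  (hB.2 _ _).mpr ⟨r, hr, rfl, rfl⟩

theorem transparentRows (hB : B.InBPDv w s) (hst : ∀ i, w (s i) = t (u i)) :
    B.TransparentRows s t := by
  intro r hr j
  obtain ⟨-, -, hrow, -⟩ := hB.removablePipe hr
  refine B.north_eq_south_of_row r.isLt (w r).isLt hrow (t j).isLt fun h => hr ?_
  simpa using (mem_range_iff_symm_mem_range hst (w r)).mp ⟨j, Fin.ext h⟩

theorem transparentCols (hB : B.InBPDv w s) (hst : ∀ i, w (s i) = t (u i)) :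
    B.transpose.TransparentRows t s := by
  intro c hc i
  have hk := (mem_range_iff_symm_mem_range hst c).not.mp hc
  obtain ⟨-, -, -, hcol⟩ := hB.removablePipe hk
  simp only [Equiv.apply_symm_apply] at hcol
  simpa using B.west_eq_east_of_col (w.symm c).isLt c.isLt hcol (s i).isLt
    fun h => hk ⟨i, Fin.ext h⟩

theorem mem_range_of_jelbow (hB : B.InBPDv w s) (hst : ∀ i, w (s i) = t (u i)) {a b : Fin n}
    (h : B.tile a b = .jelbow) : a ∈ Set.range s ∧ b ∈ Set.range t := by
  constructor
  · by_contra ha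
    obtain ⟨-, -, hrow, -⟩ := hB.removablePipe ha
    exact B.ne_jelbow_of_row a.isLt (w a).isLt hrow b h
  · by_contra hb
    have hk := (mem_range_iff_symm_mem_range hst b).not.mp hb
    obtain ⟨-, -, -, hcol⟩ := hB.removablePipe hk
    simp only [Equiv.apply_symm_apply] at hcol
    exact B.ne_jelbow_of_col (w.symm b).isLt b.isLt hcol a h

end BPD.InBPDv

/-- Proposition `bpd_weight`.  Let `w ∈ S_n`, let `v ⊆ w` be
a subword of size `m` with index sequence `s` and entry sequence `t`, and set
`u := perm(v) ∈ S_m`.  Then for every `B ∈ BPD(w; v)`, the diagram `φ_v^w(B)`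
has exactly the same number of j-elbow tiles as `B`; in particular, for every
reduced `B ∈ bpd(w; v)` one has `wt^β(B) = wt^β(φ_v^w(B))`. -/
theorem removing_pipes_preserves_jcount {n m : ℕ} (w : Equiv.Perm (Fin n))
    (s t : Fin m ↪o Fin n) (u : Equiv.Perm (Fin m))
    (hst : ∀ i : Fin m, w (s i) = t (u i))
    (B : BPD n) (hB : B.InBPDv w s) :
    ∃ B' : BPD m, (∀ i j : Fin m, B'.tile i j = B.tile (s i) (t j)) ∧
      B'.toDiagram.jcount = B.toDiagram.jcount ∧
      (B.toDiagram.Reduced → wtβ B.toDiagram = wtβ B'.toDiagram) := by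
  have hV := hB.transparentRows hst
  have hH := hB.transparentCols hst
  have hj : (B.submatrix s t hV hH).jcount = B.jcount :=
    B.jcount_submatrix s t hV hH fun _ _ h => hB.mem_range_of_jelbow hst h
  refine ⟨B.submatrix s t hV hH, B.submatrix_tile s t hV hH, hj, fun _ => ?_⟩
  rw [wtβ, wtβ, hj]
end

section
/- Let B be a bumpless pipe dream of size n that is not reduced. Then the permutation w_B contains the pattern 1243 or the pattern 2143. -/
/-
Two pipes that share two crossings meet at a crossing `c` and later again at a cell `c'`. At a
common cell distinct pipes travel in different directions, so the one passing `c` horizontally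
puts `c'` strictly east of `c`, and the one passing `c'` vertically, having entered west of `c'`,
climbed into its column from a j-elbow strictly below `c'`.

A j-elbow at `(t, j)` forces an inversion `r < s`, `j ≤ w s < w r` with `t ≤ r`: the pipe of
column `j` turns east at some row `s > t`; it either turns north again at a j-elbow south-east of
`(t, j)` (and we induct), or exits at row `s`; in the latter case the pipe exiting at row `t` enters
that row east of the j-elbow, so it starts in a column `> j` or passes a j-elbow south-east of
`(t, j)`. Both pipes of the double crossing exit above and start west of the j-elbow below `c'`,
and with its inversion they form a `1243` or a `2143`.
-/

namespace Tile

theorem east_of_exitEast {t : Tile} {d : Bool} (hin : cond d t.south t.west = true)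
    (h : t.exitEast d = true) : t.east = true := by
  cases t <;> cases d <;> simp_all [exitEast, south, west, east]

theorem north_of_exitEast_eq_false {t : Tile} {d : Bool} (hin : cond d t.south t.west = true)
    (h : t.exitEast d = false) : t.north = true := by
  cases t <;> cases d <;> simp_all [exitEast, south, west, north]

theorem exitEast_false_eq_false_iff {t : Tile} (hb : t ≠ bump) :
    t.exitEast false = false ↔ t = jelbow := by
  cases t <;> simp_all [exitEast]

end Tile

namespace Diagram

open Relation

variable {n : ℕ} (D : Diagram n)

def Reaches (y : ℕ) (σ : ℕ × ℕ × Bool) : Prop :=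
  ReflTransGen D.Step (n - 1, y, true) σ

/-- The pipe in state `σ` entered its cell through an edge that carries a segment. -/
def Admissible (σ : ℕ × ℕ × Bool) : Prop :=
  cond σ.2.2 (D.tile σ.1 σ.2.1).south (D.tile σ.1 σ.2.1).west = true

variable {D}

theorem step_east_s8 {r c : ℕ} {d : Bool} (hr : r < n) (hc : c + 1 < n)
    (h : (D.tile r c).exitEast d = true) : D.Step (r, c, d) (r, c + 1, false) :=
  ⟨hr, show c < n by omega, by rw [if_pos h]; exact ⟨hc, rfl⟩⟩

theorem step_north_s8 {r c : ℕ} {d : Bool} (hr : r < n) (hc : c < n) (h0 : 0 < r)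
    (h : (D.tile r c).exitEast d = false) : D.Step (r, c, d) (r - 1, c, true) :=
  ⟨hr, hc, by rw [if_neg (by simp [h])]; exact ⟨h0, rfl⟩⟩

theorem Step.east_or_north {r c : ℕ} {d : Bool} {τ : ℕ × ℕ × Bool} (h : D.Step (r, c, d) τ) :
    ((D.tile r c).exitEast d = true ∧ c + 1 < n ∧ τ = (r, c + 1, false)) ∨
      ((D.tile r c).exitEast d = false ∧ 0 < r ∧ τ = (r - 1, c, true)) := by
  obtain ⟨-, -, h⟩ := h
  by_cases he : (D.tile r c).exitEast d = true
  · exact Or.inl ⟨he, by simpa [if_pos he] using h⟩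
  · exact Or.inr ⟨by simpa using he, by simpa [if_neg he] using h⟩

theorem step_rightUnique : Relator.RightUnique D.Step := by
  rintro ⟨r, c, d⟩ τ τ' h h'
  rcases h.east_or_north with ⟨he, -, rfl⟩ | ⟨he, -, rfl⟩ <;>
    rcases h'.east_or_north with ⟨he', -, rfl⟩ | ⟨he', -, rfl⟩ <;> simp_all

theorem Step.northeast {σ τ : ℕ × ℕ × Bool} (h : D.Step σ τ) : τ.1 ≤ σ.1 ∧ σ.2.1 ≤ τ.2.1 := by
  obtain ⟨r, c, d⟩ := σ
  rcases h.east_or_north with ⟨-, -, rfl⟩ | ⟨-, -, rfl⟩ <;> simp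

theorem northeast_of_reflTransGen {σ τ : ℕ × ℕ × Bool} (h : ReflTransGen D.Step σ τ) :
    τ.1 ≤ σ.1 ∧ σ.2.1 ≤ τ.2.1 := by
  induction h with
  | refl => exact ⟨le_rfl, le_rfl⟩
  | tail _ hstep ih => exact ⟨hstep.northeast.1.trans ih.1, ih.2.trans hstep.northeast.2⟩

theorem Step.admissible {σ τ : ℕ × ℕ × Bool} (h : D.Step σ τ) (hσ : D.Admissible σ) :
    D.Admissible τ := by
  obtain ⟨r, c, d⟩ := σ
  have ⟨hr, hc, _⟩ := h
  rcases h.east_or_north with ⟨he, hc1, rfl⟩ | ⟨he, h0, rfl⟩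
  · show (D.tile r (c + 1)).west = true
    rw [← D.hmatch r c hr hc1]
    exact Tile.east_of_exitEast hσ he
  · show (D.tile (r - 1) c).south = true
    rw [D.vmatch (r - 1) c (by omega) hc, Nat.sub_add_cancel h0]
    exact Tile.north_of_exitEast_eq_false hσ he

theorem Reaches.admissible {y : ℕ} {σ : ℕ × ℕ × Bool} (hy : y < n) (h : D.Reaches y σ) :
    D.Admissible σ := by
  induction h with
  | refl => exact D.bottom y hy
  | tail _ hstep ih => exact hstep.admissible ih

theorem Admissible.lt {σ : ℕ × ℕ × Bool} (h : D.Admissible σ) : σ.1 < n ∧ σ.2.1 < n := by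
  by_contra hout
  rw [Admissible, D.outside _ _ hout] at h
  cases σ.2.2 <;> simp [Tile.south, Tile.west] at h

theorem not_step_of_exitEast {x : ℕ} {d : Bool} (he : (D.tile x (n - 1)).exitEast d = true)
    (τ : ℕ × ℕ × Bool) : ¬ D.Step (x, n - 1, d) τ := fun h => by
  rcases h.east_or_north with ⟨-, h, -⟩ | ⟨he', -⟩
  · omega
  · simp_all

theorem snd_lt_of_exitEast {σ τ : ℕ × ℕ × Bool}
    (he : (D.tile σ.1 σ.2.1).exitEast σ.2.2 = true) (h : ReflTransGen D.Step σ τ) (hne : σ ≠ τ) :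
    σ.2.1 < τ.2.1 := by
  obtain ⟨r, c, d⟩ := σ
  rcases h.cases_head with rfl | ⟨m, hm, hmτ⟩
  · exact absurd rfl hne
  · rcases hm.east_or_north with ⟨-, -, rfl⟩ | ⟨he', -⟩
    · exact (northeast_of_reflTransGen hmτ).2
    · simp_all

theorem Reaches.reflTransGen_of_reflTransGen {y a b a' b' : ℕ} {d d' e e' : Bool}
    (h : D.Reaches y (a, b, d)) (h' : D.Reaches y (a', b', d')) (hne : (a, b) ≠ (a', b'))
    (p : ReflTransGen D.Step (a, b, e) (a', b', e')) :
    ReflTransGen D.Step (a, b, d) (a', b', d') := by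
  refine (ReflTransGen.total_of_right_unique step_rightUnique h h').resolve_right fun q => hne ?_
  have hp := northeast_of_reflTransGen p
  have hq := northeast_of_reflTransGen q
  simp only at hp hq
  rw [Prod.mk.injEq]
  omega

theorem ExitsAt.reflTransGen_of_reaches {y x : ℕ} {σ : ℕ × ℕ × Bool} (hx : D.ExitsAt y x)
    (hσ : D.Reaches y σ) :
    ∃ d, ReflTransGen D.Step σ (x, n - 1, d) ∧ (D.tile x (n - 1)).exitEast d = true := by
  obtain ⟨d, hr, he⟩ := hx
  refine ⟨d, ?_, he⟩
  rcases ReflTransGen.total_of_right_unique step_rightUnique hσ hr with h | h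
  · exact h
  · rcases h.cases_head with rfl | ⟨τ, hτ, -⟩
    · rfl
    · exact absurd hτ (not_step_of_exitEast he τ)

theorem ExitsAt.le_fst_of_reaches {y x : ℕ} {σ : ℕ × ℕ × Bool} (hx : D.ExitsAt y x)
    (hσ : D.Reaches y σ) : x ≤ σ.1 :=
  let ⟨_, h, _⟩ := hx.reflTransGen_of_reaches hσ
  (northeast_of_reflTransGen h).1

theorem ExitsAt.eq_of_reaches {y₁ y₂ x₁ x₂ : ℕ} {σ : ℕ × ℕ × Bool} (h₁ : D.ExitsAt y₁ x₁)
    (h₂ : D.ExitsAt y₂ x₂) (r₁ : D.Reaches y₁ σ) (r₂ : D.Reaches y₂ σ) : x₁ = x₂ := by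
  obtain ⟨d₁, p₁, e₁⟩ := h₁.reflTransGen_of_reaches r₁
  obtain ⟨d₂, p₂, e₂⟩ := h₂.reflTransGen_of_reaches r₂
  rcases ReflTransGen.total_of_right_unique step_rightUnique p₁ p₂ with h | h <;>
    rcases h.cases_head with h | ⟨τ, hτ, -⟩
  · exact (Prod.ext_iff.mp h).1
  · exact absurd hτ (not_step_of_exitEast e₁ τ)
  · exact (Prod.ext_iff.mp h).1.symm
  · exact absurd hτ (not_step_of_exitEast e₂ τ)

namespace HasPerm

variable {w : Equiv.Perm (Fin n)} (hw : D.HasPerm w)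
include hw

theorem exitsAt_symm_apply {y : ℕ} (hy : y < n) : D.ExitsAt y (w.symm ⟨y, hy⟩) := by
  simpa using hw (w.symm ⟨y, hy⟩)

theorem apply_eq_of_exitsAt {y x : ℕ} (hy : y < n) (hx : x < n) (h : D.ExitsAt y x) :
    w ⟨x, hx⟩ = ⟨y, hy⟩ := by
  rw [← Equiv.eq_symm_apply]
  exact Fin.ext (h.eq_of_reaches (hw.exitsAt_symm_apply hy) .refl .refl)

theorem eq_of_reaches {y₁ y₂ : ℕ} {σ : ℕ × ℕ × Bool} (hy₁ : y₁ < n) (hy₂ : y₂ < n)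
    (r₁ : D.Reaches y₁ σ) (r₂ : D.Reaches y₂ σ) : y₁ = y₂ := by
  have h := Fin.ext <| (hw.exitsAt_symm_apply hy₁).eq_of_reaches (hw.exitsAt_symm_apply hy₂) r₁ r₂
  simpa using w.symm.injective h

end HasPerm

theorem add_one_lt_of_tile_eq_jelbow {t j : ℕ} (h : D.tile t j = .jelbow) :
    t + 1 < n ∧ j + 1 < n := by
  have hin : t < n ∧ j < n := by
    by_contra hout
    rw [D.outside t j hout] at h
    cases h
  constructor
  · by_contra
    have hs := D.bottom j hin.2
    rw [show n - 1 = t by omega, h] at hs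
    cases hs
  · by_contra
    have he := D.right t hin.1
    rw [show n - 1 = j by omega, h] at he
    cases he

theorem not_reaches_of_tile_eq_jelbow {t j y : ℕ} (h : D.tile t j = .jelbow) (hy : y < n) :
    ¬ D.Reaches y (t, j, true) := fun hr => by
  simpa [Admissible, h, Tile.south] using hr.admissible hy

theorem exists_turn_east_below_jelbow {t j : ℕ} (hj : D.tile t j = .jelbow) :
    ∃ s, t < s ∧ s < n ∧ D.Reaches j (s, j, true) ∧ (D.tile s j).exitEast true = true := by
  obtain ⟨htn, hjn⟩ := add_one_lt_of_tile_eq_jelbow hj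
  suffices ∀ r, t < r → r < n → D.Reaches j (r, j, true) →
      ∃ s, t < s ∧ s < n ∧ D.Reaches j (s, j, true) ∧ (D.tile s j).exitEast true = true from
    this (n - 1) (by omega) (by omega) .refl
  intro r
  induction r with
  | zero => intro h; omega
  | succ r ih =>
    intro htr hr hreach
    by_cases he : (D.tile (r + 1) j).exitEast true = true
    · exact ⟨r + 1, htr, hr, hreach, he⟩
    have hnext : D.Reaches j (r, j, true) :=
      hreach.tail (step_north_s8 hr (by omega) (by omega) (by simpa using he))
    rcases Nat.lt_or_ge t r with htr' | htr'
    · exact ih htr' (by omega) hnext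
    · obtain rfl : r = t := by omega
      exact absurd hnext (not_reaches_of_tile_eq_jelbow hj (by omega))

theorem exists_entry_east_of_jelbow {t j y : ℕ} (hj : D.tile t j = .jelbow)
    (hy : y < n) {σ : ℕ × ℕ × Bool} (h : D.Reaches y σ) (ht : σ.1 = t) (hlt : j < σ.2.1) :
    ∃ b, j < b ∧ D.Reaches y (t, b, true) := by
  induction h with
  | refl =>
    subst ht
    exact ⟨y, hlt, .refl⟩
  | @tail σ τ hab hstep ih =>
    obtain ⟨r, c, d⟩ := σ
    rcases hstep.east_or_north with ⟨he, -, rfl⟩ | ⟨-, -, rfl⟩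
    · subst ht
      rcases Nat.lt_or_ge j c with hjc | hjc
      · exact ih rfl hjc
      · obtain rfl : c = j := by simp at hlt; omega
        cases d
        · simp [hj, Tile.exitEast] at he
        · exact absurd hab (not_reaches_of_tile_eq_jelbow hj hy)
    · subst ht
      exact ⟨c, hlt, hab.tail hstep⟩

end Diagram

/-- The permutation matrix of `w` has two dots `(r, w r)`, `(s, w s)` with `r < s` and `w s < w r`,
both weakly south-east of the cell `(t, j)`. -/
def HasInversionSE {n : ℕ} (w : Equiv.Perm (Fin n)) (t j : ℕ) : Prop :=
  ∃ r s : Fin n, t ≤ r ∧ r < s ∧ j ≤ w s ∧ w s < w r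

theorem HasInversionSE.mono {n : ℕ} {w : Equiv.Perm (Fin n)} {t j t' j' : ℕ}
    (h : HasInversionSE w t' j') (ht : t ≤ t') (hj : j ≤ j') : HasInversionSE w t j :=
  let ⟨r, s, hr, hrs, hs, hsr⟩ := h
  ⟨r, s, ht.trans hr, hrs, hj.trans hs, hsr⟩

theorem permContains_of_strictMono {n k : ℕ} {w : Equiv.Perm (Fin n)} {p : Equiv.Perm (Fin k)}
    (f : Fin k ↪o Fin n) {g : Fin k → Fin n} (hg : StrictMono g) (h : ∀ a, w (f a) = g (p a)) :
    PermContains w p :=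
  ⟨f, fun a b => by rw [h, h, hg.lt_iff_lt]⟩

theorem permContains_1243_or_2143 {n : ℕ} {w : Equiv.Perm (Fin n)} {p q r s : Fin n}
    (hpq : p ≠ q) (hpr : p < r) (hqr : q < r) (hrs : r < s) (hp : w p < w s) (hq : w q < w s)
    (hsr : w s < w r) : PermContains w p1243 ∨ PermContains w p2143 := by
  wlog hlt : p < q generalizing p q
  · exact this hpq.symm hqr hpr hq hp (lt_of_le_of_ne (not_lt.mp hlt) hpq.symm)
  let f : Fin 4 ↪o Fin n := OrderEmbedding.ofStrictMono ![p, q, r, s] (by simp [hlt, hqr, hrs])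
  rcases lt_or_gt_of_ne (w.injective.ne hpq) with hw | hw
  · refine Or.inl (permContains_of_strictMono f (g := ![w p, w q, w s, w r])
      (by simp [hw, hq, hsr]) fun a => ?_)
    fin_cases a <;> rfl
  · refine Or.inr (permContains_of_strictMono f (g := ![w q, w p, w s, w r])
      (by simp [hw, hp, hsr]) fun a => ?_)
    fin_cases a <;> rfl

namespace BPD

open Relation Diagram

variable {n : ℕ} (B : BPD n) {w : Equiv.Perm (Fin n)}

theorem eq_or_jelbow_below_of_reaches {y r c : ℕ} (h : B.Reaches y (r, c, true)) :
    y = c ∨ ∃ ρ, r < ρ ∧ B.tile ρ c = .jelbow := by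
  suffices ∀ σ, B.Reaches y σ → σ.2.2 = true →
      y = σ.2.1 ∨ ∃ ρ, σ.1 < ρ ∧ B.tile ρ σ.2.1 = .jelbow from this _ h rfl
  intro σ hσ
  induction hσ with
  | refl => exact fun _ => Or.inl rfl
  | @tail σ τ hab hstep ih =>
    obtain ⟨r', c', d⟩ := σ
    intro hτ
    rcases hstep.east_or_north with ⟨-, -, rfl⟩ | ⟨he, h0, rfl⟩
    · simp at hτ
    · cases d
      · exact Or.inr ⟨r', by simp; omega, (Tile.exitEast_false_eq_false_iff (B.nobump _ _)).mp he⟩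
      · rcases ih rfl with h | ⟨ρ, hρ, hj⟩
        · exact Or.inl h
        · exact Or.inr ⟨ρ, by simp at hρ ⊢; omega, hj⟩

theorem exitsAt_or_jelbow_of_reaches_west {y r c : ℕ} (hy : y < n)
    (h : B.Reaches y (r, c, false)) : B.ExitsAt y r ∨ ∃ γ, c ≤ γ ∧ B.tile r γ = .jelbow := by
  induction hk : n - c generalizing c with
  | zero => have := (h.admissible hy).lt.2; simp at this; omega
  | succ k ih =>
    by_cases hj : B.tile r c = .jelbow
    · exact Or.inr ⟨c, le_rfl, hj⟩
    have he : (B.tile r c).exitEast false = true := by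
      simpa using mt (Tile.exitEast_false_eq_false_iff (B.nobump r c)).mp hj
    have hr := (h.admissible hy).lt.1
    by_cases hc : c + 1 < n
    · rcases ih (h.tail (step_east_s8 hr hc he)) (by omega) with hx | ⟨γ, hγ, hjγ⟩
      · exact Or.inl hx
      · exact Or.inr ⟨γ, by omega, hjγ⟩
    · obtain rfl : c = n - 1 := by have := (h.admissible hy).lt.2; simp at this; omega
      exact Or.inl ⟨false, h, he⟩

theorem hasInversionSE_of_jelbow_of_forall (hw : B.HasPerm w) {t j : ℕ}
    (hj : B.tile t j = .jelbow)
    (ih : ∀ t' j', t < t' → j < j' → B.tile t' j' = .jelbow → HasInversionSE w t j) :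
    HasInversionSE w t j := by
  obtain ⟨htn, hjn⟩ := add_one_lt_of_tile_eq_jelbow hj
  obtain ⟨s, hts, hsn, hreach, hturn⟩ := exists_turn_east_below_jelbow hj
  rcases B.exitsAt_or_jelbow_of_reaches_west (by omega)
      (hreach.tail (step_east_s8 hsn hjn hturn)) with hexit | ⟨γ, hjγ, hγ⟩
  · have hws := hw.apply_eq_of_exitsAt (by omega) hsn hexit
    obtain ⟨d, hX, -⟩ := hw ⟨t, by omega⟩
    obtain ⟨b, hjb, hb⟩ :=
      exists_entry_east_of_jelbow hj (w ⟨t, _⟩).isLt hX rfl (by simp; omega)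
    rcases B.eq_or_jelbow_below_of_reaches hb with hwt | ⟨ρ, hρ, hjel⟩
    · exact ⟨⟨t, _⟩, ⟨s, hsn⟩, le_rfl, hts, by simp [hws], by simp [Fin.lt_def, hws]; omega⟩
    · exact ih ρ b hρ hjb hjel
  · exact ih s γ hts hjγ hγ

theorem hasInversionSE_of_tile_eq_jelbow (hw : B.HasPerm w) {t j : ℕ}
    (hj : B.tile t j = .jelbow) : HasInversionSE w t j := by
  induction hk : n - j using Nat.strong_induction_on generalizing t j with
  | _ k ih =>
    refine B.hasInversionSE_of_jelbow_of_forall hw hj fun t' j' ht hj' hjel => ?_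
    have := (add_one_lt_of_tile_eq_jelbow hjel).2
    exact (ih (n - j') (by omega) hjel rfl).mono ht.le hj'.le

theorem exists_jelbow_of_recross (hw : B.HasPerm w) {x₁ x₂ : Fin n} (hx : x₁ ≠ x₂)
    {a b a' b' : ℕ} {d₁ d₂ d₁' d₂' : Bool} (hcross : B.tile a b = .cross)
    (hne : (a, b) ≠ (a', b')) (r₁ : B.Reaches (w x₁) (a, b, d₁))
    (r₂ : B.Reaches (w x₂) (a, b, d₂)) (p₁ : ReflTransGen B.Step (a, b, d₁) (a', b', d₁'))
    (r₂' : B.Reaches (w x₂) (a', b', d₂')) :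
    ∃ ρ j, B.tile ρ j = .jelbow ∧ x₁ < ρ ∧ x₂ < ρ ∧ w x₁ < j ∧ w x₂ < j := by
  have hy : (w x₁ : ℕ) ≠ w x₂ := Fin.val_ne_of_ne (w.injective.ne hx)
  have r₁' := r₁.trans p₁
  have p₂ := r₂.reflTransGen_of_reflTransGen r₂' hne p₁
  have hdir : d₁ ≠ d₂ := fun h => hy (hw.eq_of_reaches (w x₁).isLt (w x₂).isLt r₁ (h ▸ r₂))
  have hdir' : d₁' ≠ d₂' := fun h => hy (hw.eq_of_reaches (w x₁).isLt (w x₂).isLt r₁' (h ▸ r₂'))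
  have hbb' : b < b' := by
    have heast : (B.tile a b).exitEast false = true := by simp [hcross, Tile.exitEast]
    have hne' : ∀ d, ((a, b, false) : ℕ × ℕ × Bool) ≠ (a', b', d) := fun d h => by
      cases h
      exact hne rfl
    cases d₁
    · exact snd_lt_of_exitEast heast p₁ (hne' _)
    · obtain rfl : d₂ = false := by simpa using hdir.symm
      exact snd_lt_of_exitEast heast p₂ (hne' _)
  obtain ⟨x, hxb, hvert⟩ : ∃ x : Fin n, (w x : ℕ) ≤ b ∧ B.Reaches (w x) (a', b', true) := by
    cases d₁'
    · obtain rfl : d₂' = true := by simpa using hdir'.symm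
      exact ⟨x₂, (northeast_of_reflTransGen r₂).2, r₂'⟩
    · exact ⟨x₁, (northeast_of_reflTransGen r₁).2, r₁'⟩
  rcases B.eq_or_jelbow_below_of_reaches hvert with h | ⟨ρ, hρ, hjel⟩
  · omega
  · have hx₁ := (hw x₁).le_fst_of_reaches r₁'
    have hx₂ := (hw x₂).le_fst_of_reaches r₂'
    have hy₁ := (northeast_of_reflTransGen r₁).2
    have hy₂ := (northeast_of_reflTransGen r₂).2
    simp only at hx₁ hx₂ hy₁ hy₂
    exact ⟨ρ, b', hjel, by omega, by omega, by omega, by omega⟩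

end BPD

/-- Proposition `BPD_nonred_1243_2143`(a).  Let `B` be a
bumpless pipe dream of size `n` with permutation `w` that is not reduced.
Then `w` contains the pattern `1243` or the pattern `2143`. -/
theorem nonreduced_contains_1243_or_2143 {n : ℕ} (B : BPD n)
    (w : Equiv.Perm (Fin n)) (hw : B.toDiagram.HasPerm w)
    (hnr : ¬ B.toDiagram.Reduced) :
    PermContains w p1243 ∨ PermContains w p2143 := by
  obtain ⟨y₁, y₂, hy₁, hy₂, hy, hshared⟩ : ∃ y₁ y₂, y₁ < n ∧ y₂ < n ∧ y₁ ≠ y₂ ∧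
      ¬ (B.SharedCrossings y₁ y₂).Subsingleton := by
    simpa [Diagram.Reduced] using hnr
  obtain ⟨x₁, rfl⟩ : ∃ x, (w x : ℕ) = y₁ := ⟨w.symm ⟨y₁, hy₁⟩, by simp⟩
  obtain ⟨x₂, rfl⟩ : ∃ x, (w x : ℕ) = y₂ := ⟨w.symm ⟨y₂, hy₂⟩, by simp⟩
  have hx : x₁ ≠ x₂ := fun h => hy (h ▸ rfl)
  obtain ⟨⟨a, b⟩, ⟨hc, ⟨d₁, r₁⟩, d₂, r₂⟩, ⟨a', b'⟩, ⟨hc', ⟨d₁', r₁'⟩, d₂', r₂'⟩, hne⟩ :=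
    Set.not_subsingleton_iff.mp hshared
  obtain ⟨ρ, j, hjel, hρ₁, hρ₂, hj₁, hj₂⟩ : ∃ ρ j, B.tile ρ j = .jelbow ∧ x₁ < ρ ∧ x₂ < ρ ∧
      w x₁ < j ∧ w x₂ < j :=
    (Relation.ReflTransGen.total_of_right_unique Diagram.step_rightUnique r₁ r₁').elim
      (fun p => B.exists_jelbow_of_recross hw hx hc hne r₁ r₂ p r₂')
      (fun p => B.exists_jelbow_of_recross hw hx hc' hne.symm r₁' r₂' p r₂)
  obtain ⟨r, s, hρr, hrs, hjs, hsr⟩ := B.hasInversionSE_of_tile_eq_jelbow hw hjel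
  exact permContains_1243_or_2143 hx (by omega) (by omega) hrs (by omega) (by omega) hsr
end
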